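/- arXiv:math/9306209 — 9 statements merged into one kernel-verified Lean document; each statement's English description precedes it below -/
import Mathlib

section
/- Let M = Fin m, N = Fin n with positive weights μ, ν, and t > 0. For matrices b, c : M × N → ℝ and any subsets E ⊆ M, F ⊆ N, one has ∑_{(i,j)∈E×F} |b(i,j)+c(i,j)| μ_i ν_j ≤ (μ(E) ∨ t⁻¹ ν(F)) · ( max_i ∑_j |b(i,j)| ν_j + t · max_j ∑_i |c(i,j)| μ_i ), where u ∨ v denotes the maximum. -/
/-!
Split `|b + c| ≤ |b| + |c|`. Summing the `b`-part over rows gives at most `μ(E) · ‖b‖`, summing the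
`c`-part over columns gives at most `ν(F) · ‖c‖^⊤ = (t⁻¹ ν(F)) · (t ‖c‖^⊤)`, and both prefactors are
bounded by `μ(E) ∨ t⁻¹ ν(F)`.
-/

open Finset

section WeightedBlockSums

variable {ι κ : Type*} [Fintype ι] [Fintype κ] {μ : ι → ℝ} {ν : κ → ℝ}

theorem sum_le_iSup_univ_sum_of_nonneg {f : ι → κ → ℝ} (hf : ∀ i j, 0 ≤ f i j) (F : Finset κ)
    (i : ι) : ∑ j ∈ F, f i j ≤ ⨆ i, ∑ j, f i j :=
  (sum_le_univ_sum_of_nonneg (hf i)).trans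
    (le_ciSup (f := fun i ↦ ∑ j, f i j) (Set.finite_range _).bddAbove i)

theorem block_sum_le_sum_mul_iSup_row {f : ι → κ → ℝ} (hf : ∀ i j, 0 ≤ f i j)
    (hμ : ∀ i, 0 ≤ μ i) (hν : ∀ j, 0 ≤ ν j) (E : Finset ι) (F : Finset κ) :
    ∑ i ∈ E, ∑ j ∈ F, f i j * μ i * ν j ≤ (∑ i ∈ E, μ i) * ⨆ i, ∑ j, f i j * ν j := by
  have hrow (i : ι) : ∑ j ∈ F, f i j * ν j ≤ ⨆ i, ∑ j, f i j * ν j :=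
    sum_le_iSup_univ_sum_of_nonneg (fun i j ↦ mul_nonneg (hf i j) (hν j)) F i
  calc ∑ i ∈ E, ∑ j ∈ F, f i j * μ i * ν j
      = ∑ i ∈ E, μ i * ∑ j ∈ F, f i j * ν j := by
        simp only [mul_sum]
        exact sum_congr rfl fun i _ ↦ sum_congr rfl fun j _ ↦ by ring
    _ ≤ ∑ i ∈ E, μ i * ⨆ i, ∑ j, f i j * ν j := by
        gcongr with i; exacts [hμ i, hrow i]
    _ = (∑ i ∈ E, μ i) * ⨆ i, ∑ j, f i j * ν j := by rw [sum_mul]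

theorem block_sum_le_sum_mul_iSup_col {f : ι → κ → ℝ} (hf : ∀ i j, 0 ≤ f i j)
    (hμ : ∀ i, 0 ≤ μ i) (hν : ∀ j, 0 ≤ ν j) (E : Finset ι) (F : Finset κ) :
    ∑ i ∈ E, ∑ j ∈ F, f i j * μ i * ν j ≤ (∑ j ∈ F, ν j) * ⨆ j, ∑ i, f i j * μ i := by
  rw [sum_comm]
  simp only [mul_right_comm _ (μ _)]
  exact block_sum_le_sum_mul_iSup_row (fun j i ↦ hf i j) hν hμ F E

end WeightedBlockSums

/-- for matrices `b, c`, the weighted ℓ¹-norm of `b + c` over `E × F`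
is bounded by `(μ(E) ∨ t⁻¹ν(F)) · (‖b‖ + t‖cᵀ‖)`. -/
theorem l1_restriction_sum_le (m n : ℕ) (μ : Fin m → ℝ) (ν : Fin n → ℝ)
    (hμ : ∀ i, 0 < μ i) (hν : ∀ j, 0 < ν j) (t : ℝ) (ht : 0 < t)
    (b c : Fin m × Fin n → ℝ) (E : Finset (Fin m)) (F : Finset (Fin n)) :
    ∑ i ∈ E, ∑ j ∈ F, |b (i, j) + c (i, j)| * μ i * ν j ≤
      max (∑ i ∈ E, μ i) (t⁻¹ * ∑ j ∈ F, ν j) *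
        ((⨆ i : Fin m, ∑ j : Fin n, |b (i, j)| * ν j) +
          t * ⨆ j : Fin n, ∑ i : Fin m, |c (i, j)| * μ i) := by
  have hμ₀ i := (hμ i).le
  have hν₀ j := (hν j).le
  set B := ⨆ i : Fin m, ∑ j : Fin n, |b (i, j)| * ν j
  set C := ⨆ j : Fin n, ∑ i : Fin m, |c (i, j)| * μ i
  have hB : 0 ≤ B :=
    Real.iSup_nonneg fun i ↦ sum_nonneg fun j _ ↦ mul_nonneg (abs_nonneg _) (hν₀ j)
  have hC : 0 ≤ C :=
    Real.iSup_nonneg fun j ↦ sum_nonneg fun i _ ↦ mul_nonneg (abs_nonneg _) (hμ₀ i)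
  calc ∑ i ∈ E, ∑ j ∈ F, |b (i, j) + c (i, j)| * μ i * ν j
      ≤ ∑ i ∈ E, ∑ j ∈ F, (|b (i, j)| * μ i * ν j + |c (i, j)| * μ i * ν j) := by
        simp only [← add_mul]
        gcongr with i _ j _
        exacts [hν₀ j, hμ₀ i, abs_add_le _ _]
    _ ≤ (∑ i ∈ E, μ i) * B + (∑ j ∈ F, ν j) * C := by
        simp only [sum_add_distrib]
        gcongr
        exacts [block_sum_le_sum_mul_iSup_row (fun _ _ ↦ abs_nonneg _) hμ₀ hν₀ E F,
          block_sum_le_sum_mul_iSup_col (fun _ _ ↦ abs_nonneg _) hμ₀ hν₀ E F]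
    _ = (∑ i ∈ E, μ i) * B + (t⁻¹ * ∑ j ∈ F, ν j) * (t * C) := by field_simp
    _ ≤ max (∑ i ∈ E, μ i) (t⁻¹ * ∑ j ∈ F, ν j) * (B + t * C) := by
        rw [mul_add]
        gcongr
        exacts [le_max_left _ _, le_max_right _ _]
end

section
/- Let M = Fin m, N = Fin n with positive weights μ, ν, and t > 0. Define |||a|||_t = sup over nonempty E ⊆ M, F ⊆ N of (μ(E) ∨ t⁻¹ν(F))⁻¹ ∑_{(i,j)∈E×F} |a(i,j)| μ_i ν_j. If |||a|||_t ≤ 1, then M × N can be partitioned into disjoint sets A and B such that max_i ∑_{j : (i,j)∈A} |a(i,j)| ν_j ≤ 1 and max_j ∑_{i : (i,j)∈B} |a(i,j)| μ_i ≤ 1/t. -/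
/-!
Greedy peeling. In a nonempty rectangle `R × C` some row has `ν`-weighted sum at most `1` or
some column has `μ`-weighted sum at most `1/t`: otherwise the total mass
`∑_{R×C} |a| μ ν` would exceed both `μ(R)` and `t⁻¹ ν(C)`, against `|||a|||_t ≤ 1`. Put that
row into `A` (or that column into `B`), delete it and recurse. Since rows and columns play
symmetric roles under transposition, with the bounds `1` and `1/t` swapped, only the row step
needs to be proved.
-/

open Finset

section Splitting

variable {ι κ : Type*}

/-- The colouring `c` encodes the partition of `R × C` into `A = {c = true}` and
`B = {c = false}`. -/
def Splittable (w : ι → κ → ℝ) (μ : ι → ℝ) (ν : κ → ℝ) (α β : ℝ) (R : Finset ι)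
    (C : Finset κ) : Prop :=
  ∃ c : ι → κ → Bool,
    (∀ i ∈ R, ∑ j ∈ C with c i j, w i j * ν j ≤ α) ∧
    (∀ j ∈ C, ∑ i ∈ R with !c i j, w i j * μ i ≤ β)

variable {w : ι → κ → ℝ} {μ : ι → ℝ} {ν : κ → ℝ} {α β : ℝ} {R : Finset ι} {C : Finset κ}

theorem Splittable.transpose (h : Splittable w μ ν α β R C) :
    Splittable (fun j i ↦ w i j) ν μ β α C R := by
  obtain ⟨c, hrow, hcol⟩ := h
  exact ⟨fun j i ↦ !c i j, hcol, by simpa only [Bool.not_not] using hrow⟩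

theorem mul_sum_lt_sum_sum_of_forall_lt (hμ : ∀ i, 0 < μ i) (hR : R.Nonempty)
    (hrow : ∀ i ∈ R, α < ∑ j ∈ C, w i j * ν j) :
    α * ∑ i ∈ R, μ i < ∑ i ∈ R, ∑ j ∈ C, w i j * μ i * ν j := by
  rw [mul_sum]
  refine sum_lt_sum_of_nonempty hR fun i hi ↦ ?_
  calc α * μ i < (∑ j ∈ C, w i j * ν j) * μ i := by gcongr; exacts [hμ i, hrow i hi]
    _ = ∑ j ∈ C, w i j * μ i * ν j := by rw [sum_mul]; exact sum_congr rfl fun j _ ↦ by ring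

theorem exists_light_row_or_col (hμ : ∀ i, 0 < μ i) (hν : ∀ j, 0 < ν j) (hR : R.Nonempty)
    (hC : C.Nonempty)
    (hw : ∑ i ∈ R, ∑ j ∈ C, w i j * μ i * ν j ≤ max (α * ∑ i ∈ R, μ i) (β * ∑ j ∈ C, ν j)) :
    (∃ i ∈ R, ∑ j ∈ C, w i j * ν j ≤ α) ∨ ∃ j ∈ C, ∑ i ∈ R, w i j * μ i ≤ β := by
  by_contra! h
  have hrows := mul_sum_lt_sum_sum_of_forall_lt hμ hR h.1
  have hcols := mul_sum_lt_sum_sum_of_forall_lt (w := fun j i ↦ w i j) hν hC h.2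
  rw [sum_comm] at hcols
  simp only [mul_right_comm _ (ν _)] at hcols
  exact (max_lt hrows hcols).not_ge hw

theorem Splittable.insert_row [DecidableEq ι] {i : ι} (h : Splittable w μ ν α β R C)
    (hi : i ∉ R) (hlight : ∑ j ∈ C, w i j * ν j ≤ α) :
    Splittable w μ ν α β (insert i R) C := by
  obtain ⟨c, hrow, hcol⟩ := h
  refine ⟨Function.update c i fun _ ↦ true, ?_, ?_⟩
  · intro i' hi'
    rcases mem_insert.mp hi' with rfl | hi'
    · simpa using hlight
    · have hne : i' ≠ i := ne_of_mem_of_not_mem hi' hi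
      simpa [hne] using hrow i' hi'
  · intro j hj
    have hfilter : {i' ∈ insert i R | !Function.update c i (fun _ ↦ true) i' j} =
        {i' ∈ R | !c i' j} := by
      rw [filter_insert, if_neg (by simp)]
      exact filter_congr fun i' hi' ↦ by
        rw [Function.update_of_ne (ne_of_mem_of_not_mem hi' hi)]
    rw [hfilter]
    exact hcol j hj

theorem Splittable.insert_col [DecidableEq κ] {j : κ} (h : Splittable w μ ν α β R C)
    (hj : j ∉ C) (hlight : ∑ i ∈ R, w i j * μ i ≤ β) :
    Splittable w μ ν α β R (insert j C) :=
  (h.transpose.insert_row hj hlight).transpose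

theorem splittable [DecidableEq ι] [DecidableEq κ] (hμ : ∀ i, 0 < μ i) (hν : ∀ j, 0 < ν j)
    (hα : 0 ≤ α) (hβ : 0 ≤ β)
    (hw : ∀ (E : Finset ι) (F : Finset κ), E.Nonempty → F.Nonempty →
      ∑ i ∈ E, ∑ j ∈ F, w i j * μ i * ν j ≤ max (α * ∑ i ∈ E, μ i) (β * ∑ j ∈ F, ν j))
    (R : Finset ι) (C : Finset κ) : Splittable w μ ν α β R C := by
  rcases R.eq_empty_or_nonempty with rfl | hR
  · exact ⟨fun _ _ ↦ true, by simp, fun _ _ ↦ by simpa using hβ⟩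
  rcases C.eq_empty_or_nonempty with rfl | hC
  · exact ⟨fun _ _ ↦ true, fun _ _ ↦ by simpa using hα, by simp⟩
  rcases exists_light_row_or_col hμ hν hR hC (hw R C hR hC) with
    ⟨i, hi, hlight⟩ | ⟨j, hj, hlight⟩
  · have := (splittable hμ hν hα hβ hw (R.erase i) C).insert_row (notMem_erase i R) hlight
    rwa [insert_erase hi] at this
  · have := (splittable hμ hν hα hβ hw R (C.erase j)).insert_col (notMem_erase j C) hlight
    rwa [insert_erase hj] at this
termination_by R.card + C.card
decreasing_by
  · have := card_erase_lt_of_mem hi; omega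
  · have := card_erase_lt_of_mem hj; omega

end Splitting

/-- Proposition 1.1, splitting part: if `|||a|||_t ≤ 1`, i.e. for all
nonempty `E, F` the quantity `(μ(E) ∨ t⁻¹ν(F))⁻¹ ∑_{E×F} |a| μ ν` is at most `1`,
then `M × N` splits into `A ∪ B` with row sums of `1_A·a` at most `1` and column
sums of `1_B·a` at most `1/t`. -/
theorem splitting_lemma (m n : ℕ) (μ : Fin m → ℝ) (ν : Fin n → ℝ)
    (hμ : ∀ i, 0 < μ i) (hν : ∀ j, 0 < ν j) (t : ℝ) (ht : 0 < t)
    (a : Fin m × Fin n → ℝ)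
    (ha : ∀ (E : Finset (Fin m)) (F : Finset (Fin n)), E.Nonempty → F.Nonempty →
      (max (∑ i ∈ E, μ i) (t⁻¹ * ∑ j ∈ F, ν j))⁻¹ *
        ∑ i ∈ E, ∑ j ∈ F, |a (i, j)| * μ i * ν j ≤ 1) :
    ∃ A B : Finset (Fin m × Fin n), Disjoint A B ∧ A ∪ B = Finset.univ ∧
      (∀ i : Fin m, ∑ j : Fin n, (if (i, j) ∈ A then |a (i, j)| * ν j else 0) ≤ 1) ∧
      (∀ j : Fin n, ∑ i : Fin m, (if (i, j) ∈ B then |a (i, j)| * μ i else 0) ≤ 1 / t) := by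
  have hw (E : Finset (Fin m)) (F : Finset (Fin n)) (hE : E.Nonempty) (hF : F.Nonempty) :
      ∑ i ∈ E, ∑ j ∈ F, |a (i, j)| * μ i * ν j ≤ max (1 * ∑ i ∈ E, μ i) (t⁻¹ * ∑ j ∈ F, ν j) := by
    have hmax : 0 < max (∑ i ∈ E, μ i) (t⁻¹ * ∑ j ∈ F, ν j) :=
      lt_max_of_lt_left (sum_pos (fun i _ ↦ hμ i) hE)
    simpa [one_mul, inv_mul_le_iff₀ hmax] using ha E F hE hF
  obtain ⟨c, hrow, hcol⟩ := splittable (w := fun i j ↦ |a (i, j)|) hμ hν zero_le_one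
    (inv_nonneg.mpr ht.le) hw univ univ
  refine ⟨univ.filter fun p ↦ c p.1 p.2, univ.filter fun p ↦ ¬c p.1 p.2,
    disjoint_filter_filter_not _ _ _, filter_union_filter_not_eq _ _, fun i ↦ ?_, fun j ↦ ?_⟩
  · simpa [sum_filter] using hrow i (mem_univ i)
  · simpa [sum_filter] using hcol j (mem_univ j)
end

section
/- Let M = Fin m, N = Fin n with positive weights μ, ν, and t > 0. Let K_t(a) = inf { max_i ∑_j |b(i,j)| ν_j + t · max_j ∑_i |c(i,j)| μ_i : a = b + c } be the K_t-functional of the couple (ℓ^∞_m(ℓ^1_n), ℓ^∞_n(ℓ^1_m)), and |||a|||_t = sup_{E,F} (μ(E) ∨ t⁻¹ν(F))⁻¹ ∑_{(i,j)∈E×F} |a(i,j)| μ_i ν_j. Then |||a|||_t ≤ K_t(a) ≤ 2 |||a|||_t. -/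
/-!
For `a = b + c`, the mass of `|a| μ ν` on `E × F` is at most
`μ(E) sup_i ∑_j |b(i,j)| ν_j + ν(F) sup_j ∑_i |c(i,j)| μ_i`, which is at most
`(μ(E) ∨ t⁻¹ν(F))` times the cost of the decomposition; hence `|||a|||_t ≤ K_t(a)`.

Conversely, with `λ = |||a|||_t` and `max ≤ sum`, every rectangle satisfies
`∑_{E×F} |a| μ ν ≤ λ μ(E) + (λ / t) ν(F)`. A max-flow/min-cut type splitting, proved by
removing one entry at a time and uncrossing rectangles, then splits `|a| μ ν` into a part with
row sums `≤ λ μ_i` and a part with column sums `≤ (λ / t) ν_j`. Splitting `a` in the same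
proportions gives `a = b + c` of cost at most `λ + t · λ / t = 2λ`.
-/

open Finset

/-- The norm `|||a|||_t`: supremum over nonempty `E ⊆ Fin m`, `F ⊆ Fin n` of
`(μ(E) ∨ t⁻¹ν(F))⁻¹ ∑_{(i,j)∈E×F} |a(i,j)| μ_i ν_j`. -/
noncomputable def tripleNorm (m n : ℕ) (μ : Fin m → ℝ) (ν : Fin n → ℝ) (t : ℝ)
    (a : Fin m × Fin n → ℝ) : ℝ :=
  sSup {x : ℝ | ∃ (E : Finset (Fin m)) (F : Finset (Fin n)), E.Nonempty ∧ F.Nonempty ∧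
    x = (max (∑ i ∈ E, μ i) (t⁻¹ * ∑ j ∈ F, ν j))⁻¹ *
      ∑ i ∈ E, ∑ j ∈ F, |a (i, j)| * μ i * ν j}

/-- The `K_t`-functional of the couple `(ℓ^∞_m(ℓ^1_n), ℓ^∞_n(ℓ^1_m))`. -/
noncomputable def Kt (m n : ℕ) (μ : Fin m → ℝ) (ν : Fin n → ℝ) (t : ℝ)
    (a : Fin m × Fin n → ℝ) : ℝ :=
  sInf {x : ℝ | ∃ b c : Fin m × Fin n → ℝ, a = b + c ∧
    x = (⨆ i : Fin m, ∑ j : Fin n, |b (i, j)| * ν j) +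
      t * ⨆ j : Fin n, ∑ i : Fin m, |c (i, j)| * μ i}

section Splitting

variable {M N : Type*} [DecidableEq M] [DecidableEq N]

theorem sum_rect_add_sum_rect_add_le (w : M × N → ℝ) (hw : 0 ≤ w) {E E' : Finset M}
    {F F' : Finset N} {i₀ : M} {j₀ : N} (hE : i₀ ∈ E) (hE' : i₀ ∉ E') (hF : j₀ ∉ F)
    (hF' : j₀ ∈ F') :
    ∑ p ∈ E ×ˢ F, w p + ∑ p ∈ E' ×ˢ F', w p + w (i₀, j₀) ≤
      ∑ p ∈ (E ∪ E') ×ˢ (F ∪ F'), w p + ∑ p ∈ (E ∩ E') ×ˢ (F ∩ F'), w p := by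
  have hp₀ : (i₀, j₀) ∉ E ×ˢ F ∪ E' ×ˢ F' := by simp [hE', hF]
  have hsub : insert (i₀, j₀) (E ×ˢ F ∪ E' ×ˢ F') ⊆ (E ∪ E') ×ˢ (F ∪ F') := by
    intro p
    simp only [mem_insert, mem_union, mem_product]
    rintro (rfl | ⟨h₁, h₂⟩ | ⟨h₁, h₂⟩) <;> simp [*]
  rw [← product_inter_product, ← sum_union_inter, add_right_comm, add_comm _ (w _),
    ← sum_insert hp₀]
  exact add_le_add (sum_le_sum_of_subset_of_nonneg hsub fun p _ _ => hw p) le_rfl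

theorem sum_pi_single_prod_left [Fintype N] {α : Type*} [AddCommMonoid α] (i₀ : M) (j₀ : N)
    (x : α) (i : M) :
    ∑ j, (Pi.single (i₀, j₀) x : M × N → α) (i, j) = (Pi.single i₀ x : M → α) i := by
  by_cases hi : i = i₀ <;> simp [Pi.single_apply, hi]

theorem sum_pi_single_prod_right [Fintype M] {α : Type*} [AddCommMonoid α] (i₀ : M) (j₀ : N)
    (x : α) (j : N) :
    ∑ i, (Pi.single (i₀, j₀) x : M × N → α) (i, j) = (Pi.single j₀ x : N → α) j := by
  by_cases hj : j = j₀ <;> simp [Pi.single_apply, hj]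

variable [Fintype M] [Fintype N]

/-- `δ₁` is the largest amount the rectangles through row `i₀` but not column `j₀` allow;
uncrossing such a rectangle with one through column `j₀` but not row `i₀` shows that the
rest `δ₂` fits into the latter. -/
theorem exists_remove_entry_of_sum_rect_le (w : M × N → ℝ) (R : M → ℝ) (C : N → ℝ)
    (hw : 0 ≤ w) (H : ∀ E F, ∑ p ∈ E ×ˢ F, w p ≤ ∑ i ∈ E, R i + ∑ j ∈ F, C j) (i₀ : M) (j₀ : N) :
    ∃ δ₁ δ₂ : ℝ, 0 ≤ δ₁ ∧ 0 ≤ δ₂ ∧ δ₁ + δ₂ = w (i₀, j₀) ∧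
      ∀ E F, ∑ p ∈ E ×ˢ F, (w - Pi.single (i₀, j₀) (w (i₀, j₀)) : M × N → ℝ) p ≤
        ∑ i ∈ E, (R - Pi.single i₀ δ₁ : M → ℝ) i +
          ∑ j ∈ F, (C - Pi.single j₀ δ₂ : N → ℝ) j := by
  let slack (EF : Finset M × Finset N) : ℝ :=
    ∑ i ∈ EF.1, R i + ∑ j ∈ EF.2, C j - ∑ p ∈ EF.1 ×ˢ EF.2, w p
  obtain ⟨⟨E₁, F₁⟩, h₁, hmin₁⟩ := exists_min_image
    (univ.filter fun EF : Finset M × Finset N => i₀ ∈ EF.1 ∧ j₀ ∉ EF.2) slack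
    ⟨({i₀}, ∅), by simp⟩
  obtain ⟨⟨E₂, F₂⟩, h₂, hmin₂⟩ := exists_min_image
    (univ.filter fun EF : Finset M × Finset N => i₀ ∉ EF.1 ∧ j₀ ∈ EF.2) slack
    ⟨(∅, {j₀}), by simp⟩
  simp only [mem_filter, mem_univ, true_and] at h₁ h₂
  have huncross : w (i₀, j₀) ≤ slack (E₁, F₁) + slack (E₂, F₂) := by
    have := sum_rect_add_sum_rect_add_le w hw h₁.1 h₂.1 h₁.2 h₂.2
    have := H (E₁ ∪ E₂) (F₁ ∪ F₂)
    have := H (E₁ ∩ E₂) (F₁ ∩ F₂)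
    have := sum_union_inter (s₁ := E₁) (s₂ := E₂) (f := R)
    have := sum_union_inter (s₁ := F₁) (s₂ := F₂) (f := C)
    simp only [slack]
    linarith
  have hslack : ∀ E F, 0 ≤ slack (E, F) := fun E F => sub_nonneg.2 (H E F)
  set δ₁ := min (slack (E₁, F₁)) (w (i₀, j₀))
  have hδ₂ : w (i₀, j₀) - δ₁ ≤ slack (E₂, F₂) := by
    rcases min_cases (slack (E₁, F₁)) (w (i₀, j₀)) with ⟨h, -⟩ | ⟨h, -⟩ <;>
      linarith [hslack E₂ F₂]
  refine ⟨δ₁, w (i₀, j₀) - δ₁, le_min (hslack E₁ F₁) (hw _), sub_nonneg.2 (min_le_right _ _),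
    by ring, fun E F => ?_⟩
  simp only [Pi.sub_apply, sum_sub_distrib, sum_pi_single', mem_product]
  have hEF := H E F
  by_cases hE : i₀ ∈ E <;> by_cases hF : j₀ ∈ F <;> simp only [hE, hF, and_self,
    and_true, and_false, if_true, if_false, sub_zero]
  · linarith
  · have := hmin₁ (E, F) (by simp [hE, hF])
    linarith [min_le_left (slack (E₁, F₁)) (w (i₀, j₀))]
  · have := hmin₂ (E, F) (by simp [hE, hF])
    linarith
  · exact hEF

theorem exists_split_of_support_subset (S : Finset (M × N)) :
    ∀ (w : M × N → ℝ) (R : M → ℝ) (C : N → ℝ), 0 ≤ w → (∀ p ∉ S, w p = 0) →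
      (∀ E F, ∑ p ∈ E ×ˢ F, w p ≤ ∑ i ∈ E, R i + ∑ j ∈ F, C j) →
      ∃ β, 0 ≤ β ∧ β ≤ w ∧ (∀ i, ∑ j, β (i, j) ≤ R i) ∧ ∀ j, ∑ i, (w - β) (i, j) ≤ C j := by
  induction S using Finset.induction_on with
  | empty =>
    intro w R C _ hS H
    obtain rfl : w = 0 := funext fun p => hS p (notMem_empty p)
    refine ⟨0, le_rfl, le_rfl, fun i => ?_, fun j => ?_⟩
    · simpa using H {i} ∅
    · simpa using H ∅ {j}
  | insert p₀ S _ ih =>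
    intro w R C hw hS H
    obtain ⟨i₀, j₀⟩ := p₀
    obtain ⟨δ₁, δ₂, hδ₁, hδ₂, hδ, H'⟩ := exists_remove_entry_of_sum_rect_le w R C hw H i₀ j₀
    set w' := w - Pi.single (i₀, j₀) (w (i₀, j₀)) with hw'
    have hw'₀ : 0 ≤ w' := fun p => by
      by_cases hp : p = (i₀, j₀)
      · simp [hw', hp]
      · simpa [hw', hp] using hw p
    have hS' : ∀ p ∉ S, w' p = 0 := fun p hp => by
      by_cases hp₀ : p = (i₀, j₀)
      · simp [hw', hp₀]
      · simp [hw', hp₀, hS p (by simp [hp₀, hp])]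
    obtain ⟨β, hβ₀, hβw, hrow, hcol⟩ := ih w' _ _ hw'₀ hS' H'
    have hsplit : w - (β + Pi.single (i₀, j₀) δ₁) = (w' - β) + Pi.single (i₀, j₀) δ₂ := by
      rw [hw', ← hδ, Pi.single_add]
      abel
    refine ⟨β + Pi.single (i₀, j₀) δ₁, add_nonneg hβ₀ (Pi.single_nonneg.2 hδ₁), ?_,
      fun i => ?_, fun j => ?_⟩
    · calc β + Pi.single (i₀, j₀) δ₁ ≤ w' + Pi.single (i₀, j₀) (w (i₀, j₀)) :=
            add_le_add hβw (Pi.single_mono _ (by linarith))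
        _ = w := sub_add_cancel _ _
    · have := hrow i
      simp only [Pi.add_apply, sum_add_distrib, sum_pi_single_prod_left, Pi.sub_apply] at this ⊢
      linarith
    · have := hcol j
      rw [hsplit]
      simp only [Pi.add_apply, sum_add_distrib, sum_pi_single_prod_right, Pi.sub_apply] at this ⊢
      linarith

theorem exists_split_of_sum_rect_le (w : M × N → ℝ) (R : M → ℝ) (C : N → ℝ) (hw : 0 ≤ w)
    (H : ∀ E F, ∑ p ∈ E ×ˢ F, w p ≤ ∑ i ∈ E, R i + ∑ j ∈ F, C j) :
    ∃ β, 0 ≤ β ∧ β ≤ w ∧ (∀ i, ∑ j, β (i, j) ≤ R i) ∧ ∀ j, ∑ i, (w - β) (i, j) ≤ C j :=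
  exists_split_of_support_subset univ w R C hw (fun p hp => absurd (mem_univ p) hp) H

end Splitting

section Decomposition

variable {M N : Type*} [Fintype M] [Fintype N]

theorem sum_mul_sum_le_of_forall_sum_le {ι κ : Type*} [Fintype κ] (s : Finset ι) (t : Finset κ)
    {μ : ι → ℝ} {g : ι → κ → ℝ} {B : ℝ} (hμ : ∀ i, 0 ≤ μ i) (hg : ∀ i j, 0 ≤ g i j)
    (hB : ∀ i, ∑ j, g i j ≤ B) :
    ∑ i ∈ s, μ i * ∑ j ∈ t, g i j ≤ (∑ i ∈ s, μ i) * B := by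
  rw [sum_mul]
  exact sum_le_sum fun i _ =>
    mul_le_mul_of_nonneg_left ((sum_le_univ_sum_of_nonneg (hg i)).trans (hB i)) (hμ i)

theorem sum_rect_le_of_eq_add {μ : M → ℝ} {ν : N → ℝ} (hμ : ∀ i, 0 ≤ μ i) (hν : ∀ j, 0 ≤ ν j)
    {a b c : M × N → ℝ} (hbc : a = b + c) {B C : ℝ} (hb : ∀ i, ∑ j, |b (i, j)| * ν j ≤ B)
    (hc : ∀ j, ∑ i, |c (i, j)| * μ i ≤ C) (E : Finset M) (F : Finset N) :
    ∑ i ∈ E, ∑ j ∈ F, |a (i, j)| * μ i * ν j ≤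
      (∑ i ∈ E, μ i) * B + (∑ j ∈ F, ν j) * C :=
  calc ∑ i ∈ E, ∑ j ∈ F, |a (i, j)| * μ i * ν j
      ≤ ∑ i ∈ E, ∑ j ∈ F, (|b (i, j)| * μ i * ν j + |c (i, j)| * μ i * ν j) := by
        refine sum_le_sum fun i _ => sum_le_sum fun j _ => ?_
        rw [← add_mul, ← add_mul, hbc]
        exact mul_le_mul_of_nonneg_right
          (mul_le_mul_of_nonneg_right (abs_add_le _ _) (hμ i)) (hν j)
    _ = ∑ i ∈ E, μ i * ∑ j ∈ F, |b (i, j)| * ν j +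
          ∑ j ∈ F, ν j * ∑ i ∈ E, |c (i, j)| * μ i := by
        simp only [sum_add_distrib, mul_sum]
        congr 1
        · exact sum_congr rfl fun _ _ => sum_congr rfl fun _ _ => by ring
        · rw [sum_comm]
          exact sum_congr rfl fun _ _ => sum_congr rfl fun _ _ => by ring
    _ ≤ (∑ i ∈ E, μ i) * B + (∑ j ∈ F, ν j) * C :=
        add_le_add
          (sum_mul_sum_le_of_forall_sum_le E F hμ (fun _ _ => mul_nonneg (abs_nonneg _) (hν _)) hb)
          (sum_mul_sum_le_of_forall_sum_le F E hν (fun _ _ => mul_nonneg (abs_nonneg _) (hμ _)) hc)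

theorem exists_eq_add_of_sum_rect_le {μ : M → ℝ} {ν : N → ℝ} (hμ : ∀ i, 0 < μ i)
    (hν : ∀ j, 0 < ν j) {a : M × N → ℝ} {B C : ℝ}
    (H : ∀ E F, ∑ i ∈ E, ∑ j ∈ F, |a (i, j)| * μ i * ν j ≤
      B * ∑ i ∈ E, μ i + C * ∑ j ∈ F, ν j) :
    ∃ b c : M × N → ℝ, a = b + c ∧ (∀ i, ∑ j, |b (i, j)| * ν j ≤ B) ∧
      ∀ j, ∑ i, |c (i, j)| * μ i ≤ C := by
  classical
  set w : M × N → ℝ := fun p => |a p| * μ p.1 * ν p.2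
  have hw : 0 ≤ w := fun p => mul_nonneg (mul_nonneg (abs_nonneg _) (hμ _).le) (hν _).le
  obtain ⟨β, hβ₀, hβw, hrow, hcol⟩ := exists_split_of_sum_rect_le w (fun i => B * μ i)
    (fun j => C * ν j) hw fun E F => by rw [sum_product, ← mul_sum, ← mul_sum]; exact H E F
  set θ := β / w
  have hθ₀ : ∀ p, 0 ≤ θ p := fun p => div_nonneg (hβ₀ p) (hw p)
  have hθ₁ : ∀ p, θ p ≤ 1 := fun p => div_le_one_of_le₀ (hβw p) (hw p)
  have hθw : ∀ p, θ p * w p = β p := fun p =>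
    div_mul_cancel_of_imp fun h => le_antisymm (h ▸ hβw p) (hβ₀ p)
  refine ⟨θ * a, (1 - θ) * a, by ring, fun i => ?_, fun j => ?_⟩
  · refine le_of_mul_le_mul_left ?_ (hμ i)
    calc μ i * ∑ j, |(θ * a) (i, j)| * ν j = ∑ j, β (i, j) := by
          rw [mul_sum]
          refine sum_congr rfl fun j _ => ?_
          rw [← hθw, Pi.mul_apply, abs_mul, abs_of_nonneg (hθ₀ _)]
          ring
      _ ≤ μ i * B := (hrow i).trans_eq (mul_comm _ _)
  · refine le_of_mul_le_mul_left ?_ (hν j)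
    calc ν j * ∑ i, |((1 - θ) * a) (i, j)| * μ i = ∑ i, (w - β) (i, j) := by
          rw [mul_sum]
          refine sum_congr rfl fun i _ => ?_
          rw [Pi.sub_apply, ← hθw, Pi.mul_apply, Pi.sub_apply, Pi.one_apply, abs_mul,
            abs_of_nonneg (sub_nonneg.2 (hθ₁ _))]
          simp only [w]
          ring
      _ ≤ ν j * C := (hcol j).trans_eq (mul_comm _ _)

end Decomposition

section Interpolation

variable {m n : ℕ} {μ : Fin m → ℝ} {ν : Fin n → ℝ} {t : ℝ} {a : Fin m × Fin n → ℝ}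

theorem iSup_add_mul_iSup_nonneg (hμ : ∀ i, 0 ≤ μ i) (hν : ∀ j, 0 ≤ ν j) (ht : 0 ≤ t)
    (b c : Fin m × Fin n → ℝ) :
    0 ≤ (⨆ i, ∑ j, |b (i, j)| * ν j) + t * ⨆ j, ∑ i, |c (i, j)| * μ i :=
  add_nonneg (Real.iSup_nonneg fun _ => sum_nonneg fun j _ => mul_nonneg (abs_nonneg _) (hν j))
    (mul_nonneg ht (Real.iSup_nonneg fun _ => sum_nonneg fun i _ =>
      mul_nonneg (abs_nonneg _) (hμ i)))

theorem Kt_nonneg (hμ : ∀ i, 0 ≤ μ i) (hν : ∀ j, 0 ≤ ν j) (ht : 0 ≤ t) :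
    0 ≤ Kt m n μ ν t a :=
  Real.sInf_nonneg (by rintro _ ⟨b, c, -, rfl⟩; exact iSup_add_mul_iSup_nonneg hμ hν ht b c)

theorem le_Kt {x : ℝ} (h : ∀ b c, a = b + c →
    x ≤ (⨆ i, ∑ j, |b (i, j)| * ν j) + t * ⨆ j, ∑ i, |c (i, j)| * μ i) :
    x ≤ Kt m n μ ν t a := by
  unfold Kt
  refine le_csInf ⟨_, a, 0, (add_zero a).symm, rfl⟩ ?_
  rintro _ ⟨b, c, hbc, rfl⟩
  exact h b c hbc

theorem Kt_le_of_eq_add (hμ : ∀ i, 0 ≤ μ i) (hν : ∀ j, 0 ≤ ν j) (ht : 0 ≤ t)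
    {b c : Fin m × Fin n → ℝ} (hbc : a = b + c) {B C : ℝ} (hB : 0 ≤ B) (hC : 0 ≤ C)
    (hb : ∀ i, ∑ j, |b (i, j)| * ν j ≤ B) (hc : ∀ j, ∑ i, |c (i, j)| * μ i ≤ C) :
    Kt m n μ ν t a ≤ B + t * C := by
  unfold Kt
  calc _ ≤ (⨆ i, ∑ j, |b (i, j)| * ν j) + t * ⨆ j, ∑ i, |c (i, j)| * μ i := by
        refine csInf_le ⟨0, ?_⟩ ⟨b, c, hbc, rfl⟩
        rintro _ ⟨b, c, -, rfl⟩
        exact iSup_add_mul_iSup_nonneg hμ hν ht b c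
    _ ≤ B + t * C :=
        add_le_add (Real.iSup_le hb hB) (mul_le_mul_of_nonneg_left (Real.iSup_le hc hC) ht)

theorem tripleNorm_nonneg (hμ : ∀ i, 0 ≤ μ i) (hν : ∀ j, 0 ≤ ν j) :
    0 ≤ tripleNorm m n μ ν t a :=
  Real.sSup_nonneg <| by
    rintro _ ⟨E, F, -, -, rfl⟩
    exact mul_nonneg (inv_nonneg.2 ((sum_nonneg fun i _ => hμ i).trans (le_max_left _ _)))
      (sum_nonneg fun i _ => sum_nonneg fun j _ =>
        mul_nonneg (mul_nonneg (abs_nonneg _) (hμ i)) (hν j))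

theorem le_tripleNorm {E : Finset (Fin m)} {F : Finset (Fin n)} (hE : E.Nonempty)
    (hF : F.Nonempty) :
    (max (∑ i ∈ E, μ i) (t⁻¹ * ∑ j ∈ F, ν j))⁻¹ * ∑ i ∈ E, ∑ j ∈ F, |a (i, j)| * μ i * ν j ≤
      tripleNorm m n μ ν t a := by
  refine le_csSup (Set.Finite.bddAbove ?_) ⟨E, F, hE, hF, rfl⟩
  refine (Set.finite_range fun EF : Finset (Fin m) × Finset (Fin n) =>
    (max (∑ i ∈ EF.1, μ i) (t⁻¹ * ∑ j ∈ EF.2, ν j))⁻¹ *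
      ∑ i ∈ EF.1, ∑ j ∈ EF.2, |a (i, j)| * μ i * ν j).subset ?_
  rintro _ ⟨E, F, -, -, rfl⟩
  exact ⟨(E, F), rfl⟩

theorem tripleNorm_le {x : ℝ} (hx : 0 ≤ x) (h : ∀ E F, E.Nonempty → F.Nonempty →
    (max (∑ i ∈ E, μ i) (t⁻¹ * ∑ j ∈ F, ν j))⁻¹ * ∑ i ∈ E, ∑ j ∈ F, |a (i, j)| * μ i * ν j ≤ x) :
    tripleNorm m n μ ν t a ≤ x :=
  Real.sSup_le (by rintro _ ⟨E, F, hE, hF, rfl⟩; exact h E F hE hF) hx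

theorem sum_rect_le_tripleNorm_mul (hμ : ∀ i, 0 < μ i) (hν : ∀ j, 0 ≤ ν j) (ht : 0 ≤ t)
    (E : Finset (Fin m)) (F : Finset (Fin n)) :
    ∑ i ∈ E, ∑ j ∈ F, |a (i, j)| * μ i * ν j ≤
      tripleNorm m n μ ν t a * ∑ i ∈ E, μ i + tripleNorm m n μ ν t a / t * ∑ j ∈ F, ν j := by
  have hnorm := tripleNorm_nonneg (t := t) (a := a) (fun i => (hμ i).le) hν
  have hμE : 0 ≤ ∑ i ∈ E, μ i := sum_nonneg fun i _ => (hμ i).le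
  have hνF : 0 ≤ ∑ j ∈ F, ν j := sum_nonneg fun j _ => hν j
  have hRHS : 0 ≤ tripleNorm m n μ ν t a * ∑ i ∈ E, μ i +
      tripleNorm m n μ ν t a / t * ∑ j ∈ F, ν j := by positivity
  rcases E.eq_empty_or_nonempty with rfl | hE
  · simpa using hRHS
  rcases F.eq_empty_or_nonempty with rfl | hF
  · simpa using hRHS
  have hmx : 0 < max (∑ i ∈ E, μ i) (t⁻¹ * ∑ j ∈ F, ν j) :=
    (sum_pos (fun i _ => hμ i) hE).trans_le (le_max_left _ _)
  calc ∑ i ∈ E, ∑ j ∈ F, |a (i, j)| * μ i * ν j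
      ≤ max (∑ i ∈ E, μ i) (t⁻¹ * ∑ j ∈ F, ν j) * tripleNorm m n μ ν t a :=
        (inv_mul_le_iff₀ hmx).1 (le_tripleNorm hE hF)
    _ ≤ (∑ i ∈ E, μ i + t⁻¹ * ∑ j ∈ F, ν j) * tripleNorm m n μ ν t a :=
        mul_le_mul_of_nonneg_right (max_le_add_of_nonneg hμE (by positivity)) hnorm
    _ = tripleNorm m n μ ν t a * ∑ i ∈ E, μ i + tripleNorm m n μ ν t a / t * ∑ j ∈ F, ν j := by
        ring

theorem tripleNorm_le_Kt (hμ : ∀ i, 0 < μ i) (hν : ∀ j, 0 ≤ ν j) (ht : 0 < t) :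
    tripleNorm m n μ ν t a ≤ Kt m n μ ν t a := by
  refine tripleNorm_le (Kt_nonneg (fun i => (hμ i).le) hν ht.le) fun E F hE _ =>
    le_Kt fun b c hbc => ?_
  set mx := max (∑ i ∈ E, μ i) (t⁻¹ * ∑ j ∈ F, ν j)
  set S₀ := ⨆ i, ∑ j, |b (i, j)| * ν j
  set S₁ := ⨆ j, ∑ i, |c (i, j)| * μ i
  have hmx : 0 < mx := (sum_pos (fun i _ => hμ i) hE).trans_le (le_max_left _ _)
  have hS₀ : 0 ≤ S₀ := Real.iSup_nonneg fun _ => sum_nonneg fun j _ =>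
    mul_nonneg (abs_nonneg _) (hν j)
  have hS₁ : 0 ≤ S₁ := Real.iSup_nonneg fun _ => sum_nonneg fun i _ =>
    mul_nonneg (abs_nonneg _) (hμ i).le
  rw [inv_mul_le_iff₀ hmx]
  calc ∑ i ∈ E, ∑ j ∈ F, |a (i, j)| * μ i * ν j
      ≤ (∑ i ∈ E, μ i) * S₀ + (∑ j ∈ F, ν j) * S₁ :=
        sum_rect_le_of_eq_add (fun i => (hμ i).le) hν hbc
          (fun i => le_ciSup (Finite.bddAbove_range fun i => ∑ j, |b (i, j)| * ν j) i)
          (fun j => le_ciSup (Finite.bddAbove_range fun j => ∑ i, |c (i, j)| * μ i) j) E F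
    _ ≤ mx * S₀ + (t * mx) * S₁ := by
        gcongr
        · exact le_max_left _ _
        · exact (inv_mul_le_iff₀ ht).1 (le_max_right _ _)
    _ = mx * (S₀ + t * S₁) := by ring

theorem Kt_le_two_mul_tripleNorm (hμ : ∀ i, 0 < μ i) (hν : ∀ j, 0 < ν j) (ht : 0 < t) :
    Kt m n μ ν t a ≤ 2 * tripleNorm m n μ ν t a := by
  have hnorm := tripleNorm_nonneg (t := t) (a := a) (fun i => (hμ i).le) fun j => (hν j).le
  obtain ⟨b, c, hbc, hb, hc⟩ :=
    exists_eq_add_of_sum_rect_le hμ hν (sum_rect_le_tripleNorm_mul hμ (fun j => (hν j).le) ht.le)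
  calc Kt m n μ ν t a
      ≤ tripleNorm m n μ ν t a + t * (tripleNorm m n μ ν t a / t) :=
        Kt_le_of_eq_add (fun i => (hμ i).le) (fun j => (hν j).le) ht.le hbc hnorm
          (div_nonneg hnorm ht.le) hb hc
    _ = 2 * tripleNorm m n μ ν t a := by
        field_simp
        ring

end Interpolation

/-- `|||a|||_t ≤ K_t(a) ≤ 2 |||a|||_t`. -/
theorem Kt_equiv_tripleNorm (m n : ℕ) (μ : Fin m → ℝ) (ν : Fin n → ℝ)
    (hμ : ∀ i, 0 < μ i) (hν : ∀ j, 0 < ν j) (t : ℝ) (ht : 0 < t)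
    (a : Fin m × Fin n → ℝ) :
    tripleNorm m n μ ν t a ≤ Kt m n μ ν t a ∧
      Kt m n μ ν t a ≤ 2 * tripleNorm m n μ ν t a :=
  ⟨tripleNorm_le_Kt hμ (fun j => (hν j).le) ht, Kt_le_two_mul_tripleNorm hμ hν ht⟩
end

section
/- Let M = Fin m, N = Fin n with positive weights μ, ν, t > 0, and p > 1. Define |||a|||_{p,t} = sup over nonempty E ⊆ M, F ⊆ N of (μ(E)^{1/p*} ∨ t⁻¹ν(F)^{1/p*})⁻¹ ∑_{(i,j)∈E×F} |a(i,j)| μ_i ν_j, where 1/p + 1/p* = 1. If |||a|||_{p,t} ≤ 1, then M × N can be partitioned into disjoint sets A, B such that the ℓ^{p,∞}_m(ℓ^1_n)-quasinorm of 1_A · a is at most 1 and the ℓ^{p,∞}_n(ℓ^1_m)-quasinorm of the transpose of 1_B · a is at most 1/t. -/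
/-!
Put `c(i,j) = |a(i,j)| μ_i ν_j`, `φ(E) = μ(E)^{1/p*}` and `ψ(F) = t⁻¹ ν(F)^{1/p*}`. Being concave
functions of measures, `φ` and `ψ` are submodular, and the hypothesis reads
`c(E × F) ≤ φ(E) ∨ ψ(F)`. We split `M × N = A ⊔ B` with `c(A ∩ (E × N)) ≤ φ(E)` and
`c(B ∩ (M × F)) ≤ ψ(F)` for all `E`, `F`, by induction on `|M| + |N|`. Let `E₁ ⊆ M` maximise the
row excess `c(E₁ × N) - φ(E₁)`. If `E₁ ≠ M`, split `E₁ × N` by induction and add the rows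
`(M \ E₁) × N` to `A`: maximality of `E₁` and submodularity of `φ` preserve the row bounds. If
`E₁ = M` with excess `≤ 0`, take `A = M × N`. Columns are treated the same way, by transposition.
If neither step applies, `c(M × N)` exceeds both `φ(M)` and `ψ(N)`, against the hypothesis.
Finally `s μ(|g| > s) ≤ ∫_{|g| > s} |g| dμ ≤ μ(|g| > s)^{1/p*}` turns the row bounds into the
weak-type bound.
-/

open Finset

/-- The weak-`ℓ^p` (Lorentz `ℓ^{p,∞}`) quasinorm of `g` on the weighted space
`(Fin m, μ)`, via the distribution function: `sup_{s>0} s · μ({|g| > s})^{1/p}`. -/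
noncomputable def weakLpNorm {m : ℕ} (μ : Fin m → ℝ) (p : ℝ) (g : Fin m → ℝ) : ℝ :=
  sSup {x : ℝ | ∃ s : ℝ, 0 < s ∧
    x = s * (∑ i ∈ Finset.univ.filter fun i => s < |g i|, μ i) ^ (1 / p)}

theorem ConcaveOn.map_add_sub_map_le_of_le {s : Set ℝ} {f : ℝ → ℝ} (hf : ConcaveOn ℝ s f)
    {a b δ : ℝ} (ha : a ∈ s) (hbδ : b + δ ∈ s) (hab : a ≤ b) (hδ : 0 ≤ δ) :
    f (b + δ) - f b ≤ f (a + δ) - f a := by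
  rcases (add_nonneg (sub_nonneg.2 hab) hδ).eq_or_lt with hT | hT
  · obtain rfl : δ = 0 := by linarith
    obtain rfl : b = a := by linarith
    rfl
  -- `a + δ` and `b` are the two mirror-image convex combinations of `a` and `b + δ`.
  set w := δ / (b - a + δ)
  have hw₀ : 0 ≤ w := div_nonneg hδ hT.le
  have hw₁ : w ≤ 1 := (div_le_one hT).2 (by linarith)
  have h₁ := hf.2 ha hbδ (sub_nonneg.2 hw₁) hw₀ (sub_add_cancel 1 w)
  have h₂ := hf.2 ha hbδ hw₀ (sub_nonneg.2 hw₁) (add_sub_cancel w 1)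
  simp only [smul_eq_mul] at h₁ h₂
  rw [show (1 - w) * a + w * (b + δ) = a + δ by simp only [w]; field_simp; ring] at h₁
  rw [show w * a + (1 - w) * (b + δ) = b by simp only [w]; field_simp; ring] at h₂
  linarith

def IsSubmodular {ι : Type*} [DecidableEq ι] (φ : Finset ι → ℝ) : Prop :=
  ∀ E E', φ (E ∪ E') + φ (E ∩ E') ≤ φ E + φ E'

theorem ConcaveOn.isSubmodular_comp_sum {ι : Type*} [DecidableEq ι] {f : ℝ → ℝ}
    (hf : ConcaveOn ℝ (Set.Ici 0) f) {w : ι → ℝ} (hw : ∀ i, 0 ≤ w i) :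
    IsSubmodular fun E => f (∑ i ∈ E, w i) := by
  intro E E'
  have hinter : ∑ i ∈ E ∩ E', w i ≤ ∑ i ∈ E, w i :=
    sum_le_sum_of_subset_of_nonneg inter_subset_left fun i _ _ => hw i
  have hinter' : ∑ i ∈ E ∩ E', w i ≤ ∑ i ∈ E', w i :=
    sum_le_sum_of_subset_of_nonneg inter_subset_right fun i _ _ => hw i
  have hunion : ∑ i ∈ E ∪ E', w i = ∑ i ∈ E, w i + (∑ i ∈ E', w i - ∑ i ∈ E ∩ E', w i) := by
    linarith [sum_union_inter (s₁ := E) (s₂ := E') (f := w)]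
  have := hf.map_add_sub_map_le_of_le (sum_nonneg fun i _ => hw i)
    (hunion ▸ sum_nonneg fun i _ => hw i) hinter (sub_nonneg.2 hinter')
  rw [← hunion, add_sub_cancel] at this
  linarith

theorem weakLpNorm_le_of_forall_sum_le {m : ℕ} {μ : Fin m → ℝ} (hμ : ∀ i, 0 ≤ μ i)
    {p q C : ℝ} (hp : p ≠ 0) (hpq : 1 / p + 1 / q = 1) (hC : 0 ≤ C) {g : Fin m → ℝ}
    (hg : ∀ E, ∑ i ∈ E, |g i| * μ i ≤ C * (∑ i ∈ E, μ i) ^ (1 / q)) :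
    weakLpNorm μ p g ≤ C := by
  refine Real.sSup_le ?_ hC
  rintro _ ⟨s, -, rfl⟩
  set E := univ.filter fun i => s < |g i|
  rcases (sum_nonneg fun i (_ : i ∈ E) => hμ i).eq_or_lt with hE | hE
  · rw [← hE, Real.zero_rpow (one_div_ne_zero hp), mul_zero]
    exact hC
  have hsE : s * ∑ i ∈ E, μ i ≤ C * (∑ i ∈ E, μ i) ^ (1 / q) := by
    refine le_trans ?_ (hg E)
    rw [mul_sum]
    exact sum_le_sum fun i hi => mul_le_mul_of_nonneg_right (mem_filter.1 hi).2.le (hμ i)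
  calc s * (∑ i ∈ E, μ i) ^ (1 / p)
      = s * (∑ i ∈ E, μ i) * (∑ i ∈ E, μ i) ^ (1 / p - 1) := by
        rw [Real.rpow_sub hE, Real.rpow_one]; field_simp
    _ ≤ C * (∑ i ∈ E, μ i) ^ (1 / q) * (∑ i ∈ E, μ i) ^ (1 / p - 1) := by gcongr
    _ = C := by
        rw [mul_assoc, ← Real.rpow_add hE, show 1 / q + (1 / p - 1) = 0 by linarith,
          Real.rpow_zero, mul_one]

theorem sum_filter_fst_mem_eq_sum_sum_ite {I J : Type*} [DecidableEq I] [DecidableEq J]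
    [Fintype J] (A : Finset (I × J)) (E : Finset I) (f : I × J → ℝ) :
    ∑ x ∈ A with x.1 ∈ E, f x = ∑ i ∈ E, ∑ j, if (i, j) ∈ A then f (i, j) else 0 := by
  rw [← sum_product (f := fun x => if x ∈ A then f x else 0), sum_ite_mem]
  congr 1
  ext x
  simp only [mem_filter, mem_inter, mem_product, mem_univ, and_true]
  tauto

theorem weakLpNorm_sum_ite_mem_le {m : ℕ} {J : Type*} [DecidableEq J] [Fintype J]
    {μ : Fin m → ℝ} (hμ : ∀ i, 0 ≤ μ i) {p q C : ℝ} (hp : p ≠ 0) (hpq : 1 / p + 1 / q = 1)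
    (hC : 0 ≤ C) {b : Fin m × J → ℝ} (hb : ∀ x, 0 ≤ b x) (A : Finset (Fin m × J))
    (hA : ∀ E, ∑ x ∈ A with x.1 ∈ E, b x * μ x.1 ≤ C * (∑ i ∈ E, μ i) ^ (1 / q)) :
    weakLpNorm μ p (fun i => ∑ j, if (i, j) ∈ A then b (i, j) else 0) ≤ C := by
  refine weakLpNorm_le_of_forall_sum_le hμ hp hpq hC fun E => ?_
  convert hA E using 1
  rw [sum_filter_fst_mem_eq_sum_sum_ite]
  refine sum_congr rfl fun i _ => ?_
  rw [abs_of_nonneg (sum_nonneg fun j _ => by split_ifs <;> simp [hb]), sum_mul]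
  exact sum_congr rfl fun j _ => by split_ifs <;> simp

theorem sum_product_swap {I J : Type*} (c : I × J → ℝ) (E : Finset I) (F : Finset J) :
    ∑ x ∈ F ×ˢ E, c x.swap = ∑ x ∈ E ×ˢ F, c x := by
  rw [← map_swap_product, sum_map]
  rfl

theorem mem_map_swap {I J : Type*} {A : Finset (I × J)} {x : J × I} :
    x ∈ A.map ⟨Prod.swap, Prod.swap_injective⟩ ↔ x.swap ∈ A :=
  mem_map_equiv (f := Equiv.prodComm I J)

section Splitting

variable {I J : Type*} [DecidableEq I] [DecidableEq J]
  {c : I × J → ℝ} {φ : Finset I → ℝ} {ψ : Finset J → ℝ} {M : Finset I} {N : Finset J}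
  {A B : Finset (I × J)}

structure IsSplitting (c : I × J → ℝ) (φ : Finset I → ℝ) (ψ : Finset J → ℝ)
    (M : Finset I) (N : Finset J) (A B : Finset (I × J)) : Prop where
  disjoint : Disjoint A B
  union_eq : A ∪ B = M ×ˢ N
  row_le : ∀ E ⊆ M, ∑ x ∈ A with x.1 ∈ E, c x ≤ φ E
  col_le : ∀ F ⊆ N, ∑ x ∈ B with x.2 ∈ F, c x ≤ ψ F

theorem IsSplitting.transpose (h : IsSplitting c φ ψ M N A B) :
    IsSplitting (c ∘ Prod.swap) ψ φ N M
      (B.map ⟨Prod.swap, Prod.swap_injective⟩) (A.map ⟨Prod.swap, Prod.swap_injective⟩) where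
  disjoint := (disjoint_map _).2 h.disjoint.symm
  union_eq := by rw [← map_union, union_comm, h.union_eq, map_swap_product]
  row_le F hF := by
    rw [filter_map, sum_map]
    exact h.col_le F hF
  col_le E hE := by
    rw [filter_map, sum_map]
    exact h.row_le E hE

theorem IsSplitting.of_forall_sum_le (hψ₀ : ∀ F, 0 ≤ ψ F)
    (hrows : ∀ E ⊆ M, ∑ x ∈ E ×ˢ N, c x ≤ φ E) : IsSplitting c φ ψ M N (M ×ˢ N) ∅ where
  disjoint := disjoint_empty_right _
  union_eq := union_empty _
  row_le E hE := by
    rw [filter_product_left (· ∈ E), filter_mem_eq_inter, inter_eq_right.2 hE]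
    exact hrows E hE
  col_le F _ := by
    rw [filter_empty, sum_empty]
    exact hψ₀ F

theorem IsSplitting.extend_rows (hφ : IsSubmodular φ) {E₁ : Finset I}
    (h : IsSplitting c φ ψ E₁ N A B) (hE₁ : E₁ ⊆ M)
    (hmax : ∀ E ⊆ M, ∑ x ∈ E ×ˢ N, c x - φ E ≤ ∑ x ∈ E₁ ×ˢ N, c x - φ E₁) :
    IsSplitting c φ ψ M N (A ∪ (M \ E₁) ×ˢ N) B := by
  have hA : A ⊆ E₁ ×ˢ N := h.union_eq ▸ subset_union_left
  have hB : B ⊆ E₁ ×ˢ N := h.union_eq ▸ subset_union_right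
  have hrest : Disjoint ((M \ E₁) ×ˢ N) (E₁ ×ˢ N) := disjoint_product.2 (Or.inl sdiff_disjoint)
  refine ⟨disjoint_union_left.2 ⟨h.disjoint, hrest.mono_right hB⟩, ?_, fun E hE => ?_, h.col_le⟩
  · rw [union_right_comm, h.union_eq, ← union_product, union_sdiff_of_subset hE₁]
  have hnew : ∑ x ∈ (E \ E₁) ×ˢ N, c x ≤ φ (E ∪ E₁) - φ E₁ := by
    have hunion : ∑ x ∈ (E ∪ E₁) ×ˢ N, c x = ∑ x ∈ (E \ E₁) ×ˢ N, c x + ∑ x ∈ E₁ ×ˢ N, c x := by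
      rw [← sdiff_union_self_eq_union, union_product,
        sum_union (disjoint_product.2 (Or.inl sdiff_disjoint))]
    linarith [hmax (E ∪ E₁) (union_subset hE hE₁)]
  have hsplit : ∑ x ∈ A ∪ (M \ E₁) ×ˢ N with x.1 ∈ E, c x =
      ∑ x ∈ A with x.1 ∈ E ∩ E₁, c x + ∑ x ∈ (E \ E₁) ×ˢ N, c x := by
    rw [filter_union,
      sum_union ((hrest.mono_right hA).symm.mono (filter_subset _ _) (filter_subset _ _))]
    congr 1
    · refine sum_congr (filter_congr fun x hx => ?_) fun _ _ => rfl
      simp [(mem_product.1 (hA hx)).1]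
    · rw [filter_product_left (· ∈ E)]
      congr 2
      ext i
      simp only [mem_filter, mem_sdiff]
      exact ⟨fun h => ⟨h.2, h.1.2⟩, fun h => ⟨⟨hE h.1, h.2⟩, h.1⟩⟩
  linarith [h.row_le (E ∩ E₁) inter_subset_right, hφ E E₁]

theorem exists_isSplitting_or_lt_sum_rows (hψ₀ : ∀ F, 0 ≤ ψ F) (hφ : IsSubmodular φ)
    (ih : ∀ E ⊂ M, ∃ A B, IsSplitting c φ ψ E N A B) :
    (∃ A B, IsSplitting c φ ψ M N A B) ∨ φ M < ∑ x ∈ M ×ˢ N, c x := by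
  obtain ⟨E₁, hE₁, hmax⟩ := M.powerset.exists_max_image
    (fun E => ∑ x ∈ E ×ˢ N, c x - φ E) ⟨M, mem_powerset_self M⟩
  rw [mem_powerset] at hE₁
  replace hmax : ∀ E ⊆ M, _ := fun E hE => hmax E (mem_powerset.2 hE)
  rcases hE₁.ssubset_or_eq with hE₁M | rfl
  · obtain ⟨A, B, h⟩ := ih E₁ hE₁M
    exact Or.inl ⟨_, _, h.extend_rows hφ hE₁ hmax⟩
  refine (le_or_gt _ _).imp_left fun hle => ⟨_, _, IsSplitting.of_forall_sum_le hψ₀ ?_⟩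
  intro E hE
  linarith [hmax E hE]

theorem exists_isSplitting_or_lt_sum_cols (hφ₀ : ∀ E, 0 ≤ φ E) (hψ : IsSubmodular ψ)
    (ih : ∀ F ⊂ N, ∃ A B, IsSplitting c φ ψ M F A B) :
    (∃ A B, IsSplitting c φ ψ M N A B) ∨ ψ N < ∑ x ∈ M ×ˢ N, c x := by
  have := exists_isSplitting_or_lt_sum_rows (c := c ∘ Prod.swap) hφ₀ hψ fun F hF =>
    let ⟨_, _, h⟩ := ih F hF; ⟨_, _, h.transpose⟩
  rw [Function.comp_def, sum_product_swap] at this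
  exact this.imp_left fun ⟨_, _, h⟩ => ⟨_, _, h.transpose⟩

theorem exists_isSplitting (hφ₀ : ∀ E, 0 ≤ φ E) (hψ₀ : ∀ F, 0 ≤ ψ F) (hφ : IsSubmodular φ)
    (hψ : IsSubmodular ψ)
    (hc : ∀ E F, E.Nonempty → F.Nonempty → ∑ x ∈ E ×ˢ F, c x ≤ max (φ E) (ψ F))
    (M : Finset I) (N : Finset J) : ∃ A B, IsSplitting c φ ψ M N A B := by
  induction hk : M.card + N.card using Nat.strong_induction_on generalizing M N with
  | _ k ih =>
    rcases exists_isSplitting_or_lt_sum_rows hψ₀ hφ (M := M) (N := N) fun E hE =>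
      ih _ (by have := card_lt_card hE; omega) E N rfl with h | hrow
    · exact h
    rcases exists_isSplitting_or_lt_sum_cols hφ₀ hψ (M := M) (N := N) fun F hF =>
      ih _ (by have := card_lt_card hF; omega) M F rfl with h | hcol
    · exact h
    have hMN : (M ×ˢ N).Nonempty := nonempty_of_sum_ne_zero (hrow.trans_le' (hφ₀ M)).ne'
    exact absurd (hc M N hMN.fst hMN.snd) (max_lt hrow hcol).not_ge

end Splitting

/-- Proposition 2.1: if `|||a|||_{p,t} ≤ 1`, i.e. for all nonempty
`E, F` one has `(μ(E)^{1/p*} ∨ t⁻¹ν(F)^{1/p*})⁻¹ ∑_{E×F}|a| μ ν ≤ 1`, then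
`M × N` splits into `A ∪ B` with `‖1_A·a‖_{ℓ^{p,∞}_m(ℓ^1_n)} ≤ 1` and
`‖(1_B·a)ᵀ‖_{ℓ^{p,∞}_n(ℓ^1_m)} ≤ 1/t`. -/
theorem splitting_lemma_weakLp (m n : ℕ) (μ : Fin m → ℝ) (ν : Fin n → ℝ)
    (hμ : ∀ i, 0 < μ i) (hν : ∀ j, 0 < ν j) (t : ℝ) (ht : 0 < t)
    (p ps : ℝ) (hp : 1 < p) (hps : 1 / p + 1 / ps = 1)
    (a : Fin m × Fin n → ℝ)
    (ha : ∀ (E : Finset (Fin m)) (F : Finset (Fin n)), E.Nonempty → F.Nonempty →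
      (max ((∑ i ∈ E, μ i) ^ (1 / ps)) (t⁻¹ * (∑ j ∈ F, ν j) ^ (1 / ps)))⁻¹ *
        ∑ i ∈ E, ∑ j ∈ F, |a (i, j)| * μ i * ν j ≤ 1) :
    ∃ A B : Finset (Fin m × Fin n), Disjoint A B ∧ A ∪ B = Finset.univ ∧
      weakLpNorm μ p
        (fun i => ∑ j : Fin n, (if (i, j) ∈ A then |a (i, j)| * ν j else 0)) ≤ 1 ∧
      weakLpNorm ν p
        (fun j => ∑ i : Fin m, (if (i, j) ∈ B then |a (i, j)| * μ i else 0)) ≤ 1 / t := by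
  have hp₀ : p ≠ 0 := by positivity
  have hp₁ : 1 / p < 1 := (div_lt_one (by positivity)).2 hp
  have hconc : ConcaveOn ℝ (Set.Ici 0) fun x : ℝ => x ^ (1 / ps) :=
    Real.concaveOn_rpow (by linarith) (by linarith [one_div_pos.2 (zero_lt_one.trans hp)])
  have ht₀ : 0 ≤ t⁻¹ := inv_nonneg.2 ht.le
  obtain ⟨A, B, h⟩ := exists_isSplitting (c := fun x => |a x| * μ x.1 * ν x.2)
    (φ := fun E => (∑ i ∈ E, μ i) ^ (1 / ps)) (ψ := fun F => t⁻¹ * (∑ j ∈ F, ν j) ^ (1 / ps))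
    (fun E => Real.rpow_nonneg (sum_nonneg fun i _ => (hμ i).le) _)
    (fun F => mul_nonneg ht₀ (Real.rpow_nonneg (sum_nonneg fun j _ => (hν j).le) _))
    (hconc.isSubmodular_comp_sum fun i => (hμ i).le)
    ((hconc.smul ht₀).isSubmodular_comp_sum fun j => (hν j).le)
    (fun E F hE hF => by
      have hpos : 0 < (∑ i ∈ E, μ i) ^ (1 / ps) :=
        Real.rpow_pos_of_pos (sum_pos (fun i _ => hμ i) hE) _
      rw [sum_product]
      exact (inv_mul_le_iff₀ (lt_max_of_lt_left hpos)).1 (ha E F hE hF) |>.trans_eq (mul_one _))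
    univ univ
  refine ⟨A, B, h.disjoint, by rw [h.union_eq, univ_product_univ], ?_, ?_⟩
  · refine weakLpNorm_sum_ite_mem_le (fun i => (hμ i).le) hp₀ hps zero_le_one
      (b := fun x => |a x| * ν x.2) (fun x => mul_nonneg (abs_nonneg _) (hν _).le) A fun E => ?_
    simpa only [one_mul, mul_right_comm] using h.row_le E (subset_univ E)
  · rw [one_div]
    convert weakLpNorm_sum_ite_mem_le (fun j => (hν j).le) hp₀ hps ht₀
      (b := fun y => |a y.swap| * μ y.2) (fun y => mul_nonneg (abs_nonneg _) (hμ _).le)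
      (B.map ⟨Prod.swap, Prod.swap_injective⟩)
      fun F => h.transpose.row_le F (subset_univ F) using 3 with j
    simp only [mem_map_swap, Prod.swap_prod_mk]
end

section
/- Let M = Fin m, N = Fin n with positive weights μ, ν, t > 0, and 1 ≤ q < p ≤ ∞; set α = 1/q − 1/p and C(p,q) = (1 − q/p)^{1/q}. Let K_{p,q,t}(a) be the K_t-functional of the couple (ℓ^{p,∞}_m(ℓ^q_n), ℓ^{p,∞}_n(ℓ^q_m)) and |||a|||_{p,q,t} = sup over nonempty E ⊆ M, F ⊆ N of (μ(E)^α ∨ t⁻¹ν(F)^α)⁻¹ (∑_{(i,j)∈E×F} |a(i,j)|^q μ_i ν_j)^{1/q}. Then C(p,q) |||a|||_{p,q,t} ≤ K_{p,q,t}(a) ≤ 2 |||a|||_{p,q,t}. Moreover, if |||a|||_{p,q,t} ≤ 1 there is a partition M × N = A ∪ B with ‖1_A · a‖_{ℓ^{p,∞}_m(ℓ^q_n)} ≤ 1 and ‖(1_B · a)^⊤‖_{ℓ^{p,∞}_n(ℓ^q_m)} ≤ 1/t. -/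
open Finset

/-- The `ℓ^{p,∞}_m(ℓ^q_n)`-quasinorm of a matrix `a`: the weak-`ℓ^p` quasinorm
(w.r.t. `μ`) of `i ↦ (∑_j |a(i,j)|^q ν_j)^{1/q}`. -/
noncomputable def mixedNorm (m n : ℕ) (μ : Fin m → ℝ) (ν : Fin n → ℝ) (p q : ℝ)
    (a : Fin m × Fin n → ℝ) : ℝ :=
  weakLpNorm μ p (fun i => (∑ j : Fin n, |a (i, j)| ^ q * ν j) ^ (1 / q))

/-- The norm `|||a|||_{p,q,t}` with `α = 1/q - 1/p`. -/
noncomputable def tripleNormPQ (m n : ℕ) (μ : Fin m → ℝ) (ν : Fin n → ℝ) (q α t : ℝ)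
    (a : Fin m × Fin n → ℝ) : ℝ :=
  sSup {x : ℝ | ∃ (E : Finset (Fin m)) (F : Finset (Fin n)), E.Nonempty ∧ F.Nonempty ∧
    x = (max ((∑ i ∈ E, μ i) ^ α) (t⁻¹ * (∑ j ∈ F, ν j) ^ α))⁻¹ *
      (∑ i ∈ E, ∑ j ∈ F, |a (i, j)| ^ q * μ i * ν j) ^ (1 / q)}

/-- The `K_t`-functional of the couple `(ℓ^{p,∞}_m(ℓ^q_n), ℓ^{p,∞}_n(ℓ^q_m))`. -/
noncomputable def KtPQ (m n : ℕ) (μ : Fin m → ℝ) (ν : Fin n → ℝ) (p q t : ℝ)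
    (a : Fin m × Fin n → ℝ) : ℝ :=
  sInf {x : ℝ | ∃ b c : Fin m × Fin n → ℝ, a = b + c ∧
    x = mixedNorm m n μ ν p q b + t * mixedNorm n m ν μ p q (fun z => c (z.2, z.1))}

/-!
For the lower bound take a decomposition `a = b + c` and a block `E × F`. Minkowski's inequality
splits the `ℓ^q`-mass of `a` on the block into those of `b` and `c`. The mass of `b` is controlled
by its weak norm: peel off the rows of `E` in increasing order of their `ℓ^q`-mass; the weak-type
bound caps the smallest one, and concavity of `x ↦ x^(1 - q/p)` adds these caps up to
`‖b‖^q μ(E)^(1 - q/p) / (1 - q/p)`.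

For the upper bound and the splitting, convexify: with `w = |a|^q` and `β = 1 - q/p`, the bound
`|||a||| ≤ Λ` says that every block `E × F` carries `w`-mass at most
`max (Λ^q μ(E)^β) ((Λ/t)^q ν(F)^β)`. By averaging, the current block then has a row (or a column)
of small mass; give it to `A` (or to `B`), delete it and recurse. Every set of rows then contains
a row whose `A`-part is light, which is the weak-type bound for `1_A a`, and likewise for columns.
-/

theorem rpow_le_rpow_add_mul_rpow_sub_one_mul_sub {x y γ : ℝ} (hx : 0 ≤ x) (hy : 0 < y)
    (hγ₀ : 0 ≤ γ) (hγ₁ : γ ≤ 1) :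
    x ^ γ ≤ y ^ γ + γ * y ^ (γ - 1) * (x - y) := by
  have h := rpow_one_add_le_one_add_mul_self (s := x / y - 1)
    (by linarith [div_nonneg hx hy.le]) hγ₀ hγ₁
  rw [add_sub_cancel, Real.div_rpow hx hy.le, div_le_iff₀ (by positivity)] at h
  rw [Real.rpow_sub_one hy.ne']
  refine h.trans_eq ?_
  field_simp

section WeakLp

variable {m : ℕ} (μ : Fin m → ℝ) {p : ℝ}

theorem weakLpNorm_bddAbove (hp : 0 < p) (hμ : ∀ i, 0 ≤ μ i) (g : Fin m → ℝ) :
    BddAbove {x : ℝ | ∃ s : ℝ, 0 < s ∧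
      x = s * (∑ i ∈ univ.filter fun i => s < |g i|, μ i) ^ (1 / p)} := by
  refine ⟨(∑ i, |g i|) * (∑ i, μ i) ^ (1 / p), ?_⟩
  rintro _ ⟨s, -, rfl⟩
  have hμE : ∀ E : Finset (Fin m), 0 ≤ ∑ i ∈ E, μ i := fun E => sum_nonneg fun i _ => hμ i
  rcases (univ.filter fun i => s < |g i|).eq_empty_or_nonempty with h | ⟨i, hi⟩
  · rw [h, sum_empty, Real.zero_rpow (by positivity), mul_zero]
    exact mul_nonneg (sum_nonneg fun i _ => abs_nonneg (g i)) (Real.rpow_nonneg (hμE _) _)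
  · have hs : s ≤ ∑ i, |g i| :=
      (mem_filter.1 hi).2.le.trans (single_le_sum (fun i _ => abs_nonneg (g i)) (mem_univ i))
    exact mul_le_mul hs (Real.rpow_le_rpow (hμE _)
      (sum_le_sum_of_subset_of_nonneg (subset_univ _) fun i _ _ => hμ i) (by positivity))
      (Real.rpow_nonneg (hμE _) _) (sum_nonneg fun i _ => abs_nonneg (g i))

theorem le_weakLpNorm (hp : 0 < p) (hμ : ∀ i, 0 ≤ μ i) (g : Fin m → ℝ) {s : ℝ} (hs : 0 < s) :
    s * (∑ i ∈ univ.filter fun i => s < |g i|, μ i) ^ (1 / p) ≤ weakLpNorm μ p g :=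
  le_csSup (weakLpNorm_bddAbove μ hp hμ g) ⟨s, hs, rfl⟩

theorem weakLpNorm_nonneg (hp : 0 < p) (hμ : ∀ i, 0 ≤ μ i) (g : Fin m → ℝ) :
    0 ≤ weakLpNorm μ p g :=
  (mul_nonneg zero_le_one (Real.rpow_nonneg (sum_nonneg fun i _ => hμ i) _)).trans
    (le_weakLpNorm μ hp hμ g one_pos)

theorem weakLpNorm_le {g : Fin m → ℝ} {C : ℝ}
    (h : ∀ s : ℝ, 0 < s → s * (∑ i ∈ univ.filter fun i => s < |g i|, μ i) ^ (1 / p) ≤ C) :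
    weakLpNorm μ p g ≤ C :=
  csSup_le ⟨_, 1, one_pos, rfl⟩ fun _ ⟨s, hs, hx⟩ => hx ▸ h s hs

theorem mul_rpow_le_weakLpNorm (hp : 0 < p) (hμ : ∀ i, 0 ≤ μ i) {g : Fin m → ℝ}
    {E : Finset (Fin m)} {x : ℝ} (hx : ∀ i ∈ E, x ≤ |g i|) :
    x * (∑ i ∈ E, μ i) ^ (1 / p) ≤ weakLpNorm μ p g := by
  set M := (∑ i ∈ E, μ i) ^ (1 / p)
  have hM : 0 ≤ M := Real.rpow_nonneg (sum_nonneg fun i _ => hμ i) _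
  refine le_of_forall_lt_imp_le_of_dense fun c hc => ?_
  rcases le_or_gt c 0 with hc₀ | hc₀
  · exact hc₀.trans (weakLpNorm_nonneg μ hp hμ g)
  have hM₀ : 0 < M := hM.lt_of_ne' fun h => by rw [h, mul_zero] at hc; linarith
  have hsub : E ⊆ univ.filter fun i => c / M < |g i| := fun i hi =>
    mem_filter.2 ⟨mem_univ i, ((div_lt_iff₀ hM₀).2 hc).trans_le (hx i hi)⟩
  calc c = c / M * M := (div_mul_cancel₀ c hM₀.ne').symm
    _ ≤ c / M * (∑ i ∈ univ.filter fun i => c / M < |g i|, μ i) ^ (1 / p) :=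
      mul_le_mul_of_nonneg_left (Real.rpow_le_rpow (sum_nonneg fun i _ => hμ i)
        (sum_le_sum_of_subset_of_nonneg hsub fun i _ _ => hμ i) (by positivity))
        (div_pos hc₀ hM₀).le
    _ ≤ weakLpNorm μ p g := le_weakLpNorm μ hp hμ g (div_pos hc₀ hM₀)

theorem weakLpNorm_le_of_forall_exists (hp : p ≠ 0) (hμ : ∀ i, 0 ≤ μ i) {g : Fin m → ℝ}
    {C : ℝ} (hC : 0 ≤ C)
    (h : ∀ E : Finset (Fin m), E.Nonempty → ∃ i ∈ E, |g i| * (∑ i ∈ E, μ i) ^ (1 / p) ≤ C) :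
    weakLpNorm μ p g ≤ C := by
  refine weakLpNorm_le μ fun s hs => ?_
  rcases (univ.filter fun i => s < |g i|).eq_empty_or_nonempty with hE | hE
  · rwa [hE, sum_empty, Real.zero_rpow (one_div_ne_zero hp), mul_zero]
  obtain ⟨i, hi, hiC⟩ := h _ hE
  refine le_trans ?_ hiC
  gcongr
  · exact Real.rpow_nonneg (sum_nonneg fun i _ => hμ i) _
  · exact (mem_filter.1 hi).2.le

end WeakLp

theorem mul_sum_mul_le_of_forall_min_mul_rpow_le {ι : Type*} [DecidableEq ι] {G μ : ι → ℝ}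
    {W γ : ℝ} (hG : ∀ i, 0 ≤ G i) (hμ : ∀ i, 0 < μ i) (hγ₀ : 0 < γ) (hγ₁ : γ ≤ 1)
    (h : ∀ E : Finset ι, ∀ i ∈ E, (∀ j ∈ E, G i ≤ G j) → G i * (∑ j ∈ E, μ j) ^ (1 - γ) ≤ W)
    (E : Finset ι) : γ * ∑ i ∈ E, G i * μ i ≤ W * (∑ i ∈ E, μ i) ^ γ := by
  induction E using Finset.induction_on_min_value G with
  | empty => simp [Real.zero_rpow hγ₀.ne']
  | insert i E hiE hmin ih =>
    set x := ∑ j ∈ E, μ j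
    have hx : 0 ≤ x := sum_nonneg fun j _ => (hμ j).le
    have hy : 0 < μ i + x := by linarith [hμ i]
    have hGi : G i * (μ i + x) ^ (1 - γ) ≤ W := by
      rw [← sum_insert hiE]
      exact h _ i (mem_insert_self i E) (forall_mem_insert _ _ _ |>.2 ⟨le_rfl, hmin⟩)
    have hW : 0 ≤ W := (mul_nonneg (hG i) (Real.rpow_nonneg hy.le _)).trans hGi
    have hGi' : G i ≤ W * (μ i + x) ^ (γ - 1) := by
      rwa [show γ - 1 = -(1 - γ) by ring, Real.rpow_neg hy.le, ← div_eq_mul_inv,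
        le_div_iff₀ (Real.rpow_pos_of_pos hy _)]
    have htan := rpow_le_rpow_add_mul_rpow_sub_one_mul_sub hx hy hγ₀.le hγ₁
    rw [sum_insert hiE, sum_insert hiE, mul_add]
    calc γ * (G i * μ i) + γ * ∑ j ∈ E, G j * μ j
        ≤ γ * (W * (μ i + x) ^ (γ - 1) * μ i) + W * x ^ γ := by
          gcongr
          exact (hμ i).le
      _ ≤ W * (μ i + x) ^ γ := by
          linear_combination (mul_le_mul_of_nonneg_left htan hW)

noncomputable def blockNorm {ι κ : Type*} (μ : ι → ℝ) (ν : κ → ℝ) (q : ℝ) (a : ι × κ → ℝ)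
    (E : Finset ι) (F : Finset κ) : ℝ :=
  (∑ i ∈ E, ∑ j ∈ F, |a (i, j)| ^ q * μ i * ν j) ^ (1 / q)

section Block

variable {ι κ : Type*} {μ : ι → ℝ} {ν : κ → ℝ} {q : ℝ}

theorem blockNorm_transpose (a : ι × κ → ℝ) (E : Finset ι) (F : Finset κ) :
    blockNorm ν μ q (fun z => a (z.2, z.1)) F E = blockNorm μ ν q a E F := by
  rw [blockNorm, blockNorm, sum_comm]
  simp only [mul_right_comm]

theorem blockNorm_add_le (hμ : ∀ i, 0 ≤ μ i) (hν : ∀ j, 0 ≤ ν j) (hq : 1 ≤ q)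
    (b c : ι × κ → ℝ) (E : Finset ι) (F : Finset κ) :
    blockNorm μ ν q (b + c) E F ≤ blockNorm μ ν q b E F + blockNorm μ ν q c E F := by
  have hq₀ : 0 < q := zero_lt_one.trans_le hq
  have hLp : ∀ d : ι × κ → ℝ, blockNorm μ ν q d E F =
      (∑ z ∈ E ×ˢ F, |d z * (μ z.1 * ν z.2) ^ (1 / q)| ^ q) ^ (1 / q) := by
    intro d
    rw [blockNorm, sum_product]
    refine congrArg (· ^ (1 / q)) (sum_congr rfl fun i _ => sum_congr rfl fun j _ => ?_)
    have hw : 0 ≤ μ i * ν j := mul_nonneg (hμ i) (hν j)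
    rw [abs_mul, abs_of_nonneg (Real.rpow_nonneg hw _),
      Real.mul_rpow (abs_nonneg _) (Real.rpow_nonneg hw _), ← Real.rpow_mul hw,
      one_div_mul_cancel hq₀.ne', Real.rpow_one, mul_assoc]
  simp only [hLp, Pi.add_apply, add_mul]
  exact Real.Lp_add_le _ _ _ hq

end Block

section Mixed

variable {m n : ℕ} {μ : Fin m → ℝ} {ν : Fin n → ℝ} {p q : ℝ}

theorem sum_mul_rpow_le_mixedNorm_rpow (hμ : ∀ i, 0 ≤ μ i) (hν : ∀ j, 0 ≤ ν j) (hq : 0 < q)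
    (hp : 0 < p) (b : Fin m × Fin n → ℝ) {E : Finset (Fin m)} {i : Fin m}
    (hmin : ∀ k ∈ E, ∑ j, |b (i, j)| ^ q * ν j ≤ ∑ j, |b (k, j)| ^ q * ν j) :
    (∑ j, |b (i, j)| ^ q * ν j) * (∑ k ∈ E, μ k) ^ (q / p) ≤ mixedNorm m n μ ν p q b ^ q := by
  have hG : ∀ k, 0 ≤ ∑ j, |b (k, j)| ^ q * ν j := fun k =>
    sum_nonneg fun j _ => mul_nonneg (Real.rpow_nonneg (abs_nonneg _) _) (hν j)
  have hE : 0 ≤ ∑ k ∈ E, μ k := sum_nonneg fun k _ => hμ k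
  have hweak := mul_rpow_le_weakLpNorm μ hp hμ
    (g := fun k => (∑ j, |b (k, j)| ^ q * ν j) ^ (1 / q)) fun k hk =>
      (Real.rpow_le_rpow (hG i) (hmin k hk) (by positivity)).trans (le_abs_self _)
  have hgi : 0 ≤ (∑ j, |b (i, j)| ^ q * ν j) ^ (1 / q) := Real.rpow_nonneg (hG i) _
  have hEp : 0 ≤ (∑ k ∈ E, μ k) ^ (1 / p) := Real.rpow_nonneg hE _
  have := Real.rpow_le_rpow (mul_nonneg hgi hEp) hweak hq.le
  rwa [Real.mul_rpow hgi hEp, ← Real.rpow_mul (hG i),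
    ← Real.rpow_mul hE, one_div_mul_cancel hq.ne', Real.rpow_one, one_div_mul_eq_div] at this

theorem rpow_mul_blockNorm_le_mixedNorm_mul (hμ : ∀ i, 0 < μ i) (hν : ∀ j, 0 ≤ ν j)
    (hq : 0 < q) (hqp : q < p) (b : Fin m × Fin n → ℝ) (E : Finset (Fin m))
    (F : Finset (Fin n)) :
    (1 - q / p) ^ (1 / q) * blockNorm μ ν q b E F ≤
      mixedNorm m n μ ν p q b * (∑ i ∈ E, μ i) ^ (1 / q - 1 / p) := by
  have hp : 0 < p := hq.trans hqp
  have hγ : 0 < 1 - q / p := sub_pos.2 ((div_lt_one hp).2 hqp)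
  set W := mixedNorm m n μ ν p q b
  have hW : 0 ≤ W := weakLpNorm_nonneg μ hp (fun i => (hμ i).le) _
  have hE : 0 ≤ ∑ i ∈ E, μ i := sum_nonneg fun i _ => (hμ i).le
  have hS : 0 ≤ ∑ i ∈ E, ∑ j ∈ F, |b (i, j)| ^ q * μ i * ν j :=
    sum_nonneg fun i _ => sum_nonneg fun j _ =>
      mul_nonneg (mul_nonneg (Real.rpow_nonneg (abs_nonneg _) _) (hμ i).le) (hν j)
  have hrows : ∑ i ∈ E, ∑ j ∈ F, |b (i, j)| ^ q * μ i * ν j ≤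
      ∑ i ∈ E, (∑ j, |b (i, j)| ^ q * ν j) * μ i := by
    refine sum_le_sum fun i _ => ?_
    simp only [sum_mul, mul_right_comm _ (μ i)]
    exact sum_le_sum_of_subset_of_nonneg (subset_univ F) fun j _ _ =>
      mul_nonneg (mul_nonneg (Real.rpow_nonneg (abs_nonneg _) _) (hν j)) (hμ i).le
  have hsum := mul_sum_mul_le_of_forall_min_mul_rpow_le
    (fun i => sum_nonneg fun j _ => mul_nonneg (Real.rpow_nonneg (abs_nonneg _) _) (hν j))
    hμ hγ (by linarith [div_pos hq hp]) (fun E' i _ hmin => by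
      rw [sub_sub_cancel]
      exact sum_mul_rpow_le_mixedNorm_rpow (fun i => (hμ i).le) hν hq hp b hmin) E
  calc (1 - q / p) ^ (1 / q) * blockNorm μ ν q b E F
      = ((1 - q / p) * ∑ i ∈ E, ∑ j ∈ F, |b (i, j)| ^ q * μ i * ν j) ^ (1 / q) :=
        (Real.mul_rpow hγ.le hS).symm
    _ ≤ (W ^ q * (∑ i ∈ E, μ i) ^ (1 - q / p)) ^ (1 / q) :=
        Real.rpow_le_rpow (mul_nonneg hγ.le hS)
          ((mul_le_mul_of_nonneg_left hrows hγ.le).trans hsum) (by positivity)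
    _ = W * (∑ i ∈ E, μ i) ^ (1 / q - 1 / p) := by
        rw [Real.mul_rpow (by positivity) (by positivity), ← Real.rpow_mul hW,
          ← Real.rpow_mul hE, mul_one_div_cancel hq.ne', Real.rpow_one]
        congr 2
        field_simp

end Mixed

section Split

variable {ι κ : Type*} {w : ι → κ → ℝ} {μ : ι → ℝ} {ν : κ → ℝ} {c β : ℝ}

/-- The minimum-principle form of the bound `‖P-part of w‖_{ℓ^{1/(1-β),∞}(ℓ^1)} ≤ c` on `S × U`. -/
def LightRows (w : ι → κ → ℝ) (μ : ι → ℝ) (ν : κ → ℝ) (c β : ℝ) (S : Finset ι)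
    (U : Finset κ) (P : ι → κ → Prop) [DecidableRel P] : Prop :=
  ∀ E ⊆ S, E.Nonempty →
    ∃ i ∈ E, ∑ j ∈ U with P i j, w i j * ν j ≤ c * (∑ i ∈ E, μ i) ^ (β - 1)

theorem lightRows_empty_left (U : Finset κ) (P : ι → κ → Prop) [DecidableRel P] :
    LightRows w μ ν c β ∅ U P := fun _ hE hne =>
  absurd (subset_empty.1 hE) hne.ne_empty

theorem lightRows_empty_right (hμ : ∀ i, 0 ≤ μ i) (hc : 0 ≤ c) (S : Finset ι)
    (P : ι → κ → Prop) [DecidableRel P] : LightRows w μ ν c β S ∅ P := fun _ _ ⟨i, hi⟩ =>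
  ⟨i, hi, by simpa using mul_nonneg hc (Real.rpow_nonneg (sum_nonneg fun i _ => hμ i) _)⟩

theorem exists_light_row (hμ : ∀ i, 0 < μ i) {S : Finset ι} (hS : S.Nonempty) (U : Finset κ)
    (h : ∑ i ∈ S, ∑ j ∈ U, w i j * μ i * ν j ≤ c * (∑ i ∈ S, μ i) ^ β) :
    ∃ i ∈ S, ∑ j ∈ U, w i j * ν j ≤ c * (∑ i ∈ S, μ i) ^ (β - 1) := by
  have hμS : 0 < ∑ i ∈ S, μ i := sum_pos (fun i _ => hμ i) hS
  have hmass : ∑ i ∈ S, (∑ j ∈ U, w i j * ν j) * μ i ≤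
      ∑ i ∈ S, c * (∑ i ∈ S, μ i) ^ (β - 1) * μ i := by
    rw [← mul_sum, Real.rpow_sub_one hμS.ne', mul_assoc, div_mul_cancel₀ _ hμS.ne']
    simpa only [sum_mul, mul_right_comm _ (μ _)] using h
  obtain ⟨i, hi, hle⟩ := exists_le_of_sum_le hS hmass
  exact ⟨i, hi, le_of_mul_le_mul_right hle (hμ i)⟩

theorem LightRows.insert_row [DecidableEq ι] (hw : ∀ i j, 0 ≤ w i j) (hμ : ∀ i, 0 < μ i)
    (hν : ∀ j, 0 ≤ ν j) (hβ : β ≤ 1) (hc : 0 ≤ c) {S : Finset ι} {U : Finset κ}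
    {P Q : ι → κ → Prop} [DecidableRel P] [DecidableRel Q]
    {i₀ : ι} (h : LightRows w μ ν c β (S.erase i₀) U P)
    (hlight : ∑ j ∈ U, w i₀ j * ν j ≤ c * (∑ i ∈ S, μ i) ^ (β - 1))
    (hPQ : ∀ i ≠ i₀, ∀ j, Q i j ↔ P i j) :
    LightRows w μ ν c β S U Q := by
  intro E hES hE
  by_cases hi₀E : i₀ ∈ E
  · refine ⟨i₀, hi₀E, le_trans ?_ (hlight.trans ?_)⟩
    · exact sum_le_sum_of_subset_of_nonneg (filter_subset _ _) fun j _ _ =>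
        mul_nonneg (hw i₀ j) (hν j)
    · exact mul_le_mul_of_nonneg_left (Real.rpow_le_rpow_of_nonpos
        (sum_pos (fun i _ => hμ i) hE)
        (sum_le_sum_of_subset_of_nonneg hES fun i _ _ => (hμ i).le) (by linarith)) hc
  · obtain ⟨i, hi, hle⟩ := h E (subset_erase.2 ⟨hES, hi₀E⟩) hE
    refine ⟨i, hi, le_of_eq_of_le ?_ hle⟩
    rw [filter_congr fun j _ => hPQ i (ne_of_mem_of_not_mem hi hi₀E) j]

theorem LightRows.insert_col [DecidableEq κ] {S : Finset ι} {U : Finset κ}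
    {P Q : ι → κ → Prop} [DecidableRel P] [DecidableRel Q]
    {j₀ : κ} (h : LightRows w μ ν c β S (U.erase j₀) P) (hj₀ : ∀ i ∈ S, ¬ Q i j₀)
    (hPQ : ∀ i, ∀ j ≠ j₀, Q i j ↔ P i j) :
    LightRows w μ ν c β S U Q := by
  intro E hES hE
  obtain ⟨i, hi, hle⟩ := h E hES hE
  refine ⟨i, hi, le_of_eq_of_le (sum_congr (ext fun j => ?_) fun _ _ => rfl) hle⟩
  by_cases hj : j = j₀
  · subst hj
    simp [hj₀ i (hES hi)]
  · simp [hj, hPQ i j hj]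

theorem exists_lightRows_split [DecidableEq ι] [DecidableEq κ] (hw : ∀ i j, 0 ≤ w i j)
    (hμ : ∀ i, 0 < μ i) (hν : ∀ j, 0 < ν j) (hβ : β ≤ 1) (hc : 0 ≤ c) {c' : ℝ} (hc' : 0 ≤ c')
    (S : Finset ι) (U : Finset κ)
    (h : ∀ E ⊆ S, ∀ F ⊆ U, E.Nonempty → F.Nonempty →
      ∑ i ∈ E, ∑ j ∈ F, w i j * μ i * ν j ≤
        max (c * (∑ i ∈ E, μ i) ^ β) (c' * (∑ j ∈ F, ν j) ^ β)) :
    ∃ A : Finset (ι × κ), LightRows w μ ν c β S U (fun i j => (i, j) ∈ A) ∧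
      LightRows (flip w) ν μ c' β U S (fun j i => (i, j) ∉ A) := by
  rcases S.eq_empty_or_nonempty with rfl | hS
  · exact ⟨∅, lightRows_empty_left _ _, lightRows_empty_right (fun j => (hν j).le) hc' _ _⟩
  rcases U.eq_empty_or_nonempty with rfl | hU
  · exact ⟨∅, lightRows_empty_right (fun i => (hμ i).le) hc _ _, lightRows_empty_left _ _⟩
  rcases le_max_iff.1 (h S subset_rfl U subset_rfl hS hU) with hrow | hcol
  · obtain ⟨i₀, hi₀, hlight⟩ := exists_light_row hμ hS U hrow
    obtain ⟨A, hA, hA'⟩ := exists_lightRows_split hw hμ hν hβ hc hc' (S.erase i₀) U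
      fun E hE F hF => h E (hE.trans (erase_subset _ _)) F hF
    have hA₀ : ∀ i ≠ i₀, ∀ j, (i, j) ∈ A ∪ {i₀} ×ˢ U ↔ (i, j) ∈ A := by
      intro i hi j; simp [hi.symm]
    refine ⟨A ∪ {i₀} ×ˢ U, hA.insert_row hw hμ (fun j => (hν j).le) hβ hc hlight hA₀,
      hA'.insert_col (fun j hj => by simp [hj]) fun j i hi => not_congr (hA₀ i hi j)⟩
  · have hcol' : ∑ j ∈ U, ∑ i ∈ S, flip w j i * ν j * μ i ≤ c' * (∑ j ∈ U, ν j) ^ β := by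
      rw [sum_comm]
      exact hcol.trans_eq' (sum_congr rfl fun _ _ => sum_congr rfl fun _ _ => mul_right_comm ..)
    obtain ⟨j₀, hj₀, hlight⟩ := exists_light_row hν hU S hcol'
    obtain ⟨A, hA, hA'⟩ := exists_lightRows_split hw hμ hν hβ hc hc' S (U.erase j₀)
      fun E hE F hF => h E hE F (hF.trans (erase_subset _ _))
    have hA₀ : ∀ i, ∀ j ≠ j₀, (i, j) ∈ A.filter (·.2 ≠ j₀) ↔ (i, j) ∈ A := by
      intro i j hj; simp [hj]
    refine ⟨A.filter (·.2 ≠ j₀), hA.insert_col (by simp) hA₀,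
      hA'.insert_row (fun j i => hw i j) hν (fun i => (hμ i).le) hβ hc' hlight
        fun j hj i => not_congr (hA₀ i j hj)⟩
termination_by S.card + U.card
decreasing_by
  all_goals simp_wf
  · have := card_erase_lt_of_mem hi₀; omega
  · have := card_erase_lt_of_mem hj₀; omega

end Split

section Couple

variable {m n : ℕ} {μ : Fin m → ℝ} {ν : Fin n → ℝ} {p q α t : ℝ}

theorem mixedNorm_ite_le_of_lightRows (hμ : ∀ i, 0 < μ i) (hν : ∀ j, 0 ≤ ν j) (hq : 0 < q)
    (hp : p ≠ 0) {Λ : ℝ} (hΛ : 0 ≤ Λ) {a : Fin m × Fin n → ℝ} {P : Fin m × Fin n → Prop}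
    [DecidablePred P]
    (h : LightRows (fun i j => |a (i, j)| ^ q) μ ν (Λ ^ q) (1 - q / p) univ univ
      fun i j => P (i, j)) :
    mixedNorm m n μ ν p q (fun z => if P z then a z else 0) ≤ Λ := by
  refine weakLpNorm_le_of_forall_exists μ hp (fun i => (hμ i).le) hΛ fun E hE => ?_
  obtain ⟨i, hi, hle⟩ := h E (subset_univ E) hE
  refine ⟨i, hi, ?_⟩
  have hy : 0 < ∑ i ∈ E, μ i := sum_pos (fun i _ => hμ i) hE
  have hrow : ∑ j, |(if P (i, j) then a (i, j) else 0)| ^ q * ν j =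
      ∑ j with P (i, j), |a (i, j)| ^ q * ν j := by
    rw [sum_filter]
    refine sum_congr rfl fun j _ => ?_
    split_ifs <;> simp [Real.zero_rpow hq.ne']
  have hS : 0 ≤ ∑ j with P (i, j), |a (i, j)| ^ q * ν j :=
    sum_nonneg fun j _ => mul_nonneg (Real.rpow_nonneg (abs_nonneg _) _) (hν j)
  beta_reduce
  rw [hrow, abs_of_nonneg (Real.rpow_nonneg hS _)]
  calc (∑ j with P (i, j), |a (i, j)| ^ q * ν j) ^ (1 / q) * (∑ i ∈ E, μ i) ^ (1 / p)
      ≤ (Λ ^ q * (∑ i ∈ E, μ i) ^ (1 - q / p - 1)) ^ (1 / q) * (∑ i ∈ E, μ i) ^ (1 / p) := by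
        gcongr
    _ = Λ := by
        rw [Real.mul_rpow (by positivity) (by positivity), ← Real.rpow_mul hΛ,
          mul_one_div_cancel hq.ne', Real.rpow_one, ← Real.rpow_mul hy.le, mul_assoc,
          ← Real.rpow_add hy, show (1 - q / p - 1) * (1 / q) + 1 / p = 0 by field_simp; ring,
          Real.rpow_zero, mul_one]

theorem tripleNormPQ_nonneg (hμ : ∀ i, 0 ≤ μ i) (hν : ∀ j, 0 ≤ ν j) (a : Fin m × Fin n → ℝ) :
    0 ≤ tripleNormPQ m n μ ν q α t a :=
  Real.sSup_nonneg fun _ ⟨_, _, _, _, hx⟩ => hx ▸ mul_nonneg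
    (inv_nonneg.2 ((Real.rpow_nonneg (sum_nonneg fun i _ => hμ i) _).trans (le_max_left _ _)))
    (Real.rpow_nonneg (sum_nonneg fun i _ => sum_nonneg fun j _ =>
      mul_nonneg (mul_nonneg (Real.rpow_nonneg (abs_nonneg _) _) (hμ i)) (hν j)) _)

theorem tripleNormPQ_le_iff (hμ : ∀ i, 0 < μ i) {Λ : ℝ} (hΛ : 0 ≤ Λ) (a : Fin m × Fin n → ℝ) :
    tripleNormPQ m n μ ν q α t a ≤ Λ ↔ ∀ (E : Finset (Fin m)) (F : Finset (Fin n)),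
      E.Nonempty → F.Nonempty → blockNorm μ ν q a E F ≤
        Λ * max ((∑ i ∈ E, μ i) ^ α) (t⁻¹ * (∑ j ∈ F, ν j) ^ α) := by
  have hmax : ∀ (E : Finset (Fin m)) (F : Finset (Fin n)), E.Nonempty →
      0 < max ((∑ i ∈ E, μ i) ^ α) (t⁻¹ * (∑ j ∈ F, ν j) ^ α) := fun E F hE =>
    (Real.rpow_pos_of_pos (sum_pos (fun i _ => hμ i) hE) _).trans_le (le_max_left _ _)
  constructor
  · intro h E F hE hF
    rw [← inv_mul_le_iff₀' (hmax E F hE)]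
    refine le_trans ?_ h
    refine le_csSup ?_ ⟨E, F, hE, hF, rfl⟩
    refine (Set.finite_range fun EF : Finset (Fin m) × Finset (Fin n) =>
      (max ((∑ i ∈ EF.1, μ i) ^ α) (t⁻¹ * (∑ j ∈ EF.2, ν j) ^ α))⁻¹ *
        blockNorm μ ν q a EF.1 EF.2).bddAbove.mono ?_
    rintro _ ⟨E', F', -, -, rfl⟩
    exact ⟨(E', F'), rfl⟩
  · intro h
    refine Real.sSup_le ?_ hΛ
    rintro _ ⟨E, F, hE, hF, rfl⟩
    exact (inv_mul_le_iff₀' (hmax E F hE)).2 (h E F hE hF)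

theorem KtPQ_le (hμ : ∀ i, 0 ≤ μ i) (hν : ∀ j, 0 ≤ ν j) (hp : 0 < p) (ht : 0 ≤ t)
    {a b c : Fin m × Fin n → ℝ} (h : a = b + c) :
    KtPQ m n μ ν p q t a ≤
      mixedNorm m n μ ν p q b + t * mixedNorm n m ν μ p q (fun z => c (z.2, z.1)) := by
  refine csInf_le ⟨0, ?_⟩ ⟨b, c, h, rfl⟩
  rintro _ ⟨_, _, -, rfl⟩
  exact add_nonneg (weakLpNorm_nonneg μ hp hμ _)
    (mul_nonneg ht (weakLpNorm_nonneg ν hp hν _))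

theorem le_KtPQ {a : Fin m × Fin n → ℝ} {x : ℝ}
    (h : ∀ b c, a = b + c →
      x ≤ mixedNorm m n μ ν p q b + t * mixedNorm n m ν μ p q (fun z => c (z.2, z.1))) :
    x ≤ KtPQ m n μ ν p q t a :=
  le_csInf ⟨_, a, 0, (add_zero a).symm, rfl⟩ fun _ ⟨b, c, hbc, hx⟩ => hx ▸ h b c hbc

theorem exists_split_of_tripleNormPQ_le (hμ : ∀ i, 0 < μ i) (hν : ∀ j, 0 < ν j) (ht : 0 < t)
    (hq : 0 < q) (hqp : q < p) (hα : α = 1 / q - 1 / p) {Λ : ℝ} (hΛ : 0 ≤ Λ)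
    {a : Fin m × Fin n → ℝ} (h : tripleNormPQ m n μ ν q α t a ≤ Λ) :
    ∃ A : Finset (Fin m × Fin n),
      mixedNorm m n μ ν p q (fun z => if z ∈ A then a z else 0) ≤ Λ ∧
      mixedNorm n m ν μ p q (fun z => if (z.2, z.1) ∈ Aᶜ then a (z.2, z.1) else 0) ≤ Λ / t := by
  have hp : 0 < p := hq.trans hqp
  have hmass : ∀ E ⊆ univ, ∀ F ⊆ univ, E.Nonempty → F.Nonempty →
      ∑ i ∈ E, ∑ j ∈ F, |a (i, j)| ^ q * μ i * ν j ≤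
        max (Λ ^ q * (∑ i ∈ E, μ i) ^ (1 - q / p))
          ((Λ / t) ^ q * (∑ j ∈ F, ν j) ^ (1 - q / p)) := by
    intro E _ F _ hE hF
    have hS : 0 ≤ ∑ i ∈ E, ∑ j ∈ F, |a (i, j)| ^ q * μ i * ν j :=
      sum_nonneg fun i _ => sum_nonneg fun j _ => mul_nonneg
        (mul_nonneg (Real.rpow_nonneg (abs_nonneg _) _) (hμ i).le) (hν j).le
    have hpow : ∀ c x : ℝ, 0 ≤ c → 0 ≤ x → blockNorm μ ν q a E F ≤ c * x ^ α →
        ∑ i ∈ E, ∑ j ∈ F, |a (i, j)| ^ q * μ i * ν j ≤ c ^ q * x ^ (1 - q / p) := by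
      intro c x hc hx hle
      rw [blockNorm] at hle
      have := Real.rpow_le_rpow (Real.rpow_nonneg hS _) hle hq.le
      rwa [← Real.rpow_mul hS, one_div_mul_cancel hq.ne', Real.rpow_one,
        Real.mul_rpow hc (Real.rpow_nonneg hx _), ← Real.rpow_mul hx, hα,
        show (1 / q - 1 / p) * q = 1 - q / p by field_simp] at this
    have hb := (tripleNormPQ_le_iff hμ hΛ a).1 h E F hE hF
    rw [mul_max_of_nonneg _ _ hΛ] at hb
    rcases le_max_iff.1 hb with hb | hb
    · exact le_max_of_le_left (hpow Λ _ hΛ (sum_nonneg fun i _ => (hμ i).le) hb)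
    · refine le_max_of_le_right (hpow (Λ / t) _ (by positivity)
        (sum_nonneg fun j _ => (hν j).le) ?_)
      rwa [div_eq_mul_inv, mul_assoc]
  obtain ⟨A, hA, hA'⟩ := exists_lightRows_split (w := fun i j => |a (i, j)| ^ q)
    (fun i j => Real.rpow_nonneg (abs_nonneg _) _) hμ hν (by linarith [div_pos hq hp])
    (by positivity) (by positivity) univ univ hmass
  refine ⟨A, mixedNorm_ite_le_of_lightRows hμ (fun j => (hν j).le) hq hp.ne' hΛ hA, ?_⟩
  simp only [mem_compl]
  exact mixedNorm_ite_le_of_lightRows hν (fun i => (hμ i).le) hq hp.ne' (by positivity) hA'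

theorem rpow_mul_tripleNormPQ_le_KtPQ (hμ : ∀ i, 0 < μ i) (hν : ∀ j, 0 < ν j) (ht : 0 < t)
    (hq : 1 ≤ q) (hqp : q < p) (hα : α = 1 / q - 1 / p) (a : Fin m × Fin n → ℝ) :
    (1 - q / p) ^ (1 / q) * tripleNormPQ m n μ ν q α t a ≤ KtPQ m n μ ν p q t a := by
  have hq₀ : 0 < q := zero_lt_one.trans_le hq
  have hp : 0 < p := hq₀.trans hqp
  set C := (1 - q / p) ^ (1 / q)
  have hC : 0 < C := Real.rpow_pos_of_pos (sub_pos.2 ((div_lt_one hp).2 hqp)) _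
  refine le_KtPQ fun b c hbc => ?_
  set Wb := mixedNorm m n μ ν p q b
  set Wc := mixedNorm n m ν μ p q (fun z => c (z.2, z.1))
  have hWb : 0 ≤ Wb := weakLpNorm_nonneg μ hp (fun i => (hμ i).le) _
  have hWc : 0 ≤ Wc := weakLpNorm_nonneg ν hp (fun j => (hν j).le) _
  rw [mul_comm, ← le_div_iff₀ hC, tripleNormPQ_le_iff hμ (by positivity)]
  intro E F hE hF
  have hb := rpow_mul_blockNorm_le_mixedNorm_mul hμ (fun j => (hν j).le) hq₀ hqp b E F
  have hc := rpow_mul_blockNorm_le_mixedNorm_mul hν (fun i => (hμ i).le) hq₀ hqp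
    (fun z => c (z.2, z.1)) F E
  rw [← hα] at hb
  rw [← hα, blockNorm_transpose] at hc
  set M := max ((∑ i ∈ E, μ i) ^ α) (t⁻¹ * (∑ j ∈ F, ν j) ^ α)
  have hEM : (∑ i ∈ E, μ i) ^ α ≤ M := le_max_left _ _
  have hFM : (∑ j ∈ F, ν j) ^ α ≤ t * M := (inv_mul_le_iff₀ ht).1 (le_max_right _ _)
  rw [div_mul_eq_mul_div, le_div_iff₀' hC]
  calc C * blockNorm μ ν q a E F ≤ C * blockNorm μ ν q b E F + C * blockNorm μ ν q c E F := by
        rw [hbc, ← mul_add]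
        exact mul_le_mul_of_nonneg_left
          (blockNorm_add_le (fun i => (hμ i).le) (fun j => (hν j).le) hq b c E F) hC.le
    _ ≤ Wb * (∑ i ∈ E, μ i) ^ α + Wc * (∑ j ∈ F, ν j) ^ α := add_le_add hb hc
    _ ≤ Wb * M + Wc * (t * M) := by gcongr
    _ = (Wb + t * Wc) * M := by ring

theorem KtPQ_le_two_mul_tripleNormPQ (hμ : ∀ i, 0 < μ i) (hν : ∀ j, 0 < ν j) (ht : 0 < t)
    (hq : 0 < q) (hqp : q < p) (hα : α = 1 / q - 1 / p) (a : Fin m × Fin n → ℝ) :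
    KtPQ m n μ ν p q t a ≤ 2 * tripleNormPQ m n μ ν q α t a := by
  have hp : 0 < p := hq.trans hqp
  have hX := tripleNormPQ_nonneg (q := q) (α := α) (t := t) (fun i => (hμ i).le)
    (fun j => (hν j).le) a
  refine le_of_forall_gt_imp_ge_of_dense fun c hc => ?_
  obtain ⟨A, hA, hA'⟩ := exists_split_of_tripleNormPQ_le hμ hν ht hq hqp hα (Λ := c / 2)
    (a := a) (by linarith) (by linarith)
  have hsplit : a = (fun z => if z ∈ A then a z else 0) + fun z => if z ∈ Aᶜ then a z else 0 := by
    ext z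
    by_cases hz : z ∈ A <;> simp [hz]
  calc KtPQ m n μ ν p q t a ≤ _ :=
        KtPQ_le (fun i => (hμ i).le) (fun j => (hν j).le) hp ht.le hsplit
    _ ≤ c / 2 + t * (c / 2 / t) := by gcongr
    _ = c := by field_simp; ring

end Couple

/-- Theorem 2.5: `C(p,q) |||a|||_{p,q,t} ≤ K_{p,q,t}(a) ≤ 2 |||a|||_{p,q,t}`
with `C(p,q) = (1 - q/p)^{1/q}`, and moreover if `|||a|||_{p,q,t} ≤ 1` there is a
partition `M × N = A ∪ B` with `‖1_A·a‖_{ℓ^{p,∞}_m(ℓ^q_n)} ≤ 1` and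
`‖(1_B·a)ᵀ‖_{ℓ^{p,∞}_n(ℓ^q_m)} ≤ 1/t`. -/
theorem KtPQ_equiv_tripleNormPQ (m n : ℕ) (μ : Fin m → ℝ) (ν : Fin n → ℝ)
    (hμ : ∀ i, 0 < μ i) (hν : ∀ j, 0 < ν j) (t : ℝ) (ht : 0 < t)
    (p q α : ℝ) (hq : 1 ≤ q) (hqp : q < p) (hα : α = 1 / q - 1 / p)
    (a : Fin m × Fin n → ℝ) :
    ((1 - q / p) ^ (1 / q) * tripleNormPQ m n μ ν q α t a ≤ KtPQ m n μ ν p q t a ∧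
      KtPQ m n μ ν p q t a ≤ 2 * tripleNormPQ m n μ ν q α t a) ∧
    (tripleNormPQ m n μ ν q α t a ≤ 1 →
      ∃ A B : Finset (Fin m × Fin n), Disjoint A B ∧ A ∪ B = Finset.univ ∧
        mixedNorm m n μ ν p q (fun z => if z ∈ A then a z else 0) ≤ 1 ∧
        mixedNorm n m ν μ p q (fun z => if (z.2, z.1) ∈ B then a (z.2, z.1) else 0) ≤ 1 / t) := by
  have hq₀ : 0 < q := zero_lt_one.trans_le hq
  refine ⟨⟨rpow_mul_tripleNormPQ_le_KtPQ hμ hν ht hq hqp hα a,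
    KtPQ_le_two_mul_tripleNormPQ hμ hν ht hq₀ hqp hα a⟩, fun h => ?_⟩
  obtain ⟨A, hA, hA'⟩ := exists_split_of_tripleNormPQ_le hμ hν ht hq₀ hqp hα zero_le_one h
  exact ⟨A, Aᶜ, disjoint_compl_right, union_compl A, hA, hA'⟩
end

section
/- Let m ∈ ℕ, let M = N = Fin m each with all weights equal to 1, and let t ≥ 1. For any matrix a : M × N → ℝ with ⦀a⦀_t ≤ 1, where ⦀a⦀_t = sup { |E|⁻¹ ∑_{(i,j)∈E×F} |a(i,j)| : E ⊆ M, F ⊆ N nonempty, t⁻¹|F| ≤ |E| }, there is a partition M × N = A ∪ B, A ∩ B = ∅, such that max_i ∑_{j:(i,j)∈A} |a(i,j)| ≤ 1 and max_j ∑_{i:(i,j)∈B} |a(i,j)| ≤ 1/⌊t⌋. Consequently K_t(a) ≤ (1 + t/⌊t⌋) ⦀a⦀_t < 3 ⦀a⦀_t, where K_t is the K_t-functional of the couple (ℓ^∞_m(ℓ^1_m), ℓ^∞_m(ℓ^1_m)^⊤). -/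
/-! Let `n = ⌊t⌋`. If `⦀a⦀_t ≤ v`, every nonempty block `E × F` has a column whose part in `E`
weighs at most `v / n` or a row whose part in `F` weighs at most `v`: otherwise the block itself
(if `|F| ≤ n|E|`) or `E` times any `n|E|` of its columns would carry more than `v|E|`.
Assigning such a column to `B`, or such a row to `A`, and recursing on the smaller block yields
the partition. Splitting `a = 1_A a + 1_B a` then gives `K_t(a) ≤ v + t v / n`, and
`t < n + 1 ≤ 2n` keeps the constant below `3`. -/

open Finset

/-- The Varopoulos norm `⦀a⦀_t` on `Fin m × Fin m` with counting measure:
supremum over nonempty `E, F` with `t⁻¹|F| ≤ |E|` of `|E|⁻¹ ∑_{E×F} |a|`. -/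
noncomputable def varNorm (m : ℕ) (t : ℝ) (a : Fin m × Fin m → ℝ) : ℝ :=
  sSup {x : ℝ | ∃ E F : Finset (Fin m), E.Nonempty ∧ F.Nonempty ∧
    t⁻¹ * (F.card : ℝ) ≤ (E.card : ℝ) ∧
    x = ((E.card : ℝ))⁻¹ * ∑ i ∈ E, ∑ j ∈ F, |a (i, j)|}

/-- The `K_t`-functional of the couple `(ℓ^∞_m(ℓ^1_m), ℓ^∞_m(ℓ^1_m)ᵀ)`
with counting measure. -/
noncomputable def KtCount (m : ℕ) (t : ℝ) (a : Fin m × Fin m → ℝ) : ℝ :=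
  sInf {x : ℝ | ∃ b c : Fin m × Fin m → ℝ, a = b + c ∧
    x = (⨆ i : Fin m, ∑ j : Fin m, |b (i, j)|) +
      t * ⨆ j : Fin m, ∑ i : Fin m, |c (i, j)|}

section

variable {ι κ : Type*}

/-- `⦀w⦀_n ≤ v` for an integer `n`, with the average cleared of its denominator. -/
def VaropoulosBound (w : ι × κ → ℝ) (n : ℕ) (v : ℝ) : Prop :=
  ∀ (E : Finset ι) (F : Finset κ), E.Nonempty → F.Nonempty → #F ≤ n * #E →
    ∑ i ∈ E, ∑ j ∈ F, w (i, j) ≤ v * #E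

variable {w : ι × κ → ℝ} {n : ℕ} {v : ℝ}

theorem VaropoulosBound.exists_light_col_or_row (h : VaropoulosBound w n v) (hn : 1 ≤ n)
    {E : Finset ι} {F : Finset κ} (hE : E.Nonempty) (hF : F.Nonempty) :
    (∃ j ∈ F, ∑ i ∈ E, w (i, j) ≤ v / n) ∨ ∃ i ∈ E, ∑ j ∈ F, w (i, j) ≤ v := by
  by_contra! ⟨hcol, hrow⟩
  by_cases hFE : #F ≤ n * #E
  · have : v * #E < ∑ i ∈ E, ∑ j ∈ F, w (i, j) := by
      simpa [mul_comm] using sum_lt_sum_of_nonempty hE hrow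
    exact (h E F hE hF hFE).not_gt this
  · obtain ⟨F', hF'F, hF'card⟩ := exists_subset_card_eq (not_le.1 hFE).le
    have hF' : F'.Nonempty := by
      rw [← card_pos, hF'card]
      exact Nat.mul_pos hn hE.card_pos
    have : v * #E < ∑ i ∈ E, ∑ j ∈ F', w (i, j) := by
      rw [sum_comm]
      calc v * #E = ∑ _j ∈ F', v / n := by
            rw [sum_const, nsmul_eq_mul, hF'card]
            push_cast
            field_simp
        _ < _ := sum_lt_sum_of_nonempty hF' fun j hj => hcol j (hF'F hj)
    exact (h E F' hE hF' hF'card.le).not_gt this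

variable [Fintype ι] [Fintype κ] [DecidableEq ι] [DecidableEq κ]

theorem VaropoulosBound.exists_split (h : VaropoulosBound w n v) (hn : 1 ≤ n) (hv : 0 ≤ v)
    (E : Finset ι) (F : Finset κ) :
    ∃ A ⊆ E ×ˢ F, (∀ i, ∑ j with (i, j) ∈ A, w (i, j) ≤ v) ∧
      ∀ j, ∑ i with (i, j) ∈ E ×ˢ F \ A, w (i, j) ≤ v / n := by
  rcases E.eq_empty_or_nonempty with rfl | hE
  · exact ⟨∅, empty_subset _, fun _ => by simpa using hv,
      fun _ => by simpa using div_nonneg hv n.cast_nonneg⟩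
  rcases F.eq_empty_or_nonempty with rfl | hF
  · exact ⟨∅, empty_subset _, fun _ => by simpa using hv,
      fun _ => by simpa using div_nonneg hv n.cast_nonneg⟩
  rcases h.exists_light_col_or_row hn hE hF with ⟨j₀, hj₀F, hj₀⟩ | ⟨i₀, hi₀E, hi₀⟩
  · obtain ⟨A, hA, hrow, hcol⟩ := h.exists_split hn hv E (F.erase j₀)
    refine ⟨A, hA.trans (product_subset_product_right (erase_subset _ _)), hrow, fun j => ?_⟩
    by_cases hj : j = j₀
    · subst hj
      have : ∀ i, (i, j) ∉ A := fun i hi => by simpa using (mem_product.1 (hA hi)).2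
      simpa [hj₀F, this] using hj₀
    · simpa [hj] using hcol j
  · obtain ⟨A, hA, hrow, hcol⟩ := h.exists_split hn hv (E.erase i₀) F
    have hsub : A ∪ {i₀} ×ˢ F ⊆ E ×ˢ F :=
      union_subset (hA.trans (product_subset_product_left (erase_subset _ _)))
        (product_subset_product_left (singleton_subset_iff.2 hi₀E))
    refine ⟨A ∪ {i₀} ×ˢ F, hsub, fun i => ?_, fun j => ?_⟩
    · by_cases hi : i = i₀
      · subst hi
        have : ∀ j, (i, j) ∉ A := fun j hj => by simpa using (mem_product.1 (hA hj)).1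
        simpa [this] using hi₀
      · simpa [Ne.symm hi] using hrow i
    · convert hcol j using 2
      ext i
      simp only [mem_sdiff, mem_product, mem_union, mem_singleton, mem_erase]
      grind
termination_by #E + #F
decreasing_by
  · have := card_erase_lt_of_mem hj₀F; omega
  · have := card_erase_lt_of_mem hi₀E; omega

end

section

variable {m : ℕ} {t : ℝ} {a : Fin m × Fin m → ℝ}

theorem le_varNorm {E F : Finset (Fin m)} (hE : E.Nonempty) (hF : F.Nonempty)
    (hEF : t⁻¹ * #F ≤ #E) :
    (#E : ℝ)⁻¹ * ∑ i ∈ E, ∑ j ∈ F, |a (i, j)| ≤ varNorm m t a := by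
  refine le_csSup ⟨∑ p, |a p|, ?_⟩ ⟨E, F, hE, hF, hEF, rfl⟩
  rintro _ ⟨E, F, hE, -, -, rfl⟩
  have hS : 0 ≤ ∑ i ∈ E, ∑ j ∈ F, |a (i, j)| := by positivity
  calc (#E : ℝ)⁻¹ * ∑ i ∈ E, ∑ j ∈ F, |a (i, j)| ≤ ∑ i ∈ E, ∑ j ∈ F, |a (i, j)| :=
        mul_le_of_le_one_left hS (inv_le_one_of_one_le₀ (by exact_mod_cast hE.card_pos))
    _ = ∑ p ∈ E ×ˢ F, |a p| := (sum_product E F fun p => |a p|).symm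
    _ ≤ ∑ p, |a p| := sum_le_univ_sum_of_nonneg fun _ => abs_nonneg _

theorem varNorm_nonneg : 0 ≤ varNorm m t a := by
  refine Real.sSup_nonneg ?_
  rintro _ ⟨E, F, -, -, -, rfl⟩
  positivity

theorem varopoulosBound_varNorm (ht : 1 ≤ t) :
    VaropoulosBound (fun p => |a p|) ⌊t⌋₊ (varNorm m t a) := by
  intro E F hE hF hEF
  have hE' : (0 : ℝ) < #E := by exact_mod_cast hE.card_pos
  have hcond : t⁻¹ * #F ≤ #E := by
    rw [inv_mul_le_iff₀ (by linarith)]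
    calc (#F : ℝ) ≤ ⌊t⌋₊ * #E := by exact_mod_cast hEF
      _ ≤ t * #E := by gcongr; exact Nat.floor_le (by linarith)
  have := le_varNorm (a := a) hE hF hcond
  rwa [inv_mul_le_iff₀ hE', mul_comm] at this

theorem KtCount_le_of_split (ht : 0 ≤ t) (A : Finset (Fin m × Fin m)) {r s : ℝ}
    (hr : 0 ≤ r) (hs : 0 ≤ s)
    (hrow : ∀ i, ∑ j, (if (i, j) ∈ A then |a (i, j)| else 0) ≤ r)
    (hcol : ∀ j, ∑ i, (if (i, j) ∈ Aᶜ then |a (i, j)| else 0) ≤ s) :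
    KtCount m t a ≤ r + t * s := by
  set b : Fin m × Fin m → ℝ := fun p => if p ∈ A then a p else 0
  set c : Fin m × Fin m → ℝ := fun p => if p ∈ Aᶜ then a p else 0
  have hbc : a = b + c := by
    funext p
    by_cases hp : p ∈ A <;> simp [b, c, hp]
  have habs (S : Finset (Fin m × Fin m)) (p) :
      |if p ∈ S then a p else 0| = if p ∈ S then |a p| else 0 := by
    split_ifs <;> simp
  have hKt : KtCount m t a ≤ (⨆ i, ∑ j, |b (i, j)|) + t * ⨆ j, ∑ i, |c (i, j)| := by
    refine csInf_le ⟨0, ?_⟩ ⟨b, c, hbc, rfl⟩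
    rintro _ ⟨b, c, -, rfl⟩
    exact add_nonneg (Real.iSup_nonneg fun i => by positivity)
      (mul_nonneg ht (Real.iSup_nonneg fun j => by positivity))
  refine hKt.trans ?_
  gcongr
  · exact Real.iSup_le (fun i => by simpa only [b, habs] using hrow i) hr
  · exact Real.iSup_le (fun j => by simpa only [c, habs] using hcol j) hs

end

theorem one_add_div_floor_lt_three {t : ℝ} (ht : 1 ≤ t) : 1 + t / ⌊t⌋₊ < 3 := by
  have hn : (1 : ℝ) ≤ ⌊t⌋₊ := by exact_mod_cast (Nat.one_le_floor_iff t).2 ht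
  have hlt := Nat.lt_floor_add_one t
  have : t / ⌊t⌋₊ < 2 := by
    rw [div_lt_iff₀ (by linarith)]
    linarith
  linarith

/-- Remark 1.2; discrete Varopoulos lemma: if `t ≥ 1` and
`⦀a⦀_t ≤ 1`, then `M × M` splits into `A ∪ B` with row sums of `1_A·a` at most `1`
and column sums of `1_B·a` at most `1/⌊t⌋`; consequently
`K_t(a) ≤ (1 + t/⌊t⌋) ⦀a⦀_t` where the constant `1 + t/⌊t⌋` is `< 3`. -/
theorem varopoulos_lemma (m : ℕ) (t : ℝ) (ht : 1 ≤ t) (a : Fin m × Fin m → ℝ)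
    (ha : varNorm m t a ≤ 1) :
    (∃ A B : Finset (Fin m × Fin m), Disjoint A B ∧ A ∪ B = Finset.univ ∧
      (∀ i : Fin m, ∑ j : Fin m, (if (i, j) ∈ A then |a (i, j)| else 0) ≤ 1) ∧
      (∀ j : Fin m, ∑ i : Fin m, (if (i, j) ∈ B then |a (i, j)| else 0) ≤
        1 / (Nat.floor t : ℝ))) ∧
    KtCount m t a ≤ (1 + t / (Nat.floor t : ℝ)) * varNorm m t a ∧
    1 + t / (Nat.floor t : ℝ) < 3 := by
  have hv : 0 ≤ varNorm m t a := varNorm_nonneg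
  obtain ⟨A, -, hrow, hcol⟩ := (varopoulosBound_varNorm ht).exists_split
    ((Nat.one_le_floor_iff t).2 ht) hv univ univ
  rw [univ_product_univ, ← compl_eq_univ_sdiff] at hcol
  simp only [sum_filter] at hrow hcol
  refine ⟨⟨A, Aᶜ, disjoint_compl_right, union_compl A, fun i => (hrow i).trans ha,
    fun j => (hcol j).trans (by gcongr)⟩, ?_, one_add_div_floor_lt_three ht⟩
  calc KtCount m t a ≤ varNorm m t a + t * (varNorm m t a / ⌊t⌋₊) :=
        KtCount_le_of_split (by linarith) A hv (by positivity) hrow hcol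
    _ = (1 + t / ⌊t⌋₊) * varNorm m t a := by ring
end

section
/- Fix p > 1 and q ≥ 1. For every n ∈ ℕ there exists an n × n matrix a (namely a(1,j) = j^{-1/p} for j = 1,…,n and a(i,j) = 0 for i ≥ 2, on Fin n × Fin n with counting measure) such that |||a|||_{p,1} ≤ p* (where 1/p + 1/p* = 1 and |||a|||_{p,1} = sup_{E,F} (|E|^{1/p*} ∨ |F|^{1/p*})⁻¹ ∑_{(i,j)∈E×F} |a(i,j)|), while the K₁-functional of a for the couple (ℓ^{p,q}_n(ℓ^1_n), ℓ^{p,q}_n(ℓ^1_n)^⊤) is at least c (log n)^{1/q} for some constant c > 0 independent of n. -/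
/-!
The matrix has a single nonzero row `v j = (j + 1) ^ (-1 / p)`, which is its own nonincreasing
rearrangement, so `‖v‖_{p,q} ^ q` is the harmonic number `H_n ≥ log n`. The bound on
`|||a|||_{p,1}` is `∑_{j < m} (j + 1) ^ (-1 / p) ≤ p* m ^ (1 / p*)`, from Bernoulli's inequality.

For a splitting `a = b + c`, the first row satisfies `|v j| ≤ |b (0, j)| + ∑ i, |c (i, j)|`.
The quasi-triangle inequality of `ℓ^{p,q}`, which comes from `(f + g)*(i + j) ≤ f*(i) + g*(j)`,
together with the embedding `ℓ¹ ⊆ ℓ^{p,q}` (valid for `p > 1` since `g*(k) ≤ ‖g‖₁ / (k + 1)`),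
bounds `‖v‖_{p,q}` by a multiple of `∑ j, |b (0, j)| + ‖∑ i, |c (i, ·)|‖_{p,q}`, and the first term
is at most the `ℓ^{p,q}` norm of the row sums of `b`.
-/

open Finset

/-- The nonincreasing rearrangement of `|g|` for `g : Fin n → ℝ`. -/
noncomputable def decRearr {n : ℕ} (g : Fin n → ℝ) : Fin n → ℝ :=
  fun k => |g (Tuple.sort (fun i => |g i|) k.rev)|

/-- The Lorentz `ℓ^{p,q}` quasinorm on `Fin n` with counting measure:
`(∑_{k=1}^n (k^{1/p} g*(k))^q / k)^{1/q}`. -/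
noncomputable def lorentzNorm {n : ℕ} (p q : ℝ) (g : Fin n → ℝ) : ℝ :=
  (∑ k : Fin n, (((k : ℕ) + 1 : ℝ) ^ (1 / p) * decRearr g k) ^ q / ((k : ℕ) + 1 : ℝ)) ^ (1 / q)

/-- The `K₁`-functional of the couple `(ℓ^{p,q}_n(ℓ^1_n), ℓ^{p,q}_n(ℓ^1_n)ᵀ)`. -/
noncomputable def K1PQ (n : ℕ) (p q : ℝ) (a : Fin n × Fin n → ℝ) : ℝ :=
  sInf {x : ℝ | ∃ b c : Fin n × Fin n → ℝ, a = b + c ∧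
    x = lorentzNorm p q (fun i => ∑ j : Fin n, |b (i, j)|) +
      lorentzNorm p q (fun j : Fin n => ∑ i : Fin n, |c (i, j)|)}

section Rearrangement

variable {n : ℕ}

lemma decRearr_eq_comp (g : Fin n → ℝ) :
    decRearr g = (fun i => |g i|) ∘ (Fin.revPerm.trans (Tuple.sort fun i => |g i|)) :=
  rfl

lemma decRearr_nonneg (g : Fin n → ℝ) (k : Fin n) : 0 ≤ decRearr g k :=
  abs_nonneg _

lemma decRearr_antitone (g : Fin n → ℝ) : Antitone (decRearr g) :=
  fun _ _ h => Tuple.monotone_sort (fun i => |g i|) (Fin.rev_le_rev.mpr h)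

lemma card_filter_decRearr (g : Fin n → ℝ) (P : ℝ → Prop) [DecidablePred P] :
    #{k | P (decRearr g k)} = #{i | P |g i|} :=
  card_equiv (Fin.revPerm.trans (Tuple.sort fun i => |g i|)) (by simp [decRearr_eq_comp])

lemma card_filter_decRearr_lt_abs_le (g : Fin n → ℝ) (k : Fin n) :
    #{i | decRearr g k < |g i|} ≤ k := by
  rw [← card_filter_decRearr, ← Fin.card_Iio k]
  refine card_le_card fun l hl => mem_Iio.mpr ?_
  by_contra! hkl
  exact (decRearr_antitone g hkl).not_gt (mem_filter.mp hl).2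

lemma lt_card_filter_decRearr_le_abs (g : Fin n → ℝ) (k : Fin n) :
    (k : ℕ) < #{i | decRearr g k ≤ |g i|} := by
  rw [← card_filter_decRearr, Nat.lt_iff_add_one_le, ← Fin.card_Iic k]
  exact card_le_card fun l hl => mem_filter.mpr ⟨mem_univ l, decRearr_antitone g (mem_Iic.mp hl)⟩

lemma abs_le_decRearr_zero (g : Fin n → ℝ) (i : Fin n) : |g i| ≤ decRearr g ⟨0, i.pos⟩ := by
  obtain ⟨k, hk⟩ : ∃ k, |g i| ≤ decRearr g k := by
    have : 0 < #{k | |g i| ≤ decRearr g k} := by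
      rw [card_filter_decRearr]
      exact card_pos.mpr ⟨i, mem_filter.mpr ⟨mem_univ i, le_rfl⟩⟩
    obtain ⟨k, hk⟩ := card_pos.mp this
    exact ⟨k, (mem_filter.mp hk).2⟩
  exact hk.trans (decRearr_antitone g (Nat.zero_le k))

lemma decRearr_le_add {f g h : Fin n → ℝ} (hfgh : ∀ x, |h x| ≤ |f x| + |g x|) {i j k : Fin n}
    (hk : (i : ℕ) + j ≤ k) : decRearr h k ≤ decRearr f i + decRearr g j := by
  by_contra! hlt
  have hsub : ({x | decRearr h k ≤ |h x|} : Finset (Fin n)) ⊆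
      ({x | decRearr f i < |f x|} : Finset (Fin n)) ∪ ({x | decRearr g j < |g x|} : Finset _) := by
    intro x hx
    simp only [mem_union, mem_filter, mem_univ, true_and] at hx ⊢
    by_contra! hfg
    linarith [hfgh x]
  have := (card_le_card hsub).trans (card_union_le _ _)
  have := lt_card_filter_decRearr_le_abs h k
  have := card_filter_decRearr_lt_abs_le f i
  have := card_filter_decRearr_lt_abs_le g j
  omega

lemma succ_mul_decRearr_le_sum (g : Fin n → ℝ) (k : Fin n) :
    ((k : ℝ) + 1) * decRearr g k ≤ ∑ i, |g i| := by
  calc ((k : ℝ) + 1) * decRearr g k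
      ≤ #{i | decRearr g k ≤ |g i|} • decRearr g k := by
        rw [nsmul_eq_mul]
        gcongr
        · exact decRearr_nonneg g k
        · exact_mod_cast lt_card_filter_decRearr_le_abs g k
    _ ≤ ∑ i ∈ {i | decRearr g k ≤ |g i|}, |g i| :=
        card_nsmul_le_sum _ _ _ fun i hi => (mem_filter.mp hi).2
    _ ≤ ∑ i, |g i| := sum_le_univ_sum_of_nonneg fun i => abs_nonneg _

lemma decRearr_of_antitone {g : Fin n → ℝ} (hg : Antitone fun i => |g i|) (k : Fin n) :
    decRearr g k = |g k| := by
  have hsort := (Tuple.comp_sort_eq_comp_iff_monotone (f := fun i => |g i|) (σ := Fin.revPerm)).mpr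
    fun a b hab => hg (Fin.rev_le_rev.mpr hab)
  exact (congrFun hsort k.rev).symm.trans (by simp)

end Rearrangement

lemma Real.rpow_add_le_two_rpow_mul {x y q : ℝ} (hx : 0 ≤ x) (hy : 0 ≤ y) (hq : 1 ≤ q) :
    (x + y) ^ q ≤ 2 ^ (q - 1) * (x ^ q + y ^ q) := by
  lift x to NNReal using hx
  lift y to NNReal using hy
  exact_mod_cast NNReal.rpow_add_le_mul_rpow_add_rpow x y hq

lemma Fin.sum_comp_div_two_le {n : ℕ} (F : Fin n → ℝ) (hF : ∀ k, 0 ≤ F k) :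
    ∑ k : Fin n, F ⟨k / 2, (Nat.div_le_self _ _).trans_lt k.isLt⟩ ≤ 2 * ∑ k, F k := by
  let ι : Fin n → Fin n × Fin 2 := fun k => (⟨k / 2, (Nat.div_le_self _ _).trans_lt k.isLt⟩,
    ⟨k % 2, Nat.mod_lt _ two_pos⟩)
  have hι : Function.Injective ι := fun k l hkl => by
    simp only [ι, Prod.mk.injEq, Fin.mk.injEq] at hkl
    omega
  calc ∑ k : Fin n, F ⟨k / 2, _⟩ = ∑ z ∈ univ.image ι, F z.1 :=
        (sum_image (f := fun z => F z.1) fun k _ l _ hkl => hι hkl).symm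
    _ ≤ ∑ z : Fin n × Fin 2, F z.1 := sum_le_univ_sum_of_nonneg fun z => hF z.1
    _ = 2 * ∑ k, F k := by rw [Fintype.sum_prod_type, mul_sum]; simp [mul_comm]

section LorentzSum

variable {n : ℕ} {p q : ℝ}

noncomputable def lorentzWeight (p q : ℝ) (k : ℕ) : ℝ := ((k : ℝ) + 1) ^ (q / p - 1)

noncomputable def lorentzSum (p q : ℝ) (g : Fin n → ℝ) : ℝ :=
  ∑ k : Fin n, lorentzWeight p q k * decRearr g k ^ q

lemma lorentzWeight_pos (p q : ℝ) (k : ℕ) : 0 < lorentzWeight p q k := by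
  unfold lorentzWeight; positivity

lemma lorentzWeight_zero (p q : ℝ) : lorentzWeight p q 0 = 1 := by
  simp [lorentzWeight]

lemma lorentzWeight_le_two_rpow_mul_div_two (hp : 0 < p) (hq : 0 ≤ q) (k : ℕ) :
    lorentzWeight p q k ≤ 2 ^ (q / p) * lorentzWeight p q (k / 2) := by
  have hk : ((k : ℝ) + 1) ≤ 2 * ((k / 2 : ℕ) + 1) := by
    have : k + 1 ≤ 2 * (k / 2 + 1) := by omega
    exact_mod_cast this
  have hk' : ((k / 2 : ℕ) : ℝ) + 1 ≤ (k : ℝ) + 1 := by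
    have : k / 2 ≤ k := Nat.div_le_self _ _
    gcongr
  simp only [lorentzWeight, Real.rpow_sub_one (by positivity : (k : ℝ) + 1 ≠ 0),
    Real.rpow_sub_one (by positivity : ((k / 2 : ℕ) : ℝ) + 1 ≠ 0), mul_div_assoc']
  rw [← Real.mul_rpow (by norm_num) (by positivity)]
  gcongr

lemma lorentzSum_nonneg (p q : ℝ) (g : Fin n → ℝ) : 0 ≤ lorentzSum p q g :=
  sum_nonneg fun k _ => mul_nonneg (lorentzWeight_pos p q k).le
    (Real.rpow_nonneg (decRearr_nonneg g k) q)

lemma lorentzNorm_eq_lorentzSum_rpow (p q : ℝ) (g : Fin n → ℝ) :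
    lorentzNorm p q g = lorentzSum p q g ^ (1 / q) := by
  unfold lorentzNorm lorentzSum lorentzWeight
  congr 1
  refine sum_congr rfl fun k _ => ?_
  have hk : (0 : ℝ) < (k : ℕ) + 1 := by positivity
  rw [Real.mul_rpow (Real.rpow_nonneg hk.le _) (decRearr_nonneg g k), ← Real.rpow_mul hk.le,
    Real.rpow_sub_one hk.ne']
  ring_nf

lemma lorentzNorm_nonneg (p q : ℝ) (g : Fin n → ℝ) : 0 ≤ lorentzNorm p q g := by
  rw [lorentzNorm_eq_lorentzSum_rpow]
  exact Real.rpow_nonneg (lorentzSum_nonneg p q g) _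

lemma abs_le_lorentzNorm (hq : 0 < q) (g : Fin n → ℝ) (i : Fin n) :
    |g i| ≤ lorentzNorm p q g := by
  have hterm : decRearr g ⟨0, i.pos⟩ ^ q ≤ lorentzSum p q g := by
    unfold lorentzSum
    simpa [lorentzWeight_zero] using single_le_sum (f := fun k : Fin n =>
      lorentzWeight p q k * decRearr g k ^ q) (fun k _ => mul_nonneg (lorentzWeight_pos p q k).le
        (Real.rpow_nonneg (decRearr_nonneg g k) q)) (mem_univ ⟨0, i.pos⟩)
  rw [lorentzNorm_eq_lorentzSum_rpow, one_div,
    Real.le_rpow_inv_iff_of_pos (abs_nonneg _) (lorentzSum_nonneg p q g) hq]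
  exact (Real.rpow_le_rpow (abs_nonneg _) (abs_le_decRearr_zero g i) hq.le).trans hterm

end LorentzSum

section QuasiTriangle

variable {n : ℕ} {p q : ℝ}

lemma lorentzSum_le_of_abs_le_add (hp : 0 < p) (hq : 1 ≤ q) {f g h : Fin n → ℝ}
    (hfgh : ∀ x, |h x| ≤ |f x| + |g x|) :
    lorentzSum p q h ≤ 2 ^ (q / p + q) * (lorentzSum p q f + lorentzSum p q g) := by
  let half : Fin n → Fin n := fun k => ⟨k / 2, (Nat.div_le_self _ _).trans_lt k.isLt⟩
  let T : Fin n → ℝ := fun m => lorentzWeight p q m * (decRearr f m ^ q + decRearr g m ^ q)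
  have hT : ∀ m, 0 ≤ T m := fun m => mul_nonneg (lorentzWeight_pos p q m).le
    (add_nonneg (Real.rpow_nonneg (decRearr_nonneg f m) q)
      (Real.rpow_nonneg (decRearr_nonneg g m) q))
  have hterm : ∀ k : Fin n,
      lorentzWeight p q k * decRearr h k ^ q ≤ 2 ^ (q / p + q - 1) * T (half k) := by
    intro k
    have hrearr : decRearr h k ≤ decRearr f (half k) + decRearr g (half k) :=
      decRearr_le_add hfgh (by simp only [half]; omega)
    calc lorentzWeight p q k * decRearr h k ^ q
        ≤ (2 ^ (q / p) * lorentzWeight p q (k / 2)) *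
            (2 ^ (q - 1) * (decRearr f (half k) ^ q + decRearr g (half k) ^ q)) := by
          refine mul_le_mul (lorentzWeight_le_two_rpow_mul_div_two hp (by linarith) k) ?_
            (Real.rpow_nonneg (decRearr_nonneg h k) q)
            (mul_nonneg (by positivity) (lorentzWeight_pos p q _).le)
          exact (Real.rpow_le_rpow (decRearr_nonneg h k) hrearr (by linarith)).trans
            (Real.rpow_add_le_two_rpow_mul (decRearr_nonneg _ _) (decRearr_nonneg _ _) hq)
      _ = 2 ^ (q / p + q - 1) * T (half k) := by
          rw [add_sub_assoc, Real.rpow_add two_pos]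
          ring
  calc lorentzSum p q h ≤ ∑ k, 2 ^ (q / p + q - 1) * T (half k) := sum_le_sum fun k _ => hterm k
    _ ≤ 2 ^ (q / p + q - 1) * (2 * ∑ m, T m) := by
        rw [← mul_sum]
        exact mul_le_mul_of_nonneg_left (Fin.sum_comp_div_two_le T hT) (by positivity)
    _ = 2 ^ (q / p + q) * (lorentzSum p q f + lorentzSum p q g) := by
        rw [Real.rpow_sub_one two_ne_zero, lorentzSum, lorentzSum, ← sum_add_distrib]
        simp only [T, mul_add]
        field_simp

lemma lorentzNorm_le_of_abs_le_add (hp : 0 < p) (hq : 1 ≤ q) {f g h : Fin n → ℝ}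
    (hfgh : ∀ x, |h x| ≤ |f x| + |g x|) :
    lorentzNorm p q h ≤ 2 ^ (1 / p + 1) * (lorentzNorm p q f + lorentzNorm p q g) := by
  have hf := lorentzSum_nonneg p q f
  have hg := lorentzSum_nonneg p q g
  simp only [lorentzNorm_eq_lorentzSum_rpow]
  calc lorentzSum p q h ^ (1 / q)
      ≤ (2 ^ (q / p + q) * (lorentzSum p q f + lorentzSum p q g)) ^ (1 / q) :=
        Real.rpow_le_rpow (lorentzSum_nonneg p q h) (lorentzSum_le_of_abs_le_add hp hq hfgh)
          (by positivity)
    _ = 2 ^ (1 / p + 1) * (lorentzSum p q f + lorentzSum p q g) ^ (1 / q) := by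
        rw [Real.mul_rpow (by positivity) (by positivity), ← Real.rpow_mul zero_le_two]
        congr 2
        field_simp
    _ ≤ 2 ^ (1 / p + 1) * (lorentzSum p q f ^ (1 / q) + lorentzSum p q g ^ (1 / q)) := by
        gcongr
        exact Real.rpow_add_le_add_rpow hf hg (by positivity) ((div_le_one (by linarith)).mpr hq)

end QuasiTriangle

lemma summable_nat_add_one_rpow {s : ℝ} (hs : s < -1) :
    Summable fun k : ℕ => ((k : ℝ) + 1) ^ s := by
  simpa using (summable_nat_add_iff 1).mpr (Real.summable_nat_rpow.mpr hs)

section LorentzL1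

variable {n : ℕ} {p q : ℝ}

lemma lorentzSum_le_tsum_mul_sum_abs_rpow (hp : 1 < p) (hq : 0 < q) (g : Fin n → ℝ) :
    lorentzSum p q g ≤ (∑' k : ℕ, ((k : ℝ) + 1) ^ (q / p - 1 - q)) * (∑ i, |g i|) ^ q := by
  set S := ∑ i, |g i|
  have hS : 0 ≤ S := sum_nonneg fun i _ => abs_nonneg _
  have hexp : q / p - 1 - q < -1 := by
    have : q / p < q := div_lt_self hq hp
    linarith
  have hterm : ∀ k : Fin n, lorentzWeight p q k * decRearr g k ^ q ≤
      S ^ q * ((k : ℝ) + 1) ^ (q / p - 1 - q) := by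
    intro k
    have hk : (0 : ℝ) < (k : ℕ) + 1 := by positivity
    have hdec : decRearr g k ≤ S / ((k : ℕ) + 1) :=
      (le_div_iff₀' hk).mpr (succ_mul_decRearr_le_sum g k)
    calc lorentzWeight p q k * decRearr g k ^ q
        ≤ lorentzWeight p q k * (S / ((k : ℕ) + 1)) ^ q := by
          gcongr
          · exact (lorentzWeight_pos p q k).le
          · exact decRearr_nonneg g k
      _ = S ^ q * ((k : ℝ) + 1) ^ (q / p - 1 - q) := by
          rw [lorentzWeight, Real.div_rpow hS hk.le, Real.rpow_sub hk (q / p - 1)]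
          ring
  calc lorentzSum p q g ≤ ∑ k : Fin n, S ^ q * ((k : ℝ) + 1) ^ (q / p - 1 - q) :=
        sum_le_sum fun k _ => hterm k
    _ = S ^ q * ∑ k ∈ range n, ((k : ℝ) + 1) ^ (q / p - 1 - q) := by
        rw [← mul_sum, Fin.sum_univ_eq_sum_range (fun k => ((k : ℝ) + 1) ^ (q / p - 1 - q))]
    _ ≤ S ^ q * ∑' k : ℕ, ((k : ℝ) + 1) ^ (q / p - 1 - q) := by
        gcongr
        exact (summable_nat_add_one_rpow hexp).sum_le_tsum _ fun k _ => by positivity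
    _ = _ := mul_comm _ _

lemma lorentzNorm_le_mul_sum_abs (hp : 1 < p) (hq : 0 < q) (g : Fin n → ℝ) :
    lorentzNorm p q g ≤
      (∑' k : ℕ, ((k : ℝ) + 1) ^ (q / p - 1 - q)) ^ (1 / q) * ∑ i, |g i| := by
  have hS : 0 ≤ ∑ i, |g i| := sum_nonneg fun i _ => abs_nonneg _
  have hZ : 0 ≤ ∑' k : ℕ, ((k : ℝ) + 1) ^ (q / p - 1 - q) := tsum_nonneg fun k => by positivity
  rw [lorentzNorm_eq_lorentzSum_rpow]
  calc lorentzSum p q g ^ (1 / q)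
      ≤ ((∑' k : ℕ, ((k : ℝ) + 1) ^ (q / p - 1 - q)) * (∑ i, |g i|) ^ q) ^ (1 / q) :=
        Real.rpow_le_rpow (lorentzSum_nonneg p q g) (lorentzSum_le_tsum_mul_sum_abs_rpow hp hq g)
          (by positivity)
    _ = _ := by
        rw [Real.mul_rpow hZ (by positivity), one_div, Real.rpow_rpow_inv hS hq.ne']

end LorentzL1

lemma antitone_nat_add_one_rpow {r : ℝ} (hr : r ≤ 0) : Antitone fun m : ℕ => ((m : ℝ) + 1) ^ r :=
  fun _ _ hab => Real.rpow_le_rpow_of_nonpos (by positivity) (by gcongr) hr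

noncomputable def powerRow (p : ℝ) (n : ℕ) : Fin n → ℝ := fun j => ((j : ℕ) + 1 : ℝ) ^ (-(1 / p))

lemma decRearr_powerRow {p : ℝ} (hp : 0 < p) {n : ℕ} (k : Fin n) :
    decRearr (powerRow p n) k = powerRow p n k := by
  have habs : ∀ j, |powerRow p n j| = powerRow p n j := fun j => abs_of_pos (by
    unfold powerRow; positivity)
  rw [decRearr_of_antitone _ k, habs]
  simp only [habs]
  exact fun i j hij => antitone_nat_add_one_rpow (neg_nonpos.mpr (by positivity)) hij

lemma lorentzSum_powerRow {p : ℝ} (hp : 0 < p) (q : ℝ) (n : ℕ) :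
    lorentzSum p q (powerRow p n) = harmonic n := by
  rw [harmonic, Rat.cast_sum, ← Fin.sum_univ_eq_sum_range, lorentzSum]
  refine sum_congr rfl fun k _ => ?_
  have hk : (0 : ℝ) < (k : ℕ) + 1 := by positivity
  rw [decRearr_powerRow hp, powerRow, lorentzWeight, ← Real.rpow_mul hk.le, ← Real.rpow_add hk]
  push_cast
  rw [← Real.rpow_neg_one]
  congr 1
  field_simp
  ring

lemma log_rpow_le_lorentzNorm_powerRow {p q : ℝ} (hp : 0 < p) (hq : 0 < q) (n : ℕ) :
    Real.log n ^ (1 / q) ≤ lorentzNorm p q (powerRow p n) := by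
  rw [lorentzNorm_eq_lorentzSum_rpow, lorentzSum_powerRow hp]
  gcongr
  simpa using log_le_harmonic_floor (n : ℝ) n.cast_nonneg

section KFunctional

variable {n : ℕ} {p q : ℝ}

lemma lorentzNorm_row_le_of_eq_add (hp : 0 < p) (hq : 1 ≤ q) {Z : ℝ} (hZ : 0 ≤ Z)
    (hl1 : ∀ g : Fin n → ℝ, lorentzNorm p q g ≤ Z * ∑ i, |g i|) {a b c : Fin n × Fin n → ℝ}
    (habc : a = b + c) (i : Fin n) :
    lorentzNorm p q (fun j => a (i, j)) ≤ 2 ^ (1 / p + 1) * (Z + 1) *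
      (lorentzNorm p q (fun i => ∑ j, |b (i, j)|) +
        lorentzNorm p q (fun j => ∑ i, |c (i, j)|)) := by
  set B := lorentzNorm p q (fun i => ∑ j, |b (i, j)|)
  set Γ := lorentzNorm p q (fun j => ∑ i, |c (i, j)|)
  have hΓ : 0 ≤ Γ := lorentzNorm_nonneg p q _
  have hentry : ∀ j, |a (i, j)| ≤ |b (i, j)| + |(fun j => ∑ i, |c (i, j)|) j| := fun j => by
    rw [habc, Pi.add_apply]
    beta_reduce
    rw [abs_of_nonneg (sum_nonneg fun i' _ => abs_nonneg (c (i', j)))]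
    exact (abs_add_le _ _).trans (add_le_add_right
      (single_le_sum (fun i' _ => abs_nonneg (c (i', j))) (mem_univ i)) _)
  have hrow : lorentzNorm p q (fun j => b (i, j)) ≤ Z * B := by
    refine (hl1 _).trans (mul_le_mul_of_nonneg_left ?_ hZ)
    simpa [abs_of_nonneg (sum_nonneg fun j _ => abs_nonneg (b (i, j)))] using
      abs_le_lorentzNorm (p := p) (by linarith) (fun i => ∑ j, |b (i, j)|) i
  calc lorentzNorm p q (fun j => a (i, j))
      ≤ 2 ^ (1 / p + 1) * (lorentzNorm p q (fun j => b (i, j)) + Γ) :=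
        lorentzNorm_le_of_abs_le_add hp hq hentry
    _ ≤ 2 ^ (1 / p + 1) * ((Z + 1) * (B + Γ)) := by
        gcongr
        nlinarith [mul_nonneg hZ hΓ, lorentzNorm_nonneg p q (fun i => ∑ j, |b (i, j)|)]
    _ = _ := by ring

lemma exists_lorentzNorm_row_le_mul_K1PQ (hp : 1 < p) (hq : 1 ≤ q) :
    ∃ C, 0 < C ∧ ∀ (n : ℕ) (a : Fin n × Fin n → ℝ) (i : Fin n),
      lorentzNorm p q (fun j => a (i, j)) ≤ C * K1PQ n p q a := by
  set Z := (∑' k : ℕ, ((k : ℝ) + 1) ^ (q / p - 1 - q)) ^ (1 / q)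
  have hZ : 0 ≤ Z := Real.rpow_nonneg (tsum_nonneg fun k => by positivity) _
  have hC : 0 < 2 ^ (1 / p + 1) * (Z + 1) := by positivity
  refine ⟨_, hC, fun n a i => ?_⟩
  have hnonempty : ∃ x, ∃ b c : Fin n × Fin n → ℝ, a = b + c ∧
      x = lorentzNorm p q (fun i => ∑ j, |b (i, j)|) +
        lorentzNorm p q (fun j => ∑ i, |c (i, j)|) :=
    ⟨_, a, 0, (add_zero a).symm, rfl⟩
  rw [← div_le_iff₀' hC, K1PQ]
  refine le_csInf hnonempty ?_
  rintro x ⟨b, c, habc, rfl⟩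
  rw [div_le_iff₀' hC]
  exact lorentzNorm_row_le_of_eq_add (by linarith) hq hZ
    (lorentzNorm_le_mul_sum_abs hp (by linarith)) habc i

end KFunctional

lemma sum_le_sum_range_card_of_antitone {f : ℕ → ℝ} (hf : Antitone f) {n : ℕ}
    (s : Finset (Fin n)) : ∑ j ∈ s, f j ≤ ∑ m ∈ range #s, f m := by
  induction s using Finset.induction_on_max with
  | empty => simp
  | insert a s hlt ih =>
    have ha : a ∉ s := fun h => lt_irrefl a (hlt a h)
    have hcard : #s ≤ a := by
      rw [← Fin.card_Iio a]
      exact card_le_card fun x hx => mem_Iio.mpr (hlt x hx)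
    rw [sum_insert ha, card_insert_of_notMem ha, sum_range_succ, add_comm]
    exact add_le_add ih (hf hcard)

lemma sum_range_add_one_rpow_sub_one_le {s : ℝ} (hs0 : 0 < s) (hs1 : s ≤ 1) (M : ℕ) :
    ∑ m ∈ range M, ((m : ℝ) + 1) ^ (s - 1) ≤ (M : ℝ) ^ s / s := by
  induction M with
  | zero => simp [Real.zero_rpow hs0.ne']
  | succ M ih =>
    have hM : (0 : ℝ) < M + 1 := by positivity
    -- Bernoulli: `(M / (M + 1)) ^ s = (1 - 1 / (M + 1)) ^ s ≤ 1 - s / (M + 1)`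
    have hbern := rpow_one_add_le_one_add_mul_self
      (by rw [neg_le_neg_iff]; exact (div_le_one hM).mpr (by linarith) : -1 ≤ -(1 / ((M : ℝ) + 1)))
      hs0.le hs1
    have hstep : s * ((M : ℝ) + 1) ^ (s - 1) ≤ ((M : ℝ) + 1) ^ s - (M : ℝ) ^ s := by
      rw [← sub_eq_add_neg, one_sub_div hM.ne', add_sub_cancel_right,
        Real.div_rpow (Nat.cast_nonneg M) hM.le, div_le_iff₀ (by positivity)] at hbern
      rw [Real.rpow_sub_one hM.ne']
      linarith [show (1 + s * -(1 / ((M : ℝ) + 1))) * ((M : ℝ) + 1) ^ s =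
        ((M : ℝ) + 1) ^ s - s * (((M : ℝ) + 1) ^ s / ((M : ℝ) + 1)) by ring]
    rw [sum_range_succ, Nat.cast_succ]
    calc _ ≤ (M : ℝ) ^ s / s + ((M : ℝ) + 1) ^ (s - 1) := by gcongr
      _ ≤ ((M : ℝ) + 1) ^ s / s := by
        rw [div_add' _ _ _ hs0.ne', div_le_div_iff_of_pos_right hs0]
        linarith

noncomputable def firstRowMatrix (p : ℝ) (n : ℕ) : Fin n × Fin n → ℝ :=
  fun z => if (z.1 : ℕ) = 0 then powerRow p n z.2 else 0

lemma firstRowMatrix_row_zero (p : ℝ) {n : ℕ} (hn : 0 < n) :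
    (fun j => firstRowMatrix p n (⟨0, hn⟩, j)) = powerRow p n := by
  funext j
  simp [firstRowMatrix]

lemma sum_sum_abs_firstRowMatrix_le {p : ℝ} {n : ℕ} (E F : Finset (Fin n)) :
    ∑ i ∈ E, ∑ j ∈ F, |firstRowMatrix p n (i, j)| ≤ ∑ j ∈ F, powerRow p n j := by
  cases n with
  | zero => simp [eq_empty_of_isEmpty E, eq_empty_of_isEmpty F]
  | succ n =>
    refine (sum_le_univ_sum_of_nonneg fun i => sum_nonneg fun j _ => abs_nonneg _).trans ?_
    rw [Fin.sum_univ_succ]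
    simp only [firstRowMatrix, Fin.val_zero, Fin.val_succ, ite_true, Nat.add_one_ne_zero,
      ite_false, abs_zero, sum_const_zero, add_zero]
    exact (sum_congr rfl fun j _ => abs_of_pos (by unfold powerRow; positivity)).le

lemma inv_max_mul_sum_sum_abs_firstRowMatrix_le {p ps : ℝ} (hp : 1 < p)
    (hps : 1 / p + 1 / ps = 1) {n : ℕ} (E F : Finset (Fin n)) (hF : F.Nonempty) :
    (max ((#E : ℝ) ^ (1 / ps)) ((#F : ℝ) ^ (1 / ps)))⁻¹ *
      ∑ i ∈ E, ∑ j ∈ F, |firstRowMatrix p n (i, j)| ≤ ps := by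
  have hp0 : 0 < 1 / p := by positivity
  have hs0 : 0 < 1 / ps := by linarith [(div_lt_one (by linarith : (0 : ℝ) < p)).mpr hp]
  have hps0 : 0 < ps := one_div_pos.mp hs0
  have hF1 : (1 : ℝ) ≤ (#F : ℝ) ^ (1 / ps) :=
    Real.one_le_rpow (by exact_mod_cast hF.card_pos) hs0.le
  rw [inv_mul_le_iff₀ (by linarith [le_max_right ((#E : ℝ) ^ (1 / ps)) ((#F : ℝ) ^ (1 / ps))])]
  calc ∑ i ∈ E, ∑ j ∈ F, |firstRowMatrix p n (i, j)|
      ≤ ∑ j ∈ F, powerRow p n j := sum_sum_abs_firstRowMatrix_le E F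
    _ ≤ ∑ m ∈ range #F, ((m : ℝ) + 1) ^ (1 / ps - 1) := by
        rw [show 1 / ps - 1 = -(1 / p) by linarith]
        exact sum_le_sum_range_card_of_antitone (antitone_nat_add_one_rpow (by linarith)) F
    _ ≤ (#F : ℝ) ^ (1 / ps) / (1 / ps) :=
        sum_range_add_one_rpow_sub_one_le hs0 (by linarith) _
    _ = ps * (#F : ℝ) ^ (1 / ps) := by field_simp
    _ ≤ ps * max ((#E : ℝ) ^ (1 / ps)) ((#F : ℝ) ^ (1 / ps)) := by gcongr; exact le_max_right _ _
    _ = _ := mul_comm _ _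

/-- Remark 2.4: for the matrix `a(1,j) = j^{-1/p}` (first row),
`a(i,j) = 0` otherwise, one has `|||a|||_{p,1} ≤ p*` while the `K₁`-functional for
the `ℓ^{p,q}`-valued couple is at least `c (log n)^{1/q}`; hence no dimension-free
upper bound of `K` by `|||·|||_{p,t}` exists for `q < ∞`. -/
theorem no_uniform_upper_bound_for_lorentz_q (p q ps : ℝ) (hp : 1 < p) (hq : 1 ≤ q)
    (hps : 1 / p + 1 / ps = 1) :
    ∃ c : ℝ, 0 < c ∧ ∀ n : ℕ, 0 < n →
      ∃ a : Fin n × Fin n → ℝ,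
        (a = fun z => if (z.1 : ℕ) = 0 then (((z.2 : ℕ) + 1 : ℝ)) ^ (-(1 / p)) else 0) ∧
        (∀ (E F : Finset (Fin n)), E.Nonempty → F.Nonempty →
          (max ((E.card : ℝ) ^ (1 / ps)) ((F.card : ℝ) ^ (1 / ps)))⁻¹ *
            ∑ i ∈ E, ∑ j ∈ F, |a (i, j)| ≤ ps) ∧
        c * (Real.log n) ^ (1 / q) ≤ K1PQ n p q a := by
  obtain ⟨C, hC, hK⟩ := exists_lorentzNorm_row_le_mul_K1PQ hp hq
  refine ⟨C⁻¹, inv_pos.mpr hC, fun n hn => ⟨firstRowMatrix p n, rfl,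
    fun E F _ hF => inv_max_mul_sum_sum_abs_firstRowMatrix_le hp hps E F hF, ?_⟩⟩
  rw [inv_mul_le_iff₀ hC]
  calc Real.log n ^ (1 / q) ≤ lorentzNorm p q (powerRow p n) :=
        log_rpow_le_lorentzNorm_powerRow (by linarith) (by linarith) n
    _ = lorentzNorm p q (fun j => firstRowMatrix p n (⟨0, hn⟩, j)) := by
        rw [firstRowMatrix_row_zero]
    _ ≤ C * K1PQ n p q (firstRowMatrix p n) := hK n _ _
end

section
/- Let M = Fin m, N = Fin n with positive weights, and t > 0. Let B₀ = B(ℓ^∞_n(ν), ℓ^∞_m(μ)) and B₁ = B(ℓ^1_n(ν), ℓ^1_m(μ)), identified with m × n matrices via kernels: u(f)(i) = ∑_j k(i,j) f(j) ν_j. Then for any matrix kernel k: (1/2) K_t(u; B₀, B₁) ≤ sup_{E,F} (μ(E) ∨ t⁻¹ν(F))⁻¹ ∑_{(i,j)∈E×F} |k(i,j)| μ_i ν_j ≤ K_t(u; B₀, B₁), where the operator norm of u : ℓ^∞_n → ℓ^∞_m equals max_i ∑_j |k(i,j)| ν_j and the norm of u : ℓ^1_n(ν) → ℓ^1_m(μ)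 equals max_j ∑_i |k(i,j)| μ_i. -/
open Finset

/-- The operator with kernel `k`: `(u f)(i) = ∑_j k(i,j) f(j) ν_j`. -/
noncomputable def kernelOp {m n : ℕ} (ν : Fin n → ℝ) (k : Fin m × Fin n → ℝ)
    (f : Fin n → ℝ) : Fin m → ℝ :=
  fun i => ∑ j : Fin n, k (i, j) * f j * ν j

/-!
The two operator norms are attained: for `ℓ^∞` at the sign vector of a row, for `ℓ^1(ν)` at the
normalized point mass on a column.

Write `‖b‖₀ = max_i ∑_j |b(i,j)| ν_j` and `‖c‖₁ = max_j ∑_i |c(i,j)| μ_i`. A decomposition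
`k = b + c` bounds the mass of `|k| μ ν` on a rectangle `E × F` by
`μ(E) ‖b‖₀ + ν(F) ‖c‖₁ ≤ max(μ(E), t⁻¹ν(F)) (‖b‖₀ + t ‖c‖₁)`, which is the upper bound. For the
lower bound let `λ` be the supremum over rectangles. The weights `w = |k| μ ν` then satisfy the
fractional Hall condition `w(E × F) ≤ λ μ(E) + λ t⁻¹ ν(F)`, so every entry of `w` splits as
`x + y` with row sums of `x` at most `λ μ_i` and column sums of `y` at most `λ t⁻¹ ν_j`.
Splitting `k` in the same proportions gives `‖b‖₀ ≤ λ` and `t ‖c‖₁ ≤ λ`, hence `K_t ≤ 2λ`.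

The splitting is built one entry `(i₀, j₀)` at a time. Row `i₀` takes as much of `w(i₀, j₀)` as
the tightest rectangle `E₁ × F₁` with `i₀ ∈ E₁`, `j₀ ∉ F₁` allows. The rest fits into column `j₀`:
for `E₂ × F₂` with `i₀ ∉ E₂`, `j₀ ∈ F₂`, the sums of `w` over `E₁ × F₁`, over `E₂ × F₂` and at
`(i₀, j₀)` add up to at most the sums over `(E₁ ∪ E₂) × (F₁ ∪ F₂)` and `(E₁ ∩ E₂) × (F₁ ∩ F₂)`,
to which the Hall condition applies.
-/

section Hall

variable {ι κ : Type*}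

def HallCondition (w : ι × κ → ℝ) (r : ι → ℝ) (s : κ → ℝ) : Prop :=
  ∀ (E : Finset ι) (F : Finset κ), ∑ p ∈ E ×ˢ F, w p ≤ ∑ i ∈ E, r i + ∑ j ∈ F, s j

variable [DecidableEq ι] [DecidableEq κ]

lemma sum_pi_single_mk_left [Fintype κ] (p : ι × κ) (a : ℝ) (i : ι) :
    ∑ j, (Pi.single p a : ι × κ → ℝ) (i, j) = (Pi.single p.1 a : ι → ℝ) i := by
  obtain ⟨i₀, j₀⟩ := p
  simp [Pi.single_apply, ite_and]

lemma sum_pi_single_mk_right [Fintype ι] (p : ι × κ) (a : ℝ) (j : κ) :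
    ∑ i, (Pi.single p a : ι × κ → ℝ) (i, j) = (Pi.single p.2 a : κ → ℝ) j := by
  obtain ⟨i₀, j₀⟩ := p
  simp [Pi.single_apply, ite_and]

variable {w : ι × κ → ℝ} {r : ι → ℝ} {s : κ → ℝ}

lemma sum_product_add_sum_product_add_apply_le (hw : 0 ≤ w) {E₁ E₂ : Finset ι}
    {F₁ F₂ : Finset κ} {p : ι × κ} (hp : p ∈ (E₁ ∪ E₂) ×ˢ (F₁ ∪ F₂))
    (hp₁ : p ∉ E₁ ×ˢ F₁) (hp₂ : p ∉ E₂ ×ˢ F₂) :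
    ∑ q ∈ E₁ ×ˢ F₁, w q + ∑ q ∈ E₂ ×ˢ F₂, w q + w p ≤
      ∑ q ∈ (E₁ ∪ E₂) ×ˢ (F₁ ∪ F₂), w q + ∑ q ∈ (E₁ ∩ E₂) ×ˢ (F₁ ∩ F₂), w q := by
  have hsub : insert p (E₁ ×ˢ F₁ ∪ E₂ ×ˢ F₂) ⊆ (E₁ ∪ E₂) ×ˢ (F₁ ∪ F₂) :=
    insert_subset hp <| union_subset
      (product_subset_product subset_union_left subset_union_left)
      (product_subset_product subset_union_right subset_union_right)
  have hle := sum_le_sum_of_subset_of_nonneg hsub fun q _ _ => hw q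
  rw [sum_insert (by simp [hp₁, hp₂])] at hle
  rw [← sum_union_inter, product_inter_product]
  linarith

lemma HallCondition.sum_product_add_sum_product_add_apply_le (h : HallCondition w r s)
    (hw : 0 ≤ w) {p : ι × κ} {E₁ E₂ : Finset ι} {F₁ F₂ : Finset κ}
    (hE₁ : p.1 ∈ E₁) (hF₁ : p.2 ∉ F₁) (hE₂ : p.1 ∉ E₂) (hF₂ : p.2 ∈ F₂) :
    ∑ q ∈ E₁ ×ˢ F₁, w q + ∑ q ∈ E₂ ×ˢ F₂, w q + w p ≤
      (∑ i ∈ E₁, r i + ∑ j ∈ F₁, s j) + (∑ i ∈ E₂, r i + ∑ j ∈ F₂, s j) := by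
  have hunion := h (E₁ ∪ E₂) (F₁ ∪ F₂)
  have hinter := h (E₁ ∩ E₂) (F₁ ∩ F₂)
  have hr : ∑ i ∈ E₁ ∪ E₂, r i + ∑ i ∈ E₁ ∩ E₂, r i = ∑ i ∈ E₁, r i + ∑ i ∈ E₂, r i :=
    sum_union_inter
  have hs : ∑ j ∈ F₁ ∪ F₂, s j + ∑ j ∈ F₁ ∩ F₂, s j = ∑ j ∈ F₁, s j + ∑ j ∈ F₂, s j :=
    sum_union_inter
  have := _root_.sum_product_add_sum_product_add_apply_le hw
    (mem_product.2 ⟨mem_union_left E₂ hE₁, mem_union_right F₁ hF₂⟩)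
    (by simp [hF₁]) (by simp [hE₂])
  linarith

lemma HallCondition.sub_single (h : HallCondition w r s) {p : ι × κ} {a b : ℝ}
    (hab : a + b = w p)
    (ha : ∀ E F, p.1 ∈ E → p.2 ∉ F → ∑ q ∈ E ×ˢ F, w q + a ≤ ∑ i ∈ E, r i + ∑ j ∈ F, s j)
    (hb : ∀ E F, p.1 ∉ E → p.2 ∈ F → ∑ q ∈ E ×ˢ F, w q + b ≤ ∑ i ∈ E, r i + ∑ j ∈ F, s j) :
    HallCondition (w - Pi.single p (w p)) (r - Pi.single p.1 a) (s - Pi.single p.2 b) := by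
  intro E F
  simp only [Pi.sub_apply, sum_sub_distrib, sum_pi_single', mem_product]
  by_cases hE : p.1 ∈ E <;> by_cases hF : p.2 ∈ F <;> simp only [hE, hF, and_true, and_false,
    if_true, if_false, sub_zero]
  · linarith [h E F]
  · linarith [ha E F hE hF]
  · linarith [hb E F hE hF]
  · exact h E F

lemma HallCondition.exists_entry_split [Fintype ι] [Fintype κ] (h : HallCondition w r s)
    (hw : 0 ≤ w) (p : ι × κ) :
    ∃ a b : ℝ, 0 ≤ a ∧ 0 ≤ b ∧ a + b = w p ∧
      HallCondition (w - Pi.single p (w p)) (r - Pi.single p.1 a) (s - Pi.single p.2 b) := by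
  obtain ⟨⟨E₁, F₁⟩, hmem, hmin⟩ :=
    (univ.filter fun EF : Finset ι × Finset κ => p.1 ∈ EF.1 ∧ p.2 ∉ EF.2).exists_min_image
      (fun EF => ∑ i ∈ EF.1, r i + ∑ j ∈ EF.2, s j - ∑ q ∈ EF.1 ×ˢ EF.2, w q)
      ⟨({p.1}, ∅), by simp⟩
  simp only [mem_filter, mem_univ, true_and, Prod.forall] at hmem hmin
  set σ := ∑ i ∈ E₁, r i + ∑ j ∈ F₁, s j - ∑ q ∈ E₁ ×ˢ F₁, w q with hσ
  refine ⟨min (w p) σ, w p - min (w p) σ, le_min (hw p) (sub_nonneg.2 (h E₁ F₁)),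
    sub_nonneg.2 (min_le_left _ _), add_sub_cancel _ _,
    h.sub_single (add_sub_cancel _ _) (fun E F hE hF => ?_) (fun E F hE hF => ?_)⟩
  · linarith [min_le_right (w p) σ, hmin E F ⟨hE, hF⟩]
  · rcases min_choice (w p) σ with hmin' | hmin' <;> rw [hmin']
    · linarith [h E F]
    · linarith [h.sum_product_add_sum_product_add_apply_le hw hmem.1 hmem.2 hE hF]

lemma HallCondition.exists_split_of_support_subset [Fintype ι] [Fintype κ]
    (P : Finset (ι × κ)) (h : HallCondition w r s) (hw : 0 ≤ w) (hP : ∀ q ∉ P, w q = 0) :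
    ∃ x y : ι × κ → ℝ, 0 ≤ x ∧ 0 ≤ y ∧ x + y = w ∧
      (∀ i, ∑ j, x (i, j) ≤ r i) ∧ (∀ j, ∑ i, y (i, j) ≤ s j) := by
  induction P using Finset.induction_on generalizing w r s with
  | empty =>
    obtain rfl : w = 0 := funext fun q => hP q (notMem_empty q)
    refine ⟨0, 0, le_rfl, le_rfl, add_zero 0, fun i => ?_, fun j => ?_⟩
    · simpa using h {i} ∅
    · simpa using h ∅ {j}
  | @insert p P _ ih =>
    obtain ⟨a, b, ha, hb, hab, h'⟩ := h.exists_entry_split hw p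
    have hw' : 0 ≤ w - Pi.single p (w p) := fun q => by
      rcases eq_or_ne q p with rfl | hq
      · simp
      · simpa [hq] using hw q
    have hP' : ∀ q ∉ P, (w - Pi.single p (w p) : ι × κ → ℝ) q = 0 := fun q hq => by
      rcases eq_or_ne q p with rfl | hq'
      · simp
      · simpa [hq'] using hP q (by simp [hq, hq'])
    obtain ⟨x, y, hx, hy, hxy, hrow, hcol⟩ := ih h' hw' hP'
    refine ⟨x + Pi.single p a, y + Pi.single p b, add_nonneg hx (Pi.single_nonneg.2 ha),
      add_nonneg hy (Pi.single_nonneg.2 hb), ?_, fun i => ?_, fun j => ?_⟩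
    · rw [add_add_add_comm, hxy, ← Pi.single_add, hab, sub_add_cancel]
    · simpa [sum_add_distrib, sum_pi_single_mk_left, le_sub_iff_add_le] using hrow i
    · simpa [sum_add_distrib, sum_pi_single_mk_right, le_sub_iff_add_le] using hcol j

lemma HallCondition.exists_split [Fintype ι] [Fintype κ] (h : HallCondition w r s)
    (hw : 0 ≤ w) :
    ∃ x y : ι × κ → ℝ, 0 ≤ x ∧ 0 ≤ y ∧ x + y = w ∧
      (∀ i, ∑ j, x (i, j) ≤ r i) ∧ (∀ j, ∑ i, y (i, j) ≤ s j) :=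
  h.exists_split_of_support_subset univ hw fun q hq => absurd (mem_univ q) hq

end Hall

section KernelNorms

variable {ι κ : Type*} {μ : ι → ℝ} {ν : κ → ℝ}

noncomputable def maxRowSum [Fintype κ] (ν : κ → ℝ) (b : ι × κ → ℝ) : ℝ :=
  ⨆ i, ∑ j, |b (i, j)| * ν j

noncomputable def maxColSum [Fintype ι] (μ : ι → ℝ) (c : ι × κ → ℝ) : ℝ :=
  ⨆ j, ∑ i, |c (i, j)| * μ i

lemma sum_le_maxRowSum [Finite ι] [Fintype κ] (b : ι × κ → ℝ) (i : ι) :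
    ∑ j, |b (i, j)| * ν j ≤ maxRowSum ν b :=
  le_ciSup (f := fun i => ∑ j, |b (i, j)| * ν j) (Set.finite_range _).bddAbove i

lemma sum_le_maxColSum [Fintype ι] [Finite κ] (c : ι × κ → ℝ) (j : κ) :
    ∑ i, |c (i, j)| * μ i ≤ maxColSum μ c :=
  le_ciSup (f := fun j => ∑ i, |c (i, j)| * μ i) (Set.finite_range _).bddAbove j

lemma maxRowSum_nonneg [Fintype κ] (hν : ∀ j, 0 ≤ ν j) (b : ι × κ → ℝ) : 0 ≤ maxRowSum ν b :=
  Real.iSup_nonneg fun _ => sum_nonneg fun j _ => mul_nonneg (abs_nonneg _) (hν j)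

lemma maxColSum_nonneg [Fintype ι] (hμ : ∀ i, 0 ≤ μ i) (c : ι × κ → ℝ) : 0 ≤ maxColSum μ c :=
  Real.iSup_nonneg fun _ => sum_nonneg fun i _ => mul_nonneg (abs_nonneg _) (hμ i)

lemma sum_rect_le_mul_maxRowSum [Finite ι] [Fintype κ] (hμ : ∀ i, 0 ≤ μ i)
    (hν : ∀ j, 0 ≤ ν j) (b : ι × κ → ℝ) (E : Finset ι) (F : Finset κ) :
    ∑ i ∈ E, ∑ j ∈ F, |b (i, j)| * μ i * ν j ≤ (∑ i ∈ E, μ i) * maxRowSum ν b := by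
  rw [sum_mul]
  refine sum_le_sum fun i _ => ?_
  calc ∑ j ∈ F, |b (i, j)| * μ i * ν j = μ i * ∑ j ∈ F, |b (i, j)| * ν j := by
        rw [mul_sum]; exact sum_congr rfl fun j _ => by ring
    _ ≤ μ i * maxRowSum ν b := by
        gcongr
        · exact hμ i
        · exact (sum_le_sum_of_subset_of_nonneg (subset_univ F)
            fun j _ _ => mul_nonneg (abs_nonneg _) (hν j)).trans (sum_le_maxRowSum b i)

lemma sum_rect_le_mul_maxColSum [Fintype ι] [Finite κ] (hμ : ∀ i, 0 ≤ μ i)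
    (hν : ∀ j, 0 ≤ ν j) (c : ι × κ → ℝ) (E : Finset ι) (F : Finset κ) :
    ∑ i ∈ E, ∑ j ∈ F, |c (i, j)| * μ i * ν j ≤ (∑ j ∈ F, ν j) * maxColSum μ c := by
  rw [sum_comm, sum_mul]
  refine sum_le_sum fun j _ => ?_
  calc ∑ i ∈ E, |c (i, j)| * μ i * ν j = ν j * ∑ i ∈ E, |c (i, j)| * μ i := by
        rw [mul_sum]; exact sum_congr rfl fun i _ => by ring
    _ ≤ ν j * maxColSum μ c := by
        gcongr
        · exact hν j
        · exact (sum_le_sum_of_subset_of_nonneg (subset_univ E)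
            fun i _ _ => mul_nonneg (abs_nonneg _) (hμ i)).trans (sum_le_maxColSum c j)

lemma maxRowSum_add_mul_maxColSum_nonneg [Fintype ι] [Fintype κ] (hμ : ∀ i, 0 ≤ μ i)
    (hν : ∀ j, 0 ≤ ν j) {t : ℝ} (ht : 0 ≤ t) (b c : ι × κ → ℝ) :
    0 ≤ maxRowSum ν b + t * maxColSum μ c :=
  add_nonneg (maxRowSum_nonneg hν b) (mul_nonneg ht (maxColSum_nonneg hμ c))

lemma abs_sign_mul_le (a : ℝ) {z : ℝ} (hz : 0 ≤ z) : |(SignType.sign a : ℝ) * z| ≤ z := by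
  rcases lt_trichotomy a 0 with h | h | h <;> simp [h, hz, abs_of_nonneg]

lemma HallCondition.exists_add_eq_maxRowSum_le [Fintype ι] [Fintype κ] (hμ : ∀ i, 0 < μ i)
    (hν : ∀ j, 0 < ν j) {k : ι × κ → ℝ} {α β : ℝ} (hα : 0 ≤ α) (hβ : 0 ≤ β)
    (h : HallCondition (fun p => |k p| * μ p.1 * ν p.2) (fun i => α * μ i) (fun j => β * ν j)) :
    ∃ b c : ι × κ → ℝ, k = b + c ∧ maxRowSum ν b ≤ α ∧ maxColSum μ c ≤ β := by
  classical
  obtain ⟨x, y, hx, hy, hxy, hrow, hcol⟩ :=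
    h.exists_split fun p => mul_nonneg (mul_nonneg (abs_nonneg _) (hμ _).le) (hν _).le
  refine ⟨fun p => SignType.sign (k p) * (x p / (μ p.1 * ν p.2)),
    fun p => SignType.sign (k p) * (y p / (μ p.1 * ν p.2)), funext fun p => ?_,
    Real.iSup_le (fun i => ?_) hα, Real.iSup_le (fun j => ?_) hβ⟩
  · have hp := congrFun hxy p
    have hμν : μ p.1 * ν p.2 ≠ 0 := (mul_pos (hμ _) (hν _)).ne'
    simp only [Pi.add_apply] at hp ⊢
    rw [← mul_add, ← add_div, hp, mul_assoc, mul_div_cancel_right₀ _ hμν, sign_mul_abs]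
  · calc ∑ j, |SignType.sign (k (i, j)) * (x (i, j) / (μ i * ν j))| * ν j
        ≤ ∑ j, x (i, j) / (μ i * ν j) * ν j := sum_le_sum fun j _ =>
          mul_le_mul_of_nonneg_right (abs_sign_mul_le _ (div_nonneg (hx _)
            (mul_pos (hμ i) (hν j)).le)) (hν j).le
      _ = (∑ j, x (i, j)) / μ i := by
          rw [sum_div]; exact sum_congr rfl fun j _ => by field_simp [(hν j).ne']
      _ ≤ α := (div_le_iff₀ (hμ i)).2 (hrow i)
  · calc ∑ i, |SignType.sign (k (i, j)) * (y (i, j) / (μ i * ν j))| * μ i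
        ≤ ∑ i, y (i, j) / (μ i * ν j) * μ i := sum_le_sum fun i _ =>
          mul_le_mul_of_nonneg_right (abs_sign_mul_le _ (div_nonneg (hy _)
            (mul_pos (hμ i) (hν j)).le)) (hμ i).le
      _ = (∑ i, y (i, j)) / ν j := by
          rw [sum_div]; exact sum_congr rfl fun i _ => by field_simp [(hμ i).ne']
      _ ≤ β := (div_le_iff₀ (hν j)).2 (hcol j)

end KernelNorms

section KFunctional

variable {ι κ : Type*} {μ : ι → ℝ} {ν : κ → ℝ} {t : ℝ}

noncomputable def kFunctional [Fintype ι] [Fintype κ] (μ : ι → ℝ) (ν : κ → ℝ) (t : ℝ)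
    (k : ι × κ → ℝ) : ℝ :=
  sInf {x | ∃ b c : ι × κ → ℝ, k = b + c ∧ x = maxRowSum ν b + t * maxColSum μ c}

noncomputable def rectAverage (μ : ι → ℝ) (ν : κ → ℝ) (t : ℝ) (k : ι × κ → ℝ) (E : Finset ι)
    (F : Finset κ) : ℝ :=
  (max (∑ i ∈ E, μ i) (t⁻¹ * ∑ j ∈ F, ν j))⁻¹ * ∑ i ∈ E, ∑ j ∈ F, |k (i, j)| * μ i * ν j

noncomputable def rectSup (μ : ι → ℝ) (ν : κ → ℝ) (t : ℝ) (k : ι × κ → ℝ) : ℝ :=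
  sSup {x | ∃ (E : Finset ι) (F : Finset κ), E.Nonempty ∧ F.Nonempty ∧
    x = rectAverage μ ν t k E F}

lemma rectAverage_nonneg (hμ : ∀ i, 0 ≤ μ i) (hν : ∀ j, 0 ≤ ν j) (k : ι × κ → ℝ)
    (E : Finset ι) (F : Finset κ) : 0 ≤ rectAverage μ ν t k E F :=
  mul_nonneg (inv_nonneg.2 (le_max_of_le_left (sum_nonneg fun i _ => hμ i)))
    (sum_nonneg fun i _ => sum_nonneg fun j _ =>
      mul_nonneg (mul_nonneg (abs_nonneg _) (hμ i)) (hν j))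

lemma rectAverage_le [Fintype ι] [Fintype κ] (hμ : ∀ i, 0 ≤ μ i) (hν : ∀ j, 0 ≤ ν j)
    (ht : 0 < t) {k b c : ι × κ → ℝ} (hk : k = b + c) (E : Finset ι) (F : Finset κ) :
    rectAverage μ ν t k E F ≤ maxRowSum ν b + t * maxColSum μ c := by
  set P := max (∑ i ∈ E, μ i) (t⁻¹ * ∑ j ∈ F, ν j)
  have hmass : ∑ i ∈ E, ∑ j ∈ F, |k (i, j)| * μ i * ν j ≤
      P * (maxRowSum ν b + t * maxColSum μ c) := calc
    _ ≤ ∑ i ∈ E, ∑ j ∈ F, (|b (i, j)| * μ i * ν j + |c (i, j)| * μ i * ν j) := by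
        gcongr with i _ j _
        rw [← add_mul, ← add_mul, hk]
        exact mul_le_mul_of_nonneg_right
          (mul_le_mul_of_nonneg_right (abs_add_le _ _) (hμ i)) (hν j)
    _ ≤ (∑ i ∈ E, μ i) * maxRowSum ν b + (t⁻¹ * ∑ j ∈ F, ν j) * (t * maxColSum μ c) := by
        simp only [sum_add_distrib]
        rw [mul_mul_mul_comm, inv_mul_cancel₀ ht.ne', one_mul]
        exact add_le_add (sum_rect_le_mul_maxRowSum hμ hν b E F)
          (sum_rect_le_mul_maxColSum hμ hν c E F)
    _ ≤ P * maxRowSum ν b + P * (t * maxColSum μ c) :=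
        add_le_add (mul_le_mul_of_nonneg_right (le_max_left _ _) (maxRowSum_nonneg hν b))
          (mul_le_mul_of_nonneg_right (le_max_right _ _)
            (mul_nonneg ht.le (maxColSum_nonneg hμ c)))
    _ = _ := by ring
  rcases (le_max_of_le_left (sum_nonneg fun i _ => hμ i) : 0 ≤ P).eq_or_lt with hP | hP
  · rw [rectAverage, ← hP, inv_zero, zero_mul]
    exact maxRowSum_add_mul_maxColSum_nonneg hμ hν ht.le b c
  · rwa [rectAverage, inv_mul_le_iff₀ hP]

lemma rectAverage_le_rectSup [Fintype ι] [Fintype κ] (hμ : ∀ i, 0 ≤ μ i)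
    (hν : ∀ j, 0 ≤ ν j) (ht : 0 < t) (k : ι × κ → ℝ) {E : Finset ι} {F : Finset κ}
    (hE : E.Nonempty) (hF : F.Nonempty) :
    rectAverage μ ν t k E F ≤ rectSup μ ν t k :=
  le_csSup ⟨maxRowSum ν k + t * maxColSum μ 0, fun _ ⟨E, F, _, _, hx⟩ =>
    hx ▸ rectAverage_le hμ hν ht (add_zero k).symm E F⟩ ⟨E, F, hE, hF, rfl⟩

lemma rectSup_le_kFunctional [Fintype ι] [Fintype κ] (hμ : ∀ i, 0 ≤ μ i)
    (hν : ∀ j, 0 ≤ ν j) (ht : 0 < t) (k : ι × κ → ℝ) : rectSup μ ν t k ≤ kFunctional μ ν t k :=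
  le_csInf ⟨_, k, 0, (add_zero k).symm, rfl⟩ fun _ ⟨b, c, hk, hx⟩ => hx ▸ Real.sSup_le
    (fun _ ⟨E, F, _, _, hy⟩ => hy ▸ rectAverage_le hμ hν ht hk E F)
    (maxRowSum_add_mul_maxColSum_nonneg hμ hν ht.le b c)

lemma hallCondition_of_rectAverage_le (hμ : ∀ i, 0 < μ i) (hν : ∀ j, 0 ≤ ν j) (ht : 0 ≤ t)
    {M : ℝ} (hM : 0 ≤ M) {k : ι × κ → ℝ}
    (h : ∀ E F, E.Nonempty → F.Nonempty → rectAverage μ ν t k E F ≤ M) :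
    HallCondition (fun p => |k p| * μ p.1 * ν p.2) (fun i => M * μ i)
      (fun j => t⁻¹ * M * ν j) := by
  intro E F
  rw [sum_product, ← mul_sum, ← mul_sum]
  have hμE : 0 ≤ ∑ i ∈ E, μ i := sum_nonneg fun i _ => (hμ i).le
  have hνF : 0 ≤ t⁻¹ * ∑ j ∈ F, ν j := mul_nonneg (inv_nonneg.2 ht) (sum_nonneg fun j _ => hν j)
  rcases E.eq_empty_or_nonempty with rfl | hE
  · simp only [sum_empty, mul_zero, zero_add]
    exact mul_nonneg (mul_nonneg (inv_nonneg.2 ht) hM) (sum_nonneg fun j _ => hν j)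
  rcases F.eq_empty_or_nonempty with rfl | hF
  · simp only [sum_empty, sum_const_zero, mul_zero, add_zero]
    exact mul_nonneg hM hμE
  have hP : 0 < max (∑ i ∈ E, μ i) (t⁻¹ * ∑ j ∈ F, ν j) :=
    lt_max_of_lt_left (sum_pos (fun i _ => hμ i) hE)
  calc ∑ i ∈ E, ∑ j ∈ F, |k (i, j)| * μ i * ν j
      ≤ max (∑ i ∈ E, μ i) (t⁻¹ * ∑ j ∈ F, ν j) * M := (inv_mul_le_iff₀ hP).1 (h E F hE hF)
    _ ≤ (∑ i ∈ E, μ i + t⁻¹ * ∑ j ∈ F, ν j) * M := by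
        gcongr; exact max_le_add_of_nonneg hμE hνF
    _ = _ := by ring

lemma kFunctional_le_two_mul_rectSup [Fintype ι] [Fintype κ] (hμ : ∀ i, 0 < μ i)
    (hν : ∀ j, 0 < ν j) (ht : 0 < t) (k : ι × κ → ℝ) :
    kFunctional μ ν t k ≤ 2 * rectSup μ ν t k := by
  have hμ' : ∀ i, 0 ≤ μ i := fun i => (hμ i).le
  have hν' : ∀ j, 0 ≤ ν j := fun j => (hν j).le
  set M := rectSup μ ν t k
  have hM : 0 ≤ M :=
    Real.sSup_nonneg fun _ ⟨E, F, _, _, hx⟩ => hx ▸ rectAverage_nonneg hμ' hν' k E F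
  have hall := hallCondition_of_rectAverage_le hμ hν' ht.le hM
    fun E F hE hF => rectAverage_le_rectSup hμ' hν' ht k hE hF
  obtain ⟨b, c, hk, hb, hc⟩ :=
    hall.exists_add_eq_maxRowSum_le hμ hν hM (mul_nonneg (inv_nonneg.2 ht.le) hM)
  calc kFunctional μ ν t k ≤ maxRowSum ν b + t * maxColSum μ c :=
        csInf_le ⟨0, fun _ ⟨b, c, _, hx⟩ =>
          hx ▸ maxRowSum_add_mul_maxColSum_nonneg hμ' hν' ht.le b c⟩ ⟨b, c, hk, rfl⟩
    _ ≤ M + t * (t⁻¹ * M) := by gcongr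
    _ = 2 * M := by field_simp; ring

end KFunctional

lemma sSup_setOf_eq_iSup {α ι : Type*} {P : α → Prop} {g : α → ℝ} {a : ι → ℝ}
    (hg : ∀ f, 0 ≤ g f) (hle : ∀ f, P f → g f ≤ ⨆ i, a i) (hge : ∀ i, ∃ f, P f ∧ a i ≤ g f)
    (ha : 0 ≤ ⨆ i, a i) :
    sSup {x | ∃ f, P f ∧ x = g f} = ⨆ i, a i := by
  have hbdd : BddAbove {x | ∃ f, P f ∧ x = g f} := ⟨_, by rintro _ ⟨f, hf, rfl⟩; exact hle f hf⟩
  refine le_antisymm (Real.sSup_le (by rintro _ ⟨f, hf, rfl⟩; exact hle f hf) ha)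
    (Real.iSup_le (fun i => ?_) (Real.sSup_nonneg (by rintro _ ⟨f, -, rfl⟩; exact hg f)))
  obtain ⟨f, hf, hi⟩ := hge i
  exact hi.trans (le_csSup hbdd ⟨f, hf, rfl⟩)

section OperatorNorms

variable {m n : ℕ} {μ : Fin m → ℝ} {ν : Fin n → ℝ}

lemma abs_kernelOp_le (hν : ∀ j, 0 ≤ ν j) (k : Fin m × Fin n → ℝ) (f : Fin n → ℝ) (i : Fin m) :
    |kernelOp ν k f i| ≤ ∑ j, |k (i, j)| * |f j| * ν j :=
  (abs_sum_le_sum_abs _ _).trans_eq <| sum_congr rfl fun j _ => by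
    rw [abs_mul, abs_mul, abs_of_nonneg (hν j)]

lemma kernelOp_sign_row (k : Fin m × Fin n → ℝ) (i : Fin m) :
    kernelOp ν k (fun j => SignType.sign (k (i, j))) i = ∑ j, |k (i, j)| * ν j := by
  simp only [kernelOp, self_mul_sign]

lemma kernelOp_single (hν : ∀ j, 0 < ν j) (k : Fin m × Fin n → ℝ) (j : Fin n) :
    kernelOp ν k (Pi.single j (ν j)⁻¹ : Fin n → ℝ) = fun i => k (i, j) := by
  funext i
  simp [kernelOp, Pi.single_apply, (hν j).ne']

lemma sSup_abs_kernelOp_eq_maxRowSum (hν : ∀ j, 0 ≤ ν j) (k : Fin m × Fin n → ℝ) :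
    sSup {x | ∃ f : Fin n → ℝ, (∀ j, |f j| ≤ 1) ∧ x = ⨆ i, |kernelOp ν k f i|} =
      maxRowSum ν k := by
  refine sSup_setOf_eq_iSup (fun f => Real.iSup_nonneg fun i => abs_nonneg _)
    (fun f hf => Real.iSup_le (fun i => ?_) (maxRowSum_nonneg hν k))
    (fun i => ⟨fun j => SignType.sign (k (i, j)), fun j => ?_, ?_⟩) (maxRowSum_nonneg hν k)
  · calc |kernelOp ν k f i| ≤ ∑ j, |k (i, j)| * |f j| * ν j := abs_kernelOp_le hν k f i
      _ ≤ ∑ j, |k (i, j)| * ν j := sum_le_sum fun j _ => mul_le_mul_of_nonneg_right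
          (mul_le_of_le_one_right (abs_nonneg _) (hf j)) (hν j)
      _ ≤ maxRowSum ν k := sum_le_maxRowSum k i
  · simpa using abs_sign_mul_le (k (i, j)) zero_le_one
  · rw [← kernelOp_sign_row k i]
    exact (le_abs_self _).trans (le_ciSup (f := fun i' => |kernelOp ν k _ i'|)
      (Set.finite_range _).bddAbove i)

lemma sum_abs_kernelOp_mul_le (hμ : ∀ i, 0 ≤ μ i) (hν : ∀ j, 0 ≤ ν j)
    (k : Fin m × Fin n → ℝ) (f : Fin n → ℝ) :
    ∑ i, |kernelOp ν k f i| * μ i ≤ (∑ j, |f j| * ν j) * maxColSum μ k := calc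
  _ ≤ ∑ i, (∑ j, |k (i, j)| * |f j| * ν j) * μ i :=
      sum_le_sum fun i _ => mul_le_mul_of_nonneg_right (abs_kernelOp_le hν k f i) (hμ i)
  _ = ∑ j, |f j| * ν j * ∑ i, |k (i, j)| * μ i := by
      simp only [sum_mul, mul_sum]
      rw [sum_comm]
      exact sum_congr rfl fun j _ => sum_congr rfl fun i _ => by ring
  _ ≤ ∑ j, |f j| * ν j * maxColSum μ k :=
      sum_le_sum fun j _ => mul_le_mul_of_nonneg_left (sum_le_maxColSum k j)
        (mul_nonneg (abs_nonneg _) (hν j))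
  _ = _ := (sum_mul _ _ _).symm

lemma sSup_sum_abs_kernelOp_eq_maxColSum (hμ : ∀ i, 0 ≤ μ i) (hν : ∀ j, 0 < ν j)
    (k : Fin m × Fin n → ℝ) :
    sSup {x | ∃ f : Fin n → ℝ, (∑ j, |f j| * ν j) ≤ 1 ∧ x = ∑ i, |kernelOp ν k f i| * μ i} =
      maxColSum μ k := by
  refine sSup_setOf_eq_iSup
    (fun f => sum_nonneg fun i _ => mul_nonneg (abs_nonneg _) (hμ i))
    (fun f hf => (sum_abs_kernelOp_mul_le hμ (fun j => (hν j).le) k f).trans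
      (mul_le_of_le_one_left (maxColSum_nonneg hμ k) hf))
    (fun j => ⟨Pi.single j (ν j)⁻¹, ?_, ?_⟩) (maxColSum_nonneg hμ k)
  · rw [Fintype.sum_eq_single j fun j' hj' => by simp [hj']]
    simp [abs_of_pos (hν j), (hν j).ne']
  · rw [kernelOp_single hν]

end OperatorNorms

theorem kernel_operator_Kt_general (m n : ℕ)
    (μ : Fin m → ℝ) (ν : Fin n → ℝ) (hμ : ∀ i, 0 < μ i) (hν : ∀ j, 0 < ν j)
    (t : ℝ) (ht : 0 < t) (k : Fin m × Fin n → ℝ) :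
    sSup {x : ℝ | ∃ f : Fin n → ℝ, (∀ j, |f j| ≤ 1) ∧
        x = ⨆ i : Fin m, |kernelOp ν k f i|} =
      (⨆ i : Fin m, ∑ j : Fin n, |k (i, j)| * ν j) ∧
    sSup {x : ℝ | ∃ f : Fin n → ℝ, (∑ j : Fin n, |f j| * ν j) ≤ 1 ∧
        x = ∑ i : Fin m, |kernelOp ν k f i| * μ i} =
      (⨆ j : Fin n, ∑ i : Fin m, |k (i, j)| * μ i) ∧
    (2⁻¹ * sInf {x : ℝ | ∃ b c : Fin m × Fin n → ℝ, k = b + c ∧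
        x = (⨆ i : Fin m, ∑ j : Fin n, |b (i, j)| * ν j) +
          t * ⨆ j : Fin n, ∑ i : Fin m, |c (i, j)| * μ i} ≤
      sSup {x : ℝ | ∃ (E : Finset (Fin m)) (F : Finset (Fin n)),
        E.Nonempty ∧ F.Nonempty ∧
        x = (max (∑ i ∈ E, μ i) (t⁻¹ * ∑ j ∈ F, ν j))⁻¹ *
          ∑ i ∈ E, ∑ j ∈ F, |k (i, j)| * μ i * ν j} ∧
      sSup {x : ℝ | ∃ (E : Finset (Fin m)) (F : Finset (Fin n)),
        E.Nonempty ∧ F.Nonempty ∧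
        x = (max (∑ i ∈ E, μ i) (t⁻¹ * ∑ j ∈ F, ν j))⁻¹ *
          ∑ i ∈ E, ∑ j ∈ F, |k (i, j)| * μ i * ν j} ≤
      sInf {x : ℝ | ∃ b c : Fin m × Fin n → ℝ, k = b + c ∧
        x = (⨆ i : Fin m, ∑ j : Fin n, |b (i, j)| * ν j) +
          t * ⨆ j : Fin n, ∑ i : Fin m, |c (i, j)| * μ i}) := by
  have hμ' : ∀ i, 0 ≤ μ i := fun i => (hμ i).le
  have hν' : ∀ j, 0 ≤ ν j := fun j => (hν j).le
  exact ⟨sSup_abs_kernelOp_eq_maxRowSum hν' k, sSup_sum_abs_kernelOp_eq_maxColSum hμ' hν k,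
    (inv_mul_le_iff₀ two_pos).2 (kFunctional_le_two_mul_rectSup hμ hν ht k),
    rectSup_le_kFunctional hμ' hν' ht k⟩

/-- Theorem 4.1, finite case: the `ℓ^∞ → ℓ^∞` operator norm of the
kernel operator equals `max_i ∑_j |k(i,j)| ν_j`, the `ℓ^1(ν) → ℓ^1(μ)` operator norm
equals `max_j ∑_i |k(i,j)| μ_i`, and the `K_t`-functional of the couple
`(B(ℓ^∞,ℓ^∞), B(ℓ^1,ℓ^1))`, computed through kernels with these norms, satisfies
`(1/2) K_t(u) ≤ sup_{E,F} (μ(E) ∨ t⁻¹ν(F))⁻¹ ∑_{E×F} |k| μ ν ≤ K_t(u)`. -/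
theorem kernel_operator_Kt (m n : ℕ) (hm : 0 < m) (hn : 0 < n)
    (μ : Fin m → ℝ) (ν : Fin n → ℝ) (hμ : ∀ i, 0 < μ i) (hν : ∀ j, 0 < ν j)
    (t : ℝ) (ht : 0 < t) (k : Fin m × Fin n → ℝ) :
    sSup {x : ℝ | ∃ f : Fin n → ℝ, (∀ j, |f j| ≤ 1) ∧
        x = ⨆ i : Fin m, |kernelOp ν k f i|} =
      (⨆ i : Fin m, ∑ j : Fin n, |k (i, j)| * ν j) ∧
    sSup {x : ℝ | ∃ f : Fin n → ℝ, (∑ j : Fin n, |f j| * ν j) ≤ 1 ∧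
        x = ∑ i : Fin m, |kernelOp ν k f i| * μ i} =
      (⨆ j : Fin n, ∑ i : Fin m, |k (i, j)| * μ i) ∧
    (2⁻¹ * sInf {x : ℝ | ∃ b c : Fin m × Fin n → ℝ, k = b + c ∧
        x = (⨆ i : Fin m, ∑ j : Fin n, |b (i, j)| * ν j) +
          t * ⨆ j : Fin n, ∑ i : Fin m, |c (i, j)| * μ i} ≤
      sSup {x : ℝ | ∃ (E : Finset (Fin m)) (F : Finset (Fin n)),
        E.Nonempty ∧ F.Nonempty ∧
        x = (max (∑ i ∈ E, μ i) (t⁻¹ * ∑ j ∈ F, ν j))⁻¹ *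
          ∑ i ∈ E, ∑ j ∈ F, |k (i, j)| * μ i * ν j} ∧
      sSup {x : ℝ | ∃ (E : Finset (Fin m)) (F : Finset (Fin n)),
        E.Nonempty ∧ F.Nonempty ∧
        x = (max (∑ i ∈ E, μ i) (t⁻¹ * ∑ j ∈ F, ν j))⁻¹ *
          ∑ i ∈ E, ∑ j ∈ F, |k (i, j)| * μ i * ν j} ≤
      sInf {x : ℝ | ∃ b c : Fin m × Fin n → ℝ, k = b + c ∧
        x = (⨆ i : Fin m, ∑ j : Fin n, |b (i, j)| * ν j) +
          t * ⨆ j : Fin n, ∑ i : Fin m, |c (i, j)| * μ i}) :=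
  kernel_operator_Kt_general m n μ ν hμ hν t ht k
end

section
/- (Special case m = 1 of the splitting lemma.) Let N = Fin n with positive weights ν_j > 0, let μ₁ > 0, t > 0, and a : Fin n → ℝ with |a(1)| ≥ |a(2)| ≥ … ≥ |a(n)|. Assume that for all nonempty F ⊆ N: (μ₁ ∨ t⁻¹ν(F))⁻¹ μ₁ ∑_{j∈F} |a(j)| ν_j ≤ 1. Let k be the largest index in {0,…,n} with t⁻¹ν({1,…,k}) ≤ μ₁ (k = n if t⁻¹ν(N) ≤ μ₁). Then ∑_{j≤k} |a(j)| ν_j ≤ 1 and |a(j)| μ₁ ≤ 1/t for all j > k. -/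
/-!
On `F = {1,…,k}` the maximum in the hypothesis is `μ₁`, which cancels and leaves `∑_{j≤k} |a(j)| ν_j ≤ 1`.
For `j > k` take `F = {1,…,k+1}`: there the maximum is `t⁻¹ν(F)`, and monotonicity of `|a|` bounds
`∑_{i∈F} |a(i)| ν_i` below by `|a(j)| ν(F)`, so `ν(F)` cancels and leaves `|a(j)| μ₁ ≤ t⁻¹`.
-/

open Finset

lemma le_one_of_max_inv_mul_le_one {μ s x : ℝ} (hμ : 0 < μ) (hs : s ≤ μ)
    (h : (max μ s)⁻¹ * (μ * x) ≤ 1) : x ≤ 1 := by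
  rwa [max_eq_left hs, inv_mul_cancel_left₀ hμ.ne'] at h

lemma mul_le_inv_of_max_inv_mul_le_one {μ t S c x : ℝ} (hμ : 0 < μ) (ht : 0 < t)
    (hS : μ < t⁻¹ * S) (hx : c * S ≤ x) (h : (max μ (t⁻¹ * S))⁻¹ * (μ * x) ≤ 1) :
    c * μ ≤ 1 / t := by
  have hS₀ : 0 < S := pos_of_mul_pos_right (hμ.trans hS) (inv_pos.mpr ht).le
  rw [max_eq_right hS.le, inv_mul_le_iff₀ (hμ.trans hS), mul_one] at h
  have : c * μ * S ≤ 1 / t * S := by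
    calc c * μ * S = μ * (c * S) := by ring
      _ ≤ μ * x := mul_le_mul_of_nonneg_left hx hμ.le
      _ ≤ t⁻¹ * S := h
      _ = 1 / t * S := by rw [one_div]
  exact le_of_mul_le_mul_right this hS₀

lemma Finset.mul_sum_le_sum_mul {ι : Type*} {s : Finset ι} {f w : ι → ℝ} {c : ℝ}
    (hw : ∀ i ∈ s, 0 ≤ w i) (hf : ∀ i ∈ s, c ≤ f i) :
    c * ∑ i ∈ s, w i ≤ ∑ i ∈ s, f i * w i := by
  rw [mul_sum]
  exact sum_le_sum fun i hi => mul_le_mul_of_nonneg_right (hf i hi) (hw i hi)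

theorem splitting_base_case_general (n : ℕ) (ν : Fin n → ℝ) (hν : ∀ j, 0 < ν j)
    (μ₁ : ℝ) (hμ₁ : 0 < μ₁) (t : ℝ) (ht : 0 < t) (a : Fin n → ℝ)
    (hmono : ∀ i j : Fin n, i ≤ j → |a j| ≤ |a i|)
    (ha : ∀ F : Finset (Fin n), F.Nonempty →
      (max μ₁ (t⁻¹ * ∑ j ∈ F, ν j))⁻¹ * (μ₁ * ∑ j ∈ F, |a j| * ν j) ≤ 1)
    (k : ℕ)
    (hk1 : t⁻¹ * ∑ j ∈ Finset.univ.filter (fun j : Fin n => (j : ℕ) < k), ν j ≤ μ₁)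
    (hk2 : k < n → μ₁ <
      t⁻¹ * ∑ j ∈ Finset.univ.filter (fun j : Fin n => (j : ℕ) < k + 1), ν j) :
    (∑ j ∈ Finset.univ.filter (fun j : Fin n => (j : ℕ) < k), |a j| * ν j ≤ 1) ∧
    (∀ j : Fin n, k ≤ (j : ℕ) → |a j| * μ₁ ≤ 1 / t) := by
  refine ⟨?_, fun j hj => ?_⟩
  · rcases (univ.filter fun j : Fin n => (j : ℕ) < k).eq_empty_or_nonempty with hF | hF
    · simp [hF]
    · exact le_one_of_max_inv_mul_le_one hμ₁ hk1 (ha _ hF)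
  · have hkn : k < n := hj.trans_lt j.isLt
    have hF : (univ.filter fun i : Fin n => (i : ℕ) < k + 1).Nonempty := ⟨⟨k, hkn⟩, by simp⟩
    refine mul_le_inv_of_max_inv_mul_le_one hμ₁ ht (hk2 hkn) ?_ (ha _ hF)
    refine mul_sum_le_sum_mul (fun i _ => (hν i).le) fun i hi => hmono i j ?_
    rw [mem_filter] at hi
    exact Fin.le_iff_val_le_val.mpr (by omega)

/-- base case `m = 1` of the splitting lemma: if `|a|` is
nonincreasing, `(μ₁ ∨ t⁻¹ν(F))⁻¹ μ₁ ∑_{j∈F} |a(j)| ν_j ≤ 1` for all nonempty `F`,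
and `k` is the largest index with `t⁻¹ν({1,…,k}) ≤ μ₁`, then
`∑_{j≤k} |a(j)| ν_j ≤ 1` and `|a(j)| μ₁ ≤ 1/t` for `j > k`. -/
theorem splitting_base_case (n : ℕ) (ν : Fin n → ℝ) (hν : ∀ j, 0 < ν j)
    (μ₁ : ℝ) (hμ₁ : 0 < μ₁) (t : ℝ) (ht : 0 < t) (a : Fin n → ℝ)
    (hmono : ∀ i j : Fin n, i ≤ j → |a j| ≤ |a i|)
    (ha : ∀ F : Finset (Fin n), F.Nonempty →
      (max μ₁ (t⁻¹ * ∑ j ∈ F, ν j))⁻¹ * (μ₁ * ∑ j ∈ F, |a j| * ν j) ≤ 1)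
    (k : ℕ) (hk : k ≤ n)
    (hk1 : t⁻¹ * ∑ j ∈ Finset.univ.filter (fun j : Fin n => (j : ℕ) < k), ν j ≤ μ₁)
    (hk2 : k < n → μ₁ <
      t⁻¹ * ∑ j ∈ Finset.univ.filter (fun j : Fin n => (j : ℕ) < k + 1), ν j) :
    (∑ j ∈ Finset.univ.filter (fun j : Fin n => (j : ℕ) < k), |a j| * ν j ≤ 1) ∧
    (∀ j : Fin n, k ≤ (j : ℕ) → |a j| * μ₁ ≤ 1 / t) :=
  splitting_base_case_general n ν hν μ₁ hμ₁ t ht a hmono ha k hk1 hk2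
end
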